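/- arXiv:2306.12716 — 10 statements merged into one kernel-verified Lean document; each statement's English description precedes it below -/
import Mathlib

section
/- Let Z : J → ℝ be continuous on an interval J ⊆ ℝ and admit an occupation density L. Then for all s ≤ t in J and every Borel measurable g : J × ℝ → [0,∞], one has ∫_s^t g(u, Z_u) du = ∫_ℝ ( ∫_{(s,t]} g(u,x) dL(·,x)(u) ) dx, where dL(·,x) denotes the Lebesgue–Stieltjes measure on J associated with the continuous nondecreasing function u ↦ L(u,x). -/
open MeasureTheory Set
open scoped ENNReal

noncomputable section

/-- A continuous function `Z : J → ℝ` admits occupation density `L`: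
`L` is jointly continuous on `J × ℝ`, nondecreasing and nonnegative in its first
variable, and the occupation times formula holds. -/
def HasOccDensity (J : Set ℝ) (Z : ℝ → ℝ) (L : ℝ → ℝ → ℝ) : Prop :=
  ContinuousOn Z J ∧
  ContinuousOn (fun p : ℝ × ℝ => L p.1 p.2) (J ×ˢ (univ : Set ℝ)) ∧
  (∀ x : ℝ, MonotoneOn (fun t => L t x) J) ∧
  (∀ t ∈ J, ∀ x : ℝ, 0 ≤ L t x) ∧
  (∀ t ∈ J, ∀ h : ℝ → ℝ≥0∞, Measurable h →
    ∫⁻ s in J ∩ Iic t, h (Z s) = ∫⁻ x, h x * ENNReal.ofReal (L t x))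

section Aux
open MeasurableSpace

/-- truncations -/
def trunc (h : ℝ → ℝ≥0∞) (n : ℕ) : ℝ → ℝ≥0∞ :=
  (Icc (-(n:ℝ)) n).indicator (fun y => min (h y) n)

lemma trunc_measurable (h : ℝ → ℝ≥0∞) (hh : Measurable h) (n : ℕ) :
    Measurable (trunc h n) :=
  (hh.min measurable_const).indicator measurableSet_Icc

lemma trunc_mono (h : ℝ → ℝ≥0∞) : Monotone (trunc h) := by
  intro m n hmn x
  unfold trunc
  by_cases hx : x ∈ Icc (-(m:ℝ)) m
  · have hx' : x ∈ Icc (-(n:ℝ)) n := by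
      have : (m:ℝ) ≤ n := Nat.cast_le.2 hmn
      exact ⟨le_trans (by linarith) hx.1, le_trans hx.2 this⟩
    rw [indicator_of_mem hx, indicator_of_mem hx']
    exact min_le_min le_rfl (Nat.cast_le.2 hmn)
  · rw [indicator_of_notMem hx]; exact zero_le

lemma trunc_iSup (h : ℝ → ℝ≥0∞) (x : ℝ) : ⨆ n, trunc h n x = h x := by
  apply le_antisymm
  · exact iSup_le fun n => le_trans (indicator_le_self _ _ x) (min_le_left _ _)
  · obtain ⟨N, hN⟩ := exists_nat_ge |x|
    have hmem : ∀ n, N ≤ n → x ∈ Icc (-(n:ℝ)) n := by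
      intro n hn
      have h1 : |x| ≤ (n:ℝ) := le_trans hN (Nat.cast_le.2 hn)
      exact ⟨neg_le_of_abs_le h1, le_of_abs_le h1⟩
    by_cases hfin : h x = ⊤
    · rw [hfin]
      have : (⊤ : ℝ≥0∞) = ⨆ n : ℕ, (n : ℝ≥0∞) := ENNReal.iSup_natCast.symm
      rw [this]
      apply iSup_le ; intro n
      refine le_trans ?_ (le_iSup _ (N + n))
      rw [trunc, indicator_of_mem (hmem _ (Nat.le_add_right _ _)), hfin]
      simp only [min_eq_right (le_top : ((N+n:ℕ):ℝ≥0∞) ≤ ⊤)]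
      exact_mod_cast Nat.cast_le.2 (Nat.le_add_left n N)
    · obtain ⟨M, hM⟩ := ENNReal.exists_nat_gt hfin
      refine le_trans ?_ (le_iSup _ (max N M))
      rw [trunc, indicator_of_mem (hmem _ (le_max_left _ _))]
      rw [min_eq_left]
      exact le_trans hM.le (Nat.cast_le.2 (le_max_right _ _))

lemma lemA (J : Set ℝ) (hJ : J.OrdConnected) (Z : ℝ → ℝ) (L : ℝ → ℝ → ℝ)
    (hZL : HasOccDensity J Z L) {a b : ℝ} (ha : a ∈ J) (hb : b ∈ J) (hab : a ≤ b)
    (h : ℝ → ℝ≥0∞) (hh : Measurable h) :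
    ∫⁻ u in Ioc a b, h (Z u) = ∫⁻ x, h x * ENNReal.ofReal (L b x - L a x) := by
  obtain ⟨hZc, hLc, hmono, hLnn, hocc⟩ := hZL
  have hIoc_sub : Ioc a b ⊆ J := fun u hu => hJ.out ha hb ⟨hu.1.le, hu.2⟩
  have hLx : ∀ c ∈ J, Continuous fun x => L c x := by
    intro c hc
    exact hLc.comp_continuous (continuous_const.prodMk continuous_id)
      (fun x => ⟨hc, mem_univ x⟩)
  have hsplit : J ∩ Iic b = (J ∩ Iic a) ∪ Ioc a b := by
    ext u
    simp only [mem_inter_iff, mem_Iic, mem_union, mem_Ioc]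
    constructor
    · rintro ⟨huJ, hub⟩
      rcases le_or_gt u a with h1 | h1
      · exact Or.inl ⟨huJ, h1⟩
      · exact Or.inr ⟨h1, hub⟩
    · rintro (⟨huJ, hua⟩ | ⟨h1, h2⟩)
      · exact ⟨huJ, hua.trans hab⟩
      · exact ⟨hIoc_sub ⟨h1, h2⟩, h2⟩
  have hdisj : Disjoint (J ∩ Iic a) (Ioc a b) := by
    rw [Set.disjoint_left]
    rintro u ⟨_, hua⟩ ⟨h1, _⟩
    exact absurd hua (not_le.2 h1)
  -- key pointwise identity
  have hpt : ∀ x : ℝ, ENNReal.ofReal (L b x) =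
      ENNReal.ofReal (L a x) + ENNReal.ofReal (L b x - L a x) := by
    intro x
    rw [← ENNReal.ofReal_add (hLnn a ha x) (sub_nonneg.2 (hmono x ha hb hab))]
    ring_nf
  -- truncated version
  have key : ∀ n : ℕ, ∫⁻ u in Ioc a b, trunc h n (Z u) =
      ∫⁻ x, trunc h n x * ENNReal.ofReal (L b x - L a x) := by
    intro n
    have hmn := trunc_measurable h hh n
    have occb := hocc b hb (trunc h n) hmn
    have occa := hocc a ha (trunc h n) hmn
    rw [hsplit, lintegral_union measurableSet_Ioc hdisj, occa] at occb
    -- finiteness of X_n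
    have hXfin : ∫⁻ x, trunc h n x * ENNReal.ofReal (L a x) ≠ ⊤ := by
      obtain ⟨C, hC⟩ := (isCompact_Icc (a := -(n:ℝ)) (b := n)).exists_bound_of_continuousOn
        (hLx a ha).continuousOn
      have hle : ∀ x : ℝ, trunc h n x * ENNReal.ofReal (L a x) ≤
          (Icc (-(n:ℝ)) n).indicator (fun _ => (n : ℝ≥0∞) * ENNReal.ofReal C) x := by
        intro x
        by_cases hx : x ∈ Icc (-(n:ℝ)) n
        · rw [trunc, indicator_of_mem hx, indicator_of_mem hx]
          exact mul_le_mul' (min_le_right _ _)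
            (ENNReal.ofReal_le_ofReal ((le_abs_self _).trans (hC x hx)))
        · rw [trunc, indicator_of_notMem hx, indicator_of_notMem hx, zero_mul]
      refine ne_top_of_le_ne_top ?_ (lintegral_mono hle)
      rw [lintegral_indicator measurableSet_Icc, setLIntegral_const]
      exact ENNReal.mul_ne_top (ENNReal.mul_ne_top (by simp) ENNReal.ofReal_ne_top)
        (by simp [Real.volume_Icc])
    -- the two expressions
    have hmeasLa : Measurable fun x => ENNReal.ofReal (L a x) :=
      (hLx a ha).measurable.ennreal_ofReal
    have E2 : ∫⁻ x, trunc h n x * ENNReal.ofReal (L b x) =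
        (∫⁻ x, trunc h n x * ENNReal.ofReal (L a x)) +
          ∫⁻ x, trunc h n x * ENNReal.ofReal (L b x - L a x) := by
      rw [← lintegral_add_left (f := fun x => trunc h n x * ENNReal.ofReal (L a x)) (hmn.mul hmeasLa)
        (fun x => trunc h n x * ENNReal.ofReal (L b x - L a x))]
      congr 1; funext x
      rw [hpt x, mul_add]
    rw [E2] at occb
    exact (ENNReal.add_right_inj hXfin).1 occb
  -- pass to the limit
  have hZae : AEMeasurable Z (volume.restrict (Ioc a b)) :=
    (hZc.mono hIoc_sub).aemeasurable measurableSet_Ioc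
  calc ∫⁻ u in Ioc a b, h (Z u)
      = ∫⁻ u in Ioc a b, ⨆ n, trunc h n (Z u) := by
        congr 1; funext u; rw [← trunc_iSup h (Z u)]
    _ = ⨆ n, ∫⁻ u in Ioc a b, trunc h n (Z u) := by
        refine lintegral_iSup' (fun n => (trunc_measurable h hh n).comp_aemeasurable hZae)
          (Filter.Eventually.of_forall fun u => fun i j hij => trunc_mono h hij (Z u))
    _ = ⨆ n, ∫⁻ x, trunc h n x * ENNReal.ofReal (L b x - L a x) := by
        congr 1; funext n; exact key n
    _ = ∫⁻ x, h x * ENNReal.ofReal (L b x - L a x) := by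
        have hmeasD : Measurable fun x => ENNReal.ofReal (L b x - L a x) :=
          ((hLx b hb).sub (hLx a ha)).measurable.ennreal_ofReal
        rw [← lintegral_iSup (f := fun n x => trunc h n x * ENNReal.ofReal (L b x - L a x)) (fun n => (trunc_measurable h hh n).mul hmeasD)
          (fun i j hij x => mul_le_mul' (trunc_mono h hij x) le_rfl)]
        congr 1; funext x
        rw [← ENNReal.iSup_mul, trunc_iSup]

lemma Ioc_helper {t c d : ℝ} (hd : d ≤ t) :
    Ioc (t ⊓ c) ((t ⊓ c) ⊔ d) = Ioc c d := by
  rcases le_total c t with h | h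
  · rw [inf_eq_right.2 h]
    rcases le_total c d with h2 | h2
    · rw [sup_eq_right.2 h2]
    · rw [sup_eq_left.2 h2, Ioc_self, Ioc_eq_empty (not_lt.2 h2)]
  · rw [inf_eq_left.2 h, sup_eq_left.2 hd, Ioc_self,
      Ioc_eq_empty (not_lt.2 (hd.trans h))]

lemma setLevel (J : Set ℝ) (hJ : J.OrdConnected)
    (Z : ℝ → ℝ) (L : ℝ → ℝ → ℝ) (hZL : HasOccDensity J Z L)
    (μ : ℝ → Measure ℝ)
    (hμ : ∀ x : ℝ, ∀ a ∈ J, ∀ b ∈ J, a ≤ b →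
      μ x (Ioc a b) = ENNReal.ofReal (L b x - L a x))
    (s t : ℝ) (hs : s ∈ J) (ht : t ∈ J) (hst : s ≤ t) :
    ∀ S : Set (ℝ × ℝ), MeasurableSet S →
      Measurable (fun x => μ x ({u | (u, x) ∈ S} ∩ Ioc s t)) ∧
      Measure.map (fun u => (u, Z u)) (volume.restrict (Ioc s t)) S
        = ∫⁻ x, μ x ({u | (u, x) ∈ S} ∩ Ioc s t) := by
  obtain ⟨hZc, hLc, hmono, hLnn, hocc⟩ := hZL
  have hIcc : Icc s t ⊆ J := hJ.out hs ht
  have hLx : ∀ c ∈ J, Continuous fun x => L c x := by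
    intro c hc
    exact hLc.comp_continuous (continuous_const.prodMk continuous_id)
      (fun x => ⟨hc, mem_univ x⟩)
  have hZae : AEMeasurable Z (volume.restrict (Ioc s t)) :=
    (hZc.mono fun u hu => hJ.out hs ht ⟨hu.1.le, hu.2⟩).aemeasurable measurableSet_Ioc
  have hWae : AEMeasurable (fun u => (u, Z u)) (volume.restrict (Ioc s t)) :=
    aemeasurable_id.prodMk hZae
  set ν : Measure (ℝ × ℝ) := Measure.map (fun u => (u, Z u)) (volume.restrict (Ioc s t))
    with hν
  have hνapp : ∀ S : Set (ℝ × ℝ), MeasurableSet S →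
      ν S = volume.restrict (Ioc s t) ((fun u => (u, Z u)) ⁻¹' S) :=
    fun S hS => Measure.map_apply_of_aemeasurable hWae hS
  have hνuniv : ν univ = ENNReal.ofReal (t - s) := by
    rw [hνapp univ MeasurableSet.univ, preimage_univ, Measure.restrict_apply_univ,
      Real.volume_Ioc]
  have hμIoc : ∀ x, μ x (Ioc s t) = ENNReal.ofReal (L t x - L s x) :=
    fun x => hμ x s hs t ht hst
  have hTot : ∫⁻ x, ENNReal.ofReal (L t x - L s x) = ENNReal.ofReal (t - s) := by
    have := lemA J hJ Z L ⟨hZc, hLc, hmono, hLnn, hocc⟩ hs ht hst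
      (fun _ => 1) measurable_const
    simp only [one_mul] at this
    rw [← this, setLIntegral_one, Real.volume_Ioc]
  have hslice : ∀ (S : Set (ℝ × ℝ)) (x : ℝ), MeasurableSet S →
      MeasurableSet {u : ℝ | (u, x) ∈ S} :=
    fun S x hS => measurable_prodMk_right hS
  -- the π-system of Ioc intervals
  set Cio : Set (Set ℝ) := {S | ∃ l u, l < u ∧ Ioc l u = S} with hCio
  have h1 : (inferInstance : MeasurableSpace ℝ) = MeasurableSpace.generateFrom Cio :=
    BorelSpace.measurable_eq.trans (borel_eq_generateFrom_Ioc ℝ)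
  have hspan : IsCountablySpanning Cio := by
    refine ⟨fun n => Ioc (-(n : ℝ) - 1) ((n : ℝ) + 1), fun n =>
      ⟨-(n : ℝ) - 1, (n : ℝ) + 1, by
        have h0 : (0 : ℝ) ≤ n := n.cast_nonneg
        linarith, rfl⟩, ?_⟩
    ext x
    simp only [mem_iUnion, mem_Ioc, mem_univ, iff_true]
    obtain ⟨n, hn⟩ := exists_nat_ge |x|
    exact ⟨n, by
      have h1 := neg_le_of_abs_le hn
      have h2 := le_of_abs_le hn
      constructor <;> linarith⟩
  have hpiC : IsPiSystem Cio := by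
    rintro S ⟨l1, u1, hl1, rfl⟩ T ⟨l2, u2, hl2, rfl⟩ hne
    rw [Ioc_inter_Ioc] at hne ⊢
    exact ⟨l1 ⊔ l2, u1 ⊓ u2, nonempty_Ioc.1 hne, rfl⟩
  have hgen : (inferInstance : MeasurableSpace (ℝ × ℝ)) =
      MeasurableSpace.generateFrom (image2 (· ×ˢ ·) Cio Cio) := by
    conv_rhs => rw [← generateFrom_prod_eq hspan hspan]
    rw [← h1]
  intro S hS
  refine MeasurableSpace.induction_on_inter
    (C := fun S _ => Measurable (fun x => μ x ({u | (u, x) ∈ S} ∩ Ioc s t)) ∧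
      ν S = ∫⁻ x, μ x ({u | (u, x) ∈ S} ∩ Ioc s t))
    hgen (hpiC.prod hpiC) ?_ ?_ ?_ ?_ S hS
  · -- empty
    constructor
    · simp only [mem_empty_iff_false, setOf_false, empty_inter, measure_empty]
      exact measurable_const
    · simp only [mem_empty_iff_false, setOf_false, empty_inter, measure_empty,
        lintegral_zero, measure_empty]
  · -- rectangles
    rintro _ ⟨S1, ⟨a, b, hab, rfl⟩, S2, ⟨c, d, hcd, rfl⟩, rfl⟩
    set a' : ℝ := t ⊓ (a ⊔ s) with ha'
    set b' : ℝ := a' ⊔ (b ⊓ t) with hb'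
    have hIoc' : Ioc a' b' = Ioc (a ⊔ s) (b ⊓ t) := Ioc_helper inf_le_right
    have ha'J : a' ∈ J := hIcc ⟨le_inf hst le_sup_right, inf_le_left⟩
    have hb'J : b' ∈ J := hIcc ⟨le_trans (le_inf hst le_sup_right) le_sup_left,
      sup_le inf_le_left inf_le_right⟩
    have ha'b' : a' ≤ b' := le_sup_left
    have hinter : Ioc a b ∩ Ioc s t = Ioc a' b' := by
      rw [Ioc_inter_Ioc, hIoc']
    have hptw : ∀ x, μ x ({u | (u, x) ∈ Ioc a b ×ˢ Ioc c d} ∩ Ioc s t) =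
        (Ioc c d).indicator (fun x => ENNReal.ofReal (L b' x - L a' x)) x := by
      intro x
      by_cases hx : x ∈ Ioc c d
      · have : {u : ℝ | (u, x) ∈ Ioc a b ×ˢ Ioc c d} = Ioc a b := by
          ext u; simp [Set.mem_prod, hx]
        rw [this, hinter, hμ x a' ha'J b' hb'J ha'b', indicator_of_mem hx]
      · have : {u : ℝ | (u, x) ∈ Ioc a b ×ˢ Ioc c d} = ∅ := by
          ext u; simp [Set.mem_prod, hx]
        rw [this, empty_inter, measure_empty, indicator_of_notMem hx]
    constructor
    · rw [show (fun x => μ x ({u | (u, x) ∈ Ioc a b ×ˢ Ioc c d} ∩ Ioc s t)) =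
        (Ioc c d).indicator (fun x => ENNReal.ofReal (L b' x - L a' x)) from
          funext hptw]
      exact (((hLx b' hb'J).sub (hLx a' ha'J)).measurable.ennreal_ofReal).indicator
        measurableSet_Ioc
    · have hmeas_rect : MeasurableSet (Ioc a b ×ˢ Ioc c d) :=
        measurableSet_Ioc.prod measurableSet_Ioc
      rw [hνapp _ hmeas_rect]
      have hpre : (fun u => (u, Z u)) ⁻¹' (Ioc a b ×ˢ Ioc c d) =
          {u | u ∈ Ioc a b ∧ Z u ∈ Ioc c d} := rfl
      have hind : volume.restrict (Ioc s t) ((fun u => (u, Z u)) ⁻¹' (Ioc a b ×ˢ Ioc c d))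
          = ∫⁻ u in Ioc s t, (Ioc a b).indicator
              (fun u => (Ioc c d).indicator (fun _ => (1 : ℝ≥0∞)) (Z u)) u := by
        rw [← lintegral_indicator_one₀]
        · congr 1
          funext u
          by_cases h1 : u ∈ Ioc a b
          · by_cases h2 : Z u ∈ Ioc c d
            · have hm : u ∈ (fun u => (u, Z u)) ⁻¹' (Ioc a b ×ˢ Ioc c d) := ⟨h1, h2⟩
              rw [indicator_of_mem hm, indicator_of_mem h1, indicator_of_mem h2]
              rfl
            · have hm : u ∉ (fun u => (u, Z u)) ⁻¹' (Ioc a b ×ˢ Ioc c d) :=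
                fun hmm => h2 hmm.2
              rw [indicator_of_notMem hm, indicator_of_mem h1,
                indicator_of_notMem h2]
          · have hm : u ∉ (fun u => (u, Z u)) ⁻¹' (Ioc a b ×ˢ Ioc c d) :=
              fun hmm => h1 hmm.1
            rw [indicator_of_notMem hm, indicator_of_notMem h1]
        · exact (hWae.nullMeasurable hmeas_rect)
      rw [hind, lintegral_indicator measurableSet_Ioc,
        Measure.restrict_restrict measurableSet_Ioc, hinter,
        lemA J hJ Z L ⟨hZc, hLc, hmono, hLnn, hocc⟩ ha'J hb'J ha'b'
          ((Ioc c d).indicator (fun _ => (1 : ℝ≥0∞)))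
          (measurable_const.indicator measurableSet_Ioc)]
      congr 1
      funext x
      rw [hptw x]
      by_cases hx : x ∈ Ioc c d <;> simp [indicator, hx]
  · -- complement
    rintro S hSm ⟨hm, he⟩
    have hSfin : ∀ x, μ x ({u | (u, x) ∈ S} ∩ Ioc s t) ≠ ⊤ := by
      intro x
      refine ne_top_of_le_ne_top ?_ (measure_mono inter_subset_right)
      rw [hμIoc x]
      exact ENNReal.ofReal_ne_top
    have hptc : ∀ x, μ x ({u | (u, x) ∈ Sᶜ} ∩ Ioc s t) =
        ENNReal.ofReal (L t x - L s x) - μ x ({u | (u, x) ∈ S} ∩ Ioc s t) := by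
      intro x
      have hset : {u | (u, x) ∈ Sᶜ} ∩ Ioc s t =
          Ioc s t \ ({u | (u, x) ∈ S} ∩ Ioc s t) := by
        ext u
        simp only [mem_inter_iff, mem_setOf_eq, mem_compl_iff, mem_diff]
        tauto
      rw [hset, measure_diff inter_subset_right
        (((hslice S x hSm).inter measurableSet_Ioc).nullMeasurableSet) (hSfin x),
        hμIoc x]
    constructor
    · rw [show (fun x => μ x ({u | (u, x) ∈ Sᶜ} ∩ Ioc s t)) =
        (fun x => ENNReal.ofReal (L t x - L s x) - μ x ({u | (u, x) ∈ S} ∩ Ioc s t))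
          from funext hptc]
      exact (((hLx t ht).sub (hLx s hs)).measurable.ennreal_ofReal).sub hm
    · have hνS : ν S ≠ ⊤ := by
        refine ne_top_of_le_ne_top ?_ (measure_mono (subset_univ S))
        rw [hνuniv]; exact ENNReal.ofReal_ne_top
      have hcompl : ν Sᶜ = ν univ - ν S := measure_compl hSm hνS
      have hintfin : ∫⁻ x, μ x ({u | (u, x) ∈ S} ∩ Ioc s t) ≠ ⊤ := by
        rw [← he]; exact hνS
      have hmono_int : (fun x => μ x ({u | (u, x) ∈ S} ∩ Ioc s t)) ≤ᵐ[volume]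
          fun x => ENNReal.ofReal (L t x - L s x) := by
        refine Filter.Eventually.of_forall fun x => ?_
        dsimp only
        rw [← hμIoc x]
        exact measure_mono inter_subset_right
      calc ν Sᶜ = ν univ - ν S := hcompl
        _ = ENNReal.ofReal (t - s) - ∫⁻ x, μ x ({u | (u, x) ∈ S} ∩ Ioc s t) := by
            rw [hνuniv, he]
        _ = (∫⁻ x, ENNReal.ofReal (L t x - L s x)) -
            ∫⁻ x, μ x ({u | (u, x) ∈ S} ∩ Ioc s t) := by rw [hTot]
        _ = ∫⁻ x, (ENNReal.ofReal (L t x - L s x) -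
            μ x ({u | (u, x) ∈ S} ∩ Ioc s t)) := (lintegral_sub hm hintfin hmono_int).symm
        _ = ∫⁻ x, μ x ({u | (u, x) ∈ Sᶜ} ∩ Ioc s t) := by
            congr 1; funext x; rw [hptc x]
  · -- countable disjoint union
    rintro f hdisj hfm hC
    have hsl : ∀ x, {u | (u, x) ∈ ⋃ i, f i} ∩ Ioc s t =
        ⋃ i, ({u | (u, x) ∈ f i} ∩ Ioc s t) := by
      intro x
      rw [← iUnion_inter]
      congr 1
      ext u
      simp only [mem_setOf_eq, mem_iUnion]
    have hdisj' : ∀ x : ℝ, Pairwise (Function.onFun Disjoint fun i => {u | (u, x) ∈ f i} ∩ Ioc s t) := by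
      intro x i j hij
      refine Set.disjoint_left.2 ?_
      rintro u ⟨h1, _⟩ ⟨h2, _⟩
      exact Set.disjoint_left.1 (hdisj hij) h1 h2
    have hptu : ∀ x, μ x ({u | (u, x) ∈ ⋃ i, f i} ∩ Ioc s t) =
        ∑' i, μ x ({u | (u, x) ∈ f i} ∩ Ioc s t) := by
      intro x
      rw [hsl x, measure_iUnion (hdisj' x)
        (fun i => (hslice _ x (hfm i)).inter measurableSet_Ioc)]
    constructor
    · rw [show (fun x => μ x ({u | (u, x) ∈ ⋃ i, f i} ∩ Ioc s t)) =
        (fun x => ∑' i, μ x ({u | (u, x) ∈ f i} ∩ Ioc s t)) from funext hptu]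
      exact Measurable.ennreal_tsum fun i => (hC i).1
    · rw [measure_iUnion hdisj hfm]
      calc ∑' i, ν (f i) = ∑' i, ∫⁻ x, μ x ({u | (u, x) ∈ f i} ∩ Ioc s t) := by
            congr 1; funext i; exact (hC i).2
        _ = ∫⁻ x, ∑' i, μ x ({u | (u, x) ∈ f i} ∩ Ioc s t) :=
            (lintegral_tsum fun i => (hC i).1.aemeasurable).symm
        _ = ∫⁻ x, μ x ({u | (u, x) ∈ ⋃ i, f i} ∩ Ioc s t) := by
            congr 1; funext x; rw [hptu x]

end Aux

open MeasurableSpace in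
/-- Refined space–time occupation formula: if `Z` is continuous on the
interval `J` and admits the occupation density `L`, then for all `s ≤ t` in `J` and
every Borel `g : J × ℝ → [0,∞]`,
`∫_s^t g(u, Z_u) du = ∫_ℝ ( ∫_{(s,t]} g(u,x) dL(·,x)(u) ) dx`,
where `μ x` is the Lebesgue–Stieltjes measure associated with the continuous
nondecreasing function `u ↦ L(u,x)` on `J`. -/
theorem occupation_spacetime_formula
    (J : Set ℝ) (hJ : J.OrdConnected)
    (Z : ℝ → ℝ) (L : ℝ → ℝ → ℝ)
    (hZL : HasOccDensity J Z L)
    (μ : ℝ → Measure ℝ)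
    (hμ : ∀ x : ℝ, ∀ a ∈ J, ∀ b ∈ J, a ≤ b →
      μ x (Ioc a b) = ENNReal.ofReal (L b x - L a x))
    (s t : ℝ) (hs : s ∈ J) (ht : t ∈ J) (hst : s ≤ t)
    (g : ℝ × ℝ → ℝ≥0∞) (hg : Measurable g) :
    ∫⁻ u in Ioc s t, g (u, Z u) = ∫⁻ x : ℝ, ∫⁻ u in Ioc s t, g (u, x) ∂(μ x) := by
  have hsetL := setLevel J hJ Z L hZL μ hμ s t hs ht hst
  have hZae : AEMeasurable Z (volume.restrict (Ioc s t)) :=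
    (hZL.1.mono fun u hu => hJ.out hs ht ⟨hu.1.le, hu.2⟩).aemeasurable measurableSet_Ioc
  have hWae : AEMeasurable (fun u => (u, Z u)) (volume.restrict (Ioc s t)) :=
    aemeasurable_id.prodMk hZae
  set ν : Measure (ℝ × ℝ) := Measure.map (fun u => (u, Z u)) (volume.restrict (Ioc s t))
    with hν
  have main : ∀ g : ℝ × ℝ → ℝ≥0∞, Measurable g →
      Measurable (fun x => ∫⁻ u in Ioc s t, g (u, x) ∂(μ x)) ∧
      ∫⁻ p, g p ∂ν = ∫⁻ x, ∫⁻ u in Ioc s t, g (u, x) ∂(μ x) := by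
    intro g hg
    refine Measurable.ennreal_induction
      (motive := fun g : ℝ × ℝ → ℝ≥0∞ =>
        Measurable (fun x => ∫⁻ u in Ioc s t, g (u, x) ∂(μ x)) ∧
        ∫⁻ p, g p ∂ν = ∫⁻ x, ∫⁻ u in Ioc s t, g (u, x) ∂(μ x)) ?_ ?_ ?_ hg
    · intro c S hSm
      obtain ⟨hm, he⟩ := hsetL S hSm
      have hinner : ∀ x, ∫⁻ u in Ioc s t, S.indicator (fun _ => c) (u, x) ∂(μ x) =
          c * μ x ({u | (u, x) ∈ S} ∩ Ioc s t) := by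
        intro x
        have hsm : MeasurableSet {u : ℝ | (u, x) ∈ S} := measurable_prodMk_right hSm
        have heq : (fun u => S.indicator (fun _ => c) (u, x)) =
            ({u | (u, x) ∈ S}).indicator (fun _ => c) := by
          funext u
          by_cases h : (u, x) ∈ S
          · rw [indicator_of_mem h]
            exact (indicator_of_mem (show u ∈ {u | (u, x) ∈ S} from h) (fun _ => c)).symm
          · rw [indicator_of_notMem h]
            exact (indicator_of_notMem (show u ∉ {u | (u, x) ∈ S} from h) (fun _ => c)).symm
        rw [show (∫⁻ u in Ioc s t, S.indicator (fun _ => c) (u, x) ∂(μ x)) =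
            ∫⁻ u in Ioc s t, ({u | (u, x) ∈ S}).indicator (fun _ => c) u ∂(μ x) by
          rw [heq]]
        rw [lintegral_indicator hsm, Measure.restrict_restrict hsm,
          setLIntegral_const]
      constructor
      · rw [show (fun x => ∫⁻ u in Ioc s t, S.indicator (fun _ => c) (u, x) ∂(μ x)) =
          (fun x => c * μ x ({u | (u, x) ∈ S} ∩ Ioc s t)) from funext hinner]
        exact measurable_const.mul hm
      · rw [lintegral_indicator hSm, setLIntegral_const,
          show (fun x => ∫⁻ u in Ioc s t, S.indicator (fun _ => c) (u, x) ∂(μ x)) =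
            (fun x => c * μ x ({u | (u, x) ∈ S} ∩ Ioc s t)) from funext hinner,
          lintegral_const_mul c hm, he]
    · intro f g' hdisj hf hg' Pf Pg
      have hfx : ∀ x : ℝ, Measurable fun u => f (u, x) :=
        fun x => hf.comp measurable_prodMk_right
      have hinner : ∀ x, ∫⁻ u in Ioc s t, (f + g') (u, x) ∂(μ x) =
          (∫⁻ u in Ioc s t, f (u, x) ∂(μ x)) + ∫⁻ u in Ioc s t, g' (u, x) ∂(μ x) := by
        intro x
        simp only [Pi.add_apply]
        exact lintegral_add_left (hfx x) _
      constructor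
      · rw [show (fun x => ∫⁻ u in Ioc s t, (f + g') (u, x) ∂(μ x)) =
          (fun x => (∫⁻ u in Ioc s t, f (u, x) ∂(μ x)) +
            ∫⁻ u in Ioc s t, g' (u, x) ∂(μ x)) from funext hinner]
        exact Pf.1.add Pg.1
      · calc ∫⁻ p, (f + g') p ∂ν = (∫⁻ p, f p ∂ν) + ∫⁻ p, g' p ∂ν := by
              simp only [Pi.add_apply]
              exact lintegral_add_left hf _
          _ = (∫⁻ x, ∫⁻ u in Ioc s t, f (u, x) ∂(μ x)) +
              ∫⁻ x, ∫⁻ u in Ioc s t, g' (u, x) ∂(μ x) := by rw [Pf.2, Pg.2]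
          _ = ∫⁻ x, ((∫⁻ u in Ioc s t, f (u, x) ∂(μ x)) +
              ∫⁻ u in Ioc s t, g' (u, x) ∂(μ x)) := (lintegral_add_left Pf.1 _).symm
          _ = ∫⁻ x, ∫⁻ u in Ioc s t, (f + g') (u, x) ∂(μ x) := by
              congr 1; funext x; rw [hinner x]
    · intro f hfm hfmono Pf
      have hinner : ∀ x, ∫⁻ u in Ioc s t, (⨆ n, f n (u, x)) ∂(μ x) =
          ⨆ n, ∫⁻ u in Ioc s t, f n (u, x) ∂(μ x) := by
        intro x
        exact lintegral_iSup (fun n => (hfm n).comp measurable_prodMk_right)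
          (fun i j hij u => hfmono hij (u, x))
      constructor
      · rw [show (fun x => ∫⁻ u in Ioc s t, (⨆ n, f n (u, x)) ∂(μ x)) =
          (fun x => ⨆ n, ∫⁻ u in Ioc s t, f n (u, x) ∂(μ x)) from funext hinner]
        exact Measurable.iSup fun n => (Pf n).1
      · calc ∫⁻ p, (⨆ n, f n p) ∂ν = ⨆ n, ∫⁻ p, f n p ∂ν :=
              lintegral_iSup hfm hfmono
          _ = ⨆ n, ∫⁻ x, ∫⁻ u in Ioc s t, f n (u, x) ∂(μ x) := by
              congr 1; funext n; exact (Pf n).2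
          _ = ∫⁻ x, ⨆ n, ∫⁻ u in Ioc s t, f n (u, x) ∂(μ x) := by
              refine (lintegral_iSup (fun n => (Pf n).1) ?_).symm
              intro i j hij x
              exact lintegral_mono fun u => hfmono hij (u, x)
          _ = ∫⁻ x, ∫⁻ u in Ioc s t, (⨆ n, f n (u, x)) ∂(μ x) := by
              congr 1; funext x; rw [hinner x]
  calc ∫⁻ u in Ioc s t, g (u, Z u) = ∫⁻ p, g p ∂ν :=
        (lintegral_map' hg.aemeasurable hWae).symm
    _ = ∫⁻ x, ∫⁻ u in Ioc s t, g (u, x) ∂(μ x) := (main g hg).2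
end
end

section
/- (Proposition 3.4 of the paper, first part.) Let I ⊆ ℝ be an interval, f : I → (0,∞) continuous, c ∈ I, and let X : J → I be continuous on an interval J containing 0, admitting an occupation density L. Then the process Z := Υ(X,f,c), defined on C_f(J), admits the occupation density L_Z(t,x) := L(C_f^{−1}(t), η_{f,c}^{−1}(x)) / f(η_{f,c}^{−1}(x)) for t ∈ C_f(J) and x ∈ η_{f,c}(I); that is, L_Z is jointly continuous, nondecreasing in t, and for every t ∈ C_f(J) and every Borel h : ℝ → [0,∞), ∫_{C_f(J) ∩ (−∞,t]} h(Z_u) du = ∫ h(x) L_Z(t,x) dx. -/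
open MeasureTheory Set
open scoped ENNReal

noncomputable section

/-- `η_{f,c}(x) = ∫_c^x dr / f(r)`. -/
def eta (f : ℝ → ℝ) (c x : ℝ) : ℝ := ∫ r in c..x, (f r)⁻¹

/-- `C_f(t) = ∫_0^t ds / f(X_s)²`. -/
def timeChange (f X : ℝ → ℝ) (t : ℝ) : ℝ := ∫ s in (0:ℝ)..t, ((f (X s)) ^ 2)⁻¹

/-- The transformed process `Υ(X,f,c)_t = η_{f,c}(X_{C_f⁻¹(t)})`, where `C_f⁻¹` denotes
the inverse of `C_f` on the time interval `J`. -/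
def Ups (f X : ℝ → ℝ) (c : ℝ) (J : Set ℝ) (t : ℝ) : ℝ :=
  eta f c (X (Function.invFunOn (timeChange f X) J t))

/-- The candidate occupation density of `Υ(X,f,c)`:
`L_Z(t,x) = L(C_f⁻¹(t), η_{f,c}⁻¹(x)) / f(η_{f,c}⁻¹(x))`. -/
def UpsLoc (f X : ℝ → ℝ) (c : ℝ) (J I : Set ℝ) (L : ℝ → ℝ → ℝ) (t x : ℝ) : ℝ :=
  L (Function.invFunOn (timeChange f X) J t) (Function.invFunOn (eta f c) I x)
    / f (Function.invFunOn (eta f c) I x)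

/-! ### Auxiliary lemmas -/

/-- FTC: the primitive of a function continuous on an order-connected set `J` is
differentiable within `J` at every point of `J`. -/
lemma primitive_hasDerivWithinAt {g : ℝ → ℝ} {J : Set ℝ} (hJ : J.OrdConnected)
    (hg : ContinuousOn g J) {a b : ℝ} (ha : a ∈ J) (hb : b ∈ J) :
    HasDerivWithinAt (fun u => ∫ x in a..u, g x) (g b) J b := by
  obtain ⟨l, u, hlJ, huJ, hlb, hbu, hmem⟩ :
      ∃ l u, l ∈ J ∧ u ∈ J ∧ l ≤ b ∧ b ≤ u ∧ Icc l u ∈ nhdsWithin b J := by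
    by_cases hL : ∃ e ∈ J, e < b <;> by_cases hR : ∃ e ∈ J, b < e
    · obtain ⟨l, hlJ, hlb⟩ := hL; obtain ⟨u, huJ, hbu⟩ := hR
      exact ⟨l, u, hlJ, huJ, hlb.le, hbu.le, mem_nhdsWithin.mpr
        ⟨Ioo l u, isOpen_Ioo, ⟨hlb, hbu⟩, fun x hx => ⟨hx.1.1.le, hx.1.2.le⟩⟩⟩
    · push_neg at hR
      obtain ⟨l, hlJ, hlb⟩ := hL
      exact ⟨l, b, hlJ, hb, hlb.le, le_refl b, mem_nhdsWithin.mpr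
        ⟨Ioi l, isOpen_Ioi, hlb, fun x hx => ⟨hx.1.le, hR x hx.2⟩⟩⟩
    · push_neg at hL
      obtain ⟨u, huJ, hbu⟩ := hR
      exact ⟨b, u, hb, huJ, le_refl b, hbu.le, mem_nhdsWithin.mpr
        ⟨Iio u, isOpen_Iio, hbu, fun x hx => ⟨hL x hx.2, hx.1.le⟩⟩⟩
    · push_neg at hL hR
      exact ⟨b, b, hb, hb, le_refl b, le_refl b, mem_nhdsWithin.mpr
        ⟨univ, isOpen_univ, trivial, fun x hx => ⟨hL x hx.2, hR x hx.2⟩⟩⟩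
  have hIcc : Icc l u ⊆ J := hJ.out hlJ huJ
  have hlu : l ≤ u := hlb.trans hbu
  set p : ℝ → ℝ := fun x => max l (min x u) with hp
  have hpc : Continuous p := continuous_const.max (continuous_id.min continuous_const)
  have hpmem : ∀ x, p x ∈ Icc l u := fun x => ⟨le_max_left _ _, max_le hlu (min_le_right _ _)⟩
  have hpeq : ∀ x ∈ Icc l u, p x = x := by
    intro x hx
    rw [hp]
    simp only [min_eq_left hx.2, max_eq_right hx.1]
  have hGc : Continuous (fun x => g (p x)) := hg.comp_continuous hpc (fun x => hIcc (hpmem x))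
  have hFd : HasDerivAt (fun v => ∫ x in b..v, g (p x)) (g (p b)) b :=
    (hGc.integral_hasStrictDerivAt b b).hasDerivAt
  have hbmem : b ∈ Icc l u := ⟨hlb, hbu⟩
  have heq : ∀ v ∈ Icc l u,
      (∫ x in a..v, g x) = (∫ x in a..b, g x) + ∫ x in b..v, g (p x) := by
    intro v hv
    have h1 : IntervalIntegrable g volume a b := (hg.mono (hJ.uIcc_subset ha hb)).intervalIntegrable
    have h2 : IntervalIntegrable g volume b v :=
      (hg.mono (hJ.uIcc_subset hb (hIcc hv))).intervalIntegrable
    rw [← intervalIntegral.integral_add_adjacent_intervals h1 h2]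
    congr 1
    apply intervalIntegral.integral_congr
    intro x hx
    exact (congrArg g (hpeq x ((ordConnected_Icc.uIcc_subset hbmem hv) hx))).symm
  have key : HasDerivWithinAt (fun v => (∫ x in a..b, g x) + ∫ x in b..v, g (p x))
      (g (p b)) (Icc l u) b := (hFd.const_add _).hasDerivWithinAt
  have key2 : HasDerivWithinAt (fun v => ∫ x in a..v, g x) (g (p b)) (Icc l u) b :=
    key.congr (fun v hv => heq v hv) (heq b hbmem)
  rw [hpeq b hbmem] at key2
  exact key2.mono_of_mem_nhdsWithin hmem

/-- The primitive of a positive continuous function is strictly monotone. -/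
lemma primitive_strictMonoOn {g : ℝ → ℝ} {J : Set ℝ} (hJ : J.OrdConnected)
    (hg : ContinuousOn g J) (hpos : ∀ x ∈ J, 0 < g x) {a : ℝ} (ha : a ∈ J) :
    StrictMonoOn (fun u => ∫ x in a..u, g x) J := by
  intro x hx y hy hxy
  have h1 : IntervalIntegrable g volume a x := (hg.mono (hJ.uIcc_subset ha hx)).intervalIntegrable
  have h2 : IntervalIntegrable g volume x y := (hg.mono (hJ.uIcc_subset hx hy)).intervalIntegrable
  have key := intervalIntegral.integral_add_adjacent_intervals h1 h2
  have hpos' : 0 < ∫ s in x..y, g s :=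
    intervalIntegral.intervalIntegral_pos_of_pos_on h2
      (fun s hs => hpos s ((hJ.uIcc_subset hx hy)
        (by rw [uIcc_of_le hxy.le]; exact Ioo_subset_Icc_self hs))) hxy
  simp only []
  linarith

/-- One-dimensional change of variables for lower Lebesgue integrals. -/
lemma lintegral_image_eq_lintegral_abs_deriv_mul' {s : Set ℝ} {f f' : ℝ → ℝ}
    (hs : MeasurableSet s) (hf' : ∀ x ∈ s, HasDerivWithinAt f (f' x) s x)
    (hf : InjOn f s) (g : ℝ → ℝ≥0∞) :
    ∫⁻ x in f '' s, g x = ∫⁻ x in s, ENNReal.ofReal |f' x| * g (f x) := by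
  simpa only [ContinuousLinearMap.det_toSpanSingleton] using
    MeasureTheory.lintegral_image_eq_lintegral_abs_det_fderiv_mul volume hs
      (fun x hx => (hf' x hx).hasFDerivWithinAt) hf g

/-- The inverse of a strictly monotone function is monotone on the image. -/
lemma invFunOn_monotoneOn {s : Set ℝ} {g : ℝ → ℝ} (hgm : StrictMonoOn g s) :
    MonotoneOn (Function.invFunOn g s) (g '' s) := by
  rintro t1 ht1 t2 ht2 h12
  have hex1 : ∃ a ∈ s, g a = t1 := by obtain ⟨x, hx, rfl⟩ := ht1; exact ⟨x, hx, rfl⟩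
  have hex2 : ∃ a ∈ s, g a = t2 := by obtain ⟨x, hx, rfl⟩ := ht2; exact ⟨x, hx, rfl⟩
  have h1 := Function.invFunOn_mem hex1
  have h2 := Function.invFunOn_mem hex2
  have e1 := Function.invFunOn_eq hex1
  have e2 := Function.invFunOn_eq hex2
  by_contra hcon
  push_neg at hcon
  have := hgm h2 h1 hcon
  rw [e1, e2] at this
  exact absurd h12 (not_le.mpr this)

/-- The inverse of a continuous strictly monotone function on an order-connected set is
continuous on the image. -/
lemma invFunOn_continuousOn {s : Set ℝ} {g : ℝ → ℝ} (hs : s.OrdConnected)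
    (hgc : ContinuousOn g s) (hgm : StrictMonoOn g s) :
    ContinuousOn (Function.invFunOn g s) (g '' s) := by
  haveI : s.OrdConnected := hs
  haveI : (g '' s).OrdConnected := ((hs.isPreconnected).image g hgc).ordConnected
  let e := StrictMonoOn.orderIso g s hgm
  have hec : Continuous (e.symm : ↥(g '' s) → ↥s) := OrderIso.continuous e.symm
  rw [continuousOn_iff_continuous_restrict]
  have hrestr : restrict (g '' s) (Function.invFunOn g s) = Subtype.val ∘ e.symm := by
    funext y
    obtain ⟨x, hx, hxy⟩ := y.2
    have h1 : Function.invFunOn g s ↑y = x := by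
      rw [← hxy]; exact hgm.injOn.leftInvOn_invFunOn hx
    have h2 : e ⟨x, hx⟩ = y := Subtype.ext hxy
    have h3 : e.symm y = ⟨x, hx⟩ := by rw [← h2]; exact e.symm_apply_apply _
    show Function.invFunOn g s ↑y = ↑(e.symm y)
    rw [h3]
    exact h1
  rw [show (g '' s).domRestrict (Function.invFunOn g s) = _ from hrestr]
  exact continuous_subtype_val.comp hec

/-- Proposition 3.4, first part. The process `Z = Υ(X,f,c)`, defined on
`C_f(J)`, admits the occupation density
`L_Z(t,x) = L(C_f⁻¹(t), η_{f,c}⁻¹(x)) / f(η_{f,c}⁻¹(x))` for `t ∈ C_f(J)`, `x ∈ η_{f,c}(I)`: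
`L_Z` is jointly continuous, nondecreasing (and nonnegative) in `t`, and for every
`t ∈ C_f(J)` and Borel `h : ℝ → [0,∞]`,
`∫_{C_f(J) ∩ (−∞,t]} h(Z_u) du = ∫ h(x) L_Z(t,x) dx`. -/
theorem ups_occupation_density
    (I J : Set ℝ) (hI : I.OrdConnected) (hJ : J.OrdConnected) (h0J : (0:ℝ) ∈ J)
    (f : ℝ → ℝ) (hfc : ContinuousOn f I) (hfpos : ∀ x ∈ I, 0 < f x)
    (c : ℝ) (hc : c ∈ I)
    (X : ℝ → ℝ) (hXmaps : MapsTo X J I)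
    (L : ℝ → ℝ → ℝ) (hXL : HasOccDensity J X L) :
    ContinuousOn (fun p : ℝ × ℝ => UpsLoc f X c J I L p.1 p.2)
      ((timeChange f X '' J) ×ˢ (eta f c '' I)) ∧
    (∀ x ∈ eta f c '' I,
      MonotoneOn (fun t => UpsLoc f X c J I L t x) (timeChange f X '' J)) ∧
    (∀ t ∈ timeChange f X '' J, ∀ x ∈ eta f c '' I, 0 ≤ UpsLoc f X c J I L t x) ∧
    ContinuousOn (Ups f X c J) (timeChange f X '' J) ∧
    (∀ t ∈ timeChange f X '' J, ∀ h : ℝ → ℝ≥0∞, Measurable h →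
      ∫⁻ u in (timeChange f X '' J) ∩ Iic t, h (Ups f X c J u)
        = ∫⁻ x in eta f c '' I, h x * ENNReal.ofReal (UpsLoc f X c J I L t x)) := by
  classical
  obtain ⟨hXc, hLc, hLmono, hLnonneg, hLocc⟩ := hXL
  have hIm : MeasurableSet I := hI.measurableSet
  have hJm : MeasurableSet J := hJ.measurableSet
  -- integrand of the time change
  have hgCc : ContinuousOn (fun s => ((f (X s)) ^ 2)⁻¹) J :=
    ((hfc.comp hXc hXmaps).pow 2).inv₀
      (fun s hs => pow_ne_zero 2 (hfpos _ (hXmaps hs)).ne')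
  have hgCpos : ∀ s ∈ J, 0 < ((f (X s)) ^ 2)⁻¹ :=
    fun s hs => inv_pos.mpr (pow_pos (hfpos _ (hXmaps hs)) 2)
  have hCd : ∀ b ∈ J, HasDerivWithinAt (timeChange f X) (((f (X b)) ^ 2)⁻¹) J b :=
    fun b hb => primitive_hasDerivWithinAt hJ hgCc h0J hb
  have hCc : ContinuousOn (timeChange f X) J := fun b hb => (hCd b hb).continuousWithinAt
  have hCmono : StrictMonoOn (timeChange f X) J := primitive_strictMonoOn hJ hgCc hgCpos h0J
  -- integrand of the space change
  have hgEc : ContinuousOn (fun r => (f r)⁻¹) I :=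
    hfc.inv₀ (fun r hr => (hfpos r hr).ne')
  have hηd : ∀ x ∈ I, HasDerivWithinAt (eta f c) ((f x)⁻¹) I x :=
    fun x hx => primitive_hasDerivWithinAt hI hgEc hc hx
  have hηc : ContinuousOn (eta f c) I := fun x hx => (hηd x hx).continuousWithinAt
  have hηmono : StrictMonoOn (eta f c) I :=
    primitive_strictMonoOn hI hgEc (fun r hr => inv_pos.mpr (hfpos r hr)) hc
  -- inverses
  have hTisec : ∀ t ∈ timeChange f X '' J,
      Function.invFunOn (timeChange f X) J t ∈ J ∧
      timeChange f X (Function.invFunOn (timeChange f X) J t) = t := by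
    intro t ht
    have hex : ∃ a ∈ J, timeChange f X a = t := by
      obtain ⟨s, hs, rfl⟩ := ht; exact ⟨s, hs, rfl⟩
    exact ⟨Function.invFunOn_mem hex, Function.invFunOn_eq hex⟩
  have hTil : ∀ s ∈ J, Function.invFunOn (timeChange f X) J (timeChange f X s) = s :=
    fun s hs => hCmono.injOn.leftInvOn_invFunOn hs
  have hEil : ∀ x ∈ I, Function.invFunOn (eta f c) I (eta f c x) = x :=
    fun x hx => hηmono.injOn.leftInvOn_invFunOn hx
  have hTic : ContinuousOn (Function.invFunOn (timeChange f X) J) (timeChange f X '' J) :=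
    invFunOn_continuousOn hJ hCc hCmono
  have hEic : ContinuousOn (Function.invFunOn (eta f c) I) (eta f c '' I) :=
    invFunOn_continuousOn hI hηc hηmono
  have hTim : MonotoneOn (Function.invFunOn (timeChange f X) J) (timeChange f X '' J) :=
    invFunOn_monotoneOn hCmono
  have hTimaps : MapsTo (Function.invFunOn (timeChange f X) J) (timeChange f X '' J) J :=
    fun t ht => (hTisec t ht).1
  have hEimaps : MapsTo (Function.invFunOn (eta f c) I) (eta f c '' I) I := by
    intro x hx
    have hex : ∃ a ∈ I, eta f c a = x := by obtain ⟨y, hy, rfl⟩ := hx; exact ⟨y, hy, rfl⟩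
    exact Function.invFunOn_mem hex
  refine ⟨?_, ?_, ?_, ?_, ?_⟩
  · -- joint continuity of UpsLoc
    simp only [UpsLoc]
    have h1 : ContinuousOn
        (fun p : ℝ × ℝ => L (Function.invFunOn (timeChange f X) J p.1)
          (Function.invFunOn (eta f c) I p.2))
        ((timeChange f X '' J) ×ˢ (eta f c '' I)) := by
      exact hLc.comp (f := fun p : ℝ × ℝ => (Function.invFunOn (timeChange f X) J p.1, Function.invFunOn (eta f c) I p.2))
        ((hTic.comp continuous_fst.continuousOn (fun p (hp : p ∈ (timeChange f X '' J) ×ˢ (eta f c '' I)) => hp.1)).prodMk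
          (hEic.comp continuous_snd.continuousOn (fun p (hp : p ∈ (timeChange f X '' J) ×ˢ (eta f c '' I)) => hp.2)))
        (fun p (hp : p ∈ (timeChange f X '' J) ×ˢ (eta f c '' I)) => ⟨hTimaps hp.1, mem_univ _⟩)
    have h2 : ContinuousOn
        (fun p : ℝ × ℝ => f (Function.invFunOn (eta f c) I p.2))
        ((timeChange f X '' J) ×ˢ (eta f c '' I)) :=
      hfc.comp (hEic.comp continuous_snd.continuousOn (fun p hp => hp.2))
        (fun p hp => hEimaps hp.2)
    exact h1.div h2 (fun p hp => (hfpos _ (hEimaps hp.2)).ne')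
  · -- monotonicity in t
    intro x hx t1 ht1 t2 ht2 h12
    simp only [UpsLoc]
    have hxI := hEimaps hx
    have hmono := hLmono (Function.invFunOn (eta f c) I x)
      (hTimaps ht1) (hTimaps ht2) (hTim ht1 ht2 h12)
    have hfx := hfpos _ hxI
    exact div_le_div_of_nonneg_right hmono hfx.le
  · -- nonnegativity
    intro t ht x hx
    exact div_nonneg (hLnonneg _ (hTimaps ht) _) (hfpos _ (hEimaps hx)).le
  · -- continuity of Ups
    have : ContinuousOn
        (fun t => eta f c (X (Function.invFunOn (timeChange f X) J t)))
        (timeChange f X '' J) :=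
      hηc.comp (hXc.comp hTic hTimaps) (fun t ht => hXmaps (hTimaps ht))
    exact this
  · -- occupation density identity
    intro t ht h hm
    have hτJ : Function.invFunOn (timeChange f X) J t ∈ J := (hTisec t ht).1
    have hCτ : timeChange f X (Function.invFunOn (timeChange f X) J t) = t := (hTisec t ht).2
    set τ := Function.invFunOn (timeChange f X) J t with hτdef
    set S : Set ℝ := J ∩ Iic τ with hSdef
    have hSm : MeasurableSet S := hJm.inter measurableSet_Iic
    have hSsub : S ⊆ J := inter_subset_left
    have hset : timeChange f X '' S = (timeChange f X '' J) ∩ Iic t := by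
      ext v
      constructor
      · rintro ⟨s, ⟨hsJ, hsτ⟩, rfl⟩
        exact ⟨mem_image_of_mem _ hsJ,
          le_of_le_of_eq (hCmono.monotoneOn hsJ hτJ hsτ) hCτ⟩
      · rintro ⟨⟨s, hsJ, rfl⟩, hvt⟩
        exact ⟨s, ⟨hsJ, (hCmono.le_iff_le hsJ hτJ).mp
          (le_of_le_of_eq hvt hCτ.symm)⟩, rfl⟩
    have hCof : ∀ s ∈ S, HasDerivWithinAt (timeChange f X) (((f (X s)) ^ 2)⁻¹) S s :=
      fun s hs => (hCd s hs.1).mono hSsub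
    have step2 : ∫⁻ v in timeChange f X '' S, h (Ups f X c J v)
        = ∫⁻ s in S, ENNReal.ofReal |((f (X s)) ^ 2)⁻¹| * h (Ups f X c J (timeChange f X s)) :=
      lintegral_image_eq_lintegral_abs_deriv_mul' hSm hCof (hCmono.injOn.mono hSsub) _
    -- measurable globalizations
    set fM : ℝ → ℝ := I.piecewise f (fun _ => 1) with hfMdef
    set etaM : ℝ → ℝ := I.piecewise (eta f c) (fun _ => 0) with hetaMdef
    have hfMm : Measurable fM := ContinuousOn.measurable_piecewise hfc continuousOn_const hIm
    have hetaMm : Measurable etaM := ContinuousOn.measurable_piecewise hηc continuousOn_const hIm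
    set hh : ℝ → ℝ≥0∞ := fun y =>
      I.indicator (fun _ => (1:ℝ≥0∞)) y * (ENNReal.ofReal ((fM y ^ 2)⁻¹) * h (etaM y))
      with hhdef
    have hhm : Measurable hh :=
      ((measurable_const.indicator hIm)).mul
        ((ENNReal.measurable_ofReal.comp ((hfMm.pow_const 2).inv)).mul (hm.comp hetaMm))
    have hhI : ∀ y ∈ I, hh y = ENNReal.ofReal (((f y) ^ 2)⁻¹) * h (eta f c y) := by
      intro y hy
      rw [hhdef]
      simp only [indicator_of_mem hy, hfMdef, hetaMdef, Set.piecewise_eq_of_mem _ _ _ hy, one_mul]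
    have hhI' : ∀ y, y ∉ I → hh y = 0 := by
      intro y hy
      rw [hhdef]
      simp only [indicator_of_notMem hy, zero_mul]
    have step3 : ∫⁻ s in S, ENNReal.ofReal |((f (X s)) ^ 2)⁻¹| * h (Ups f X c J (timeChange f X s))
        = ∫⁻ s in S, hh (X s) := by
      apply setLIntegral_congr_fun hSm
      intro s hs
      beta_reduce
      have hsJ := hs.1
      have hXI := hXmaps hsJ
      rw [hhI _ hXI]
      have hU : Ups f X c J (timeChange f X s) = eta f c (X s) := by
        rw [Ups, hTil s hsJ]
      rw [hU, abs_of_nonneg (le_of_lt (hgCpos s hsJ))]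
    have step4 := hLocc τ hτJ hh hhm
    have step5 : ∫⁻ x, hh x * ENNReal.ofReal (L τ x)
        = ∫⁻ x in I, ENNReal.ofReal (((f x) ^ 2)⁻¹) * h (eta f c x) * ENNReal.ofReal (L τ x) := by
      rw [← lintegral_indicator hIm]
      apply lintegral_congr
      intro x
      by_cases hx : x ∈ I
      · rw [indicator_of_mem hx, hhI x hx, mul_assoc]
      · rw [indicator_of_notMem hx, hhI' x hx, zero_mul]
    have step6 : ∫⁻ y in eta f c '' I, h y * ENNReal.ofReal (UpsLoc f X c J I L t y)
        = ∫⁻ x in I, ENNReal.ofReal |(f x)⁻¹|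
            * (h (eta f c x) * ENNReal.ofReal (UpsLoc f X c J I L t (eta f c x))) :=
      lintegral_image_eq_lintegral_abs_deriv_mul' hIm hηd hηmono.injOn _
    have step7 : ∫⁻ x in I, ENNReal.ofReal |(f x)⁻¹|
          * (h (eta f c x) * ENNReal.ofReal (UpsLoc f X c J I L t (eta f c x)))
        = ∫⁻ x in I, ENNReal.ofReal (((f x) ^ 2)⁻¹) * h (eta f c x) * ENNReal.ofReal (L τ x) := by
      apply setLIntegral_congr_fun hIm
      intro x hx
      beta_reduce
      have hfx := hfpos x hx
      have hUx : UpsLoc f X c J I L t (eta f c x) = L τ x / f x := by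
        rw [UpsLoc, hEil x hx, ← hτdef]
      rw [hUx, abs_of_nonneg (inv_nonneg.mpr hfx.le)]
      have hL0 : 0 ≤ L τ x := hLnonneg τ hτJ x
      have key : (f x)⁻¹ * (L τ x / f x) = ((f x) ^ 2)⁻¹ * L τ x := by
        rw [div_eq_mul_inv, pow_two, mul_inv]
        ring
      calc ENNReal.ofReal (f x)⁻¹ * (h (eta f c x) * ENNReal.ofReal (L τ x / f x))
          = (ENNReal.ofReal (f x)⁻¹ * ENNReal.ofReal (L τ x / f x)) * h (eta f c x) := by ring
        _ = ENNReal.ofReal ((f x)⁻¹ * (L τ x / f x)) * h (eta f c x) := by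
            rw [← ENNReal.ofReal_mul (inv_nonneg.mpr hfx.le)]
        _ = ENNReal.ofReal (((f x) ^ 2)⁻¹ * L τ x) * h (eta f c x) := by rw [key]
        _ = ENNReal.ofReal (((f x) ^ 2)⁻¹) * h (eta f c x) * ENNReal.ofReal (L τ x) := by
            rw [ENNReal.ofReal_mul (inv_nonneg.mpr (sq_nonneg (f x)))]
            ring
    calc ∫⁻ u in (timeChange f X '' J) ∩ Iic t, h (Ups f X c J u)
        = ∫⁻ u in timeChange f X '' S, h (Ups f X c J u) := by rw [hset]
      _ = ∫⁻ s in S, ENNReal.ofReal |((f (X s)) ^ 2)⁻¹| * h (Ups f X c J (timeChange f X s)) :=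
          step2
      _ = ∫⁻ s in S, hh (X s) := step3
      _ = ∫⁻ x, hh x * ENNReal.ofReal (L τ x) := step4
      _ = ∫⁻ x in I, ENNReal.ofReal (((f x) ^ 2)⁻¹) * h (eta f c x) * ENNReal.ofReal (L τ x) :=
          step5
      _ = ∫⁻ y in eta f c '' I, h y * ENNReal.ofReal (UpsLoc f X c J I L t y) := by
          rw [step6, step7]
end
end

section
/- (Lemma 3.6 of the paper: composition property of the transformation Υ.) Let I ⊆ ℝ be an interval, f : I → (0,∞) continuous, c ∈ I, and X : J → I continuous on an interval J containing 0, admitting an occupation density L with sup_t L(t,·) ≤ f. Let Z := Υ(X,f,c) with occupation density L_Z(t,x) = L(C_f^{−1}(t), η_{f,c}^{−1}(x))/f(η_{f,c}^{−1}(x)). Let s ∈ J and c' ∈ I, and assume f − L(s,·) is positive on a subinterval of I containing c' and the range of (X_{s+u})_{u≥0, s+u∈J}. Then Υ(Z_{C_f(s)+·}, 1 − L_Z(C_f(s),·), η_{f,c}(c')) is well defined and equals Υ(X_{s+·}, f − L(s,·), c'). In particular, evaluating at time 0: ∫_{η_{f,c}(c')}^{Z_{C_f(s)}} dr/(1 −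 L_Z(C_f(s),r)) = ∫_{c'}^{X_s} dr/(f(r) − L(s,r)). -/
open MeasureTheory Set
open scoped ENNReal

noncomputable section

/-- Inverse of an injective continuous function on a compact set is continuous on the image. -/
lemma continuousOn_invFunOn_of_isCompact {K : Set ℝ} (hK : IsCompact K)
    {g : ℝ → ℝ} (hg : ContinuousOn g K) (hinj : Set.InjOn g K) :
    ContinuousOn (Function.invFunOn g K) (g '' K) := by
  rw [continuousOn_iff_isClosed]
  intro C hC
  refine ⟨g '' (K ∩ C),
    ((hK.inter_right hC).image_of_continuousOn (hg.mono inter_subset_left)).isClosed, ?_⟩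
  have hfix : ∀ x ∈ K, Function.invFunOn g K (g x) = x := fun x hx =>
    hinj (Function.invFunOn_apply_mem hx) hx (Function.invFunOn_apply_eq hx)
  ext y
  constructor
  · rintro ⟨hyC, x, hx, rfl⟩
    refine ⟨⟨x, ⟨hx, ?_⟩, rfl⟩, ⟨x, hx, rfl⟩⟩
    have h2 : Function.invFunOn g K (g x) ∈ C := hyC
    rwa [hfix x hx] at h2
  · rintro ⟨⟨x, ⟨hxK, hxC⟩, rfl⟩, _⟩
    refine ⟨?_, ⟨x, hxK, rfl⟩⟩
    show Function.invFunOn g K (g x) ∈ C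
    rwa [hfix x hxK]

/-- Additivity of the primitive on an order-connected set. -/
lemma primitive_add_of_ordConnected {K : Set ℝ} (hK : K.OrdConnected) {h : ℝ → ℝ} {c a b : ℝ}
    (hc : c ∈ K) (ha : a ∈ K) (hb : b ∈ K) (hh : ContinuousOn h K) :
    (∫ r in c..a, h r) + ∫ r in a..b, h r = ∫ r in c..b, h r :=
  intervalIntegral.integral_add_adjacent_intervals
    ((hh.mono (hK.uIcc_subset hc ha)).intervalIntegrable)
    ((hh.mono (hK.uIcc_subset ha hb)).intervalIntegrable)

/-- A primitive of a positive continuous function is strictly monotone. -/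
lemma strictMonoOn_primitive {K : Set ℝ} (hK : K.OrdConnected) {h : ℝ → ℝ} {c : ℝ}
    (hc : c ∈ K) (hh : ContinuousOn h K) (hpos : ∀ x ∈ K, 0 < h x) :
    StrictMonoOn (fun t => ∫ r in c..t, h r) K := by
  intro x hx y hy hxy
  have hsub : Set.uIcc x y ⊆ K := hK.uIcc_subset hx hy
  have hI2 : IntervalIntegrable h volume x y := (hh.mono hsub).intervalIntegrable
  have hadd := primitive_add_of_ordConnected hK hc hx hy hh
  have hpos' : 0 < ∫ r in x..y, h r :=
    intervalIntegral.intervalIntegral_pos_of_pos_on hI2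
      (fun z hz => hpos z (hsub (Icc_subset_uIcc (Ioo_subset_Icc_self hz)))) hxy
  simp only
  linarith

/-- Continuity of the primitive on a subinterval. -/
lemma continuousOn_primitive_uIcc {K : Set ℝ} (hK : K.OrdConnected) {h : ℝ → ℝ} {c a b : ℝ}
    (hc : c ∈ K) (ha : a ∈ K) (hb : b ∈ K) (hh : ContinuousOn h K) :
    ContinuousOn (fun t => ∫ r in c..t, h r) (Set.uIcc a b) := by
  have hint : IntervalIntegrable h volume a b :=
    (hh.mono (hK.uIcc_subset ha hb)).intervalIntegrable
  have hcont : ContinuousOn (fun t => (∫ r in c..a, h r) + ∫ r in a..t, h r) (Set.uIcc a b) :=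
    (continuousOn_const).add (intervalIntegral.continuousOn_primitive_interval' hint left_mem_uIcc)
  refine hcont.congr fun t ht => ?_
  exact (primitive_add_of_ordConnected hK hc ha (hK.uIcc_subset ha hb ht) hh).symm

/-- Derivative of the primitive at interior points. -/
lemma hasDerivAt_primitive_of_mem {K : Set ℝ} (hK : K.OrdConnected) {h : ℝ → ℝ} {c l r x : ℝ}
    (hc : c ∈ K) (hl : l ∈ K) (hr : r ∈ K) (hx : x ∈ Ioo l r) (hh : ContinuousOn h K) :
    HasDerivAt (fun t => ∫ r in c..t, h r) (h x) x := by
  have hIoo : Ioo l r ⊆ K := fun z hz => hK.out hl hr ⟨hz.1.le, hz.2.le⟩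
  have hxK : x ∈ K := hIoo hx
  have hnhds : Ioo l r ∈ nhds x := (isOpen_Ioo).mem_nhds hx
  have hca : ContinuousAt h x := (hh.mono hIoo).continuousAt hnhds
  exact intervalIntegral.integral_hasDerivAt_right
    ((hh.mono (hK.uIcc_subset hc hxK)).intervalIntegrable)
    (ContinuousAt.stronglyMeasurableAtFilter isOpen_Ioo
      (fun z hz => (hh.mono hIoo).continuousAt ((isOpen_Ioo).mem_nhds hz)) x hx)
    hca

/-- Change of variables along a primitive. -/
lemma integral_comp_primitive {K : Set ℝ} (hK : K.OrdConnected) {h G : ℝ → ℝ} {c a b : ℝ}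
    (hc : c ∈ K) (ha : a ∈ K) (hb : b ∈ K) (hh : ContinuousOn h K)
    (hG : ContinuousOn G ((fun t => ∫ r in c..t, h r) '' Set.uIcc a b)) :
    ∫ x in a..b, h x * G (∫ r in c..x, h r)
      = ∫ u in (∫ r in c..a, h r)..(∫ r in c..b, h r), G u := by
  have hmin : min a b ∈ K := by rcases min_choice a b with h' | h' <;> rw [h'] <;> assumption
  have hmax : max a b ∈ K := by rcases max_choice a b with h' | h' <;> rw [h'] <;> assumption
  have := intervalIntegral.integral_comp_smul_deriv''
    (f := fun t => ∫ r in c..t, h r) (f' := h) (g := G) (a := a) (b := b)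
    (continuousOn_primitive_uIcc hK hc ha hb hh)
    (fun x hx => (hasDerivAt_primitive_of_mem hK hc hmin hmax hx hh).hasDerivWithinAt)
    (hh.mono (hK.uIcc_subset ha hb)) hG
  simpa [smul_eq_mul, Function.comp] using this

/-- Lemma 3.6: composition property of `Υ`.
Let `Z := Υ(X,f,c)`, with occupation density `L_Z = UpsLoc f X c J I L`.  Let `s ∈ J`,
`c' ∈ I`, and assume `f − L(s,·)` is positive on a subinterval `I'` of `I` containing `c'`
and the range of `(X_{s+u})_{u ≥ 0}`.  Then
`Υ(Z_{C_f(s)+·}, 1 − L_Z(C_f(s),·), η_{f,c}(c')) = Υ(X_{s+·}, f − L(s,·), c')`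
(same time domains and same values), and in particular at time `0`:
`∫_{η_{f,c}(c')}^{Z_{C_f(s)}} dr/(1 − L_Z(C_f(s),r)) = ∫_{c'}^{X_s} dr/(f(r) − L(s,r))`. -/
theorem ups_composition
    (I J : Set ℝ) (hI : I.OrdConnected) (hJ : J.OrdConnected) (h0J : (0:ℝ) ∈ J)
    (f : ℝ → ℝ) (hfc : ContinuousOn f I) (hfpos : ∀ x ∈ I, 0 < f x)
    (c : ℝ) (hc : c ∈ I)
    (X : ℝ → ℝ) (hXmaps : MapsTo X J I)
    (L : ℝ → ℝ → ℝ) (hXL : HasOccDensity J X L)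
    (hbound : ∀ x ∈ I, sSup ((fun t => L t x) '' J) ≤ f x)
    (s : ℝ) (hs : s ∈ J) (c' : ℝ) (hc' : c' ∈ I)
    (I' : Set ℝ) (hI' : I'.OrdConnected) (hI'I : I' ⊆ I) (hc'I' : c' ∈ I')
    (hXfut : ∀ u : ℝ, 0 ≤ u → s + u ∈ J → X (s + u) ∈ I')
    (hpos : ∀ y ∈ I', L s y < f y) :
    -- the shifted, transformed process and its data
    (∀ y ∈ eta f c '' I', UpsLoc f X c J I L (timeChange f X s) y < 1) ∧
    -- equality of the time domains of the two transformed processes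
    timeChange (fun y => 1 - UpsLoc f X c J I L (timeChange f X s) y)
        (fun u => Ups f X c J (timeChange f X s + u))
        '' {u : ℝ | 0 ≤ u ∧ timeChange f X s + u ∈ timeChange f X '' J}
      = timeChange (fun y => f y - L s y) (fun u => X (s + u))
          '' {u : ℝ | 0 ≤ u ∧ s + u ∈ J} ∧
    -- equality of the two transformed processes
    (∀ t ∈ timeChange (fun y => f y - L s y) (fun u => X (s + u))
        '' {u : ℝ | 0 ≤ u ∧ s + u ∈ J},
      Ups (fun y => 1 - UpsLoc f X c J I L (timeChange f X s) y)
          (fun u => Ups f X c J (timeChange f X s + u))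
          (eta f c c')
          {u : ℝ | 0 ≤ u ∧ timeChange f X s + u ∈ timeChange f X '' J} t
        = Ups (fun y => f y - L s y) (fun u => X (s + u)) c'
            {u : ℝ | 0 ≤ u ∧ s + u ∈ J} t) ∧
    -- the identity (3.4) at time 0
    eta (fun y => 1 - UpsLoc f X c J I L (timeChange f X s) y) (eta f c c')
        (eta f c (X s))
      = eta (fun y => f y - L s y) c' (X s) := by
  obtain ⟨hXc, hLc, hLmono, hLnonneg, -⟩ := hXL
  -- basic abbreviations
  set τ : ℝ → ℝ := Function.invFunOn (timeChange f X) J with hτdef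
  set iη : ℝ → ℝ := Function.invFunOn (eta f c) I with hiηdef
  -- basic positivity/continuity facts
  have hfne : ∀ x ∈ I, f x ≠ 0 := fun x hx => (hfpos x hx).ne'
  have hinvf : ContinuousOn (fun r => (f r)⁻¹) I := hfc.inv₀ hfne
  have hinvfpos : ∀ x ∈ I, 0 < (f x)⁻¹ := fun x hx => inv_pos.mpr (hfpos x hx)
  have hηmono : StrictMonoOn (eta f c) I :=
    strictMonoOn_primitive hI hc hinvf hinvfpos
  have hηinj : Set.InjOn (eta f c) I := hηmono.injOn
  have hiη : ∀ x ∈ I, iη (eta f c x) = x := fun x hx => hηinj.leftInvOn_invFunOn hx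
  -- the time-change integrand
  have hXcont : ContinuousOn (fun t => f (X t)) J := hfc.comp hXc hXmaps
  have hkc : ContinuousOn (fun t => ((f (X t)) ^ 2)⁻¹) J := by
    refine ContinuousOn.inv₀ (hXcont.pow 2) ?_
    exact fun t ht => pow_ne_zero 2 (hfne _ (hXmaps ht))
  have hkpos : ∀ t ∈ J, 0 < ((f (X t)) ^ 2)⁻¹ := fun t ht =>
    inv_pos.mpr (pow_pos (hfpos _ (hXmaps ht)) 2)
  have hTmono : StrictMonoOn (timeChange f X) J :=
    strictMonoOn_primitive hJ h0J hkc hkpos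
  have hτT : ∀ t ∈ J, τ (timeChange f X t) = t := fun t ht =>
    hTmono.injOn.leftInvOn_invFunOn ht
  -- continuity of L s ·
  have hLscont : Continuous (fun y => L s y) := by
    rw [← continuousOn_univ]
    exact hLc.comp ((continuous_const.prodMk continuous_id).continuousOn)
      (fun y _ => ⟨hs, mem_univ y⟩)
  have hgc : ContinuousOn (fun y => f y - L s y) I := hfc.sub hLscont.continuousOn
  have hgpos : ∀ y ∈ I', 0 < f y - L s y := fun y hy => sub_pos.mpr (hpos y hy)
  have hgne : ∀ y ∈ I', f y - L s y ≠ 0 := fun y hy => (hgpos y hy).ne'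
  have hXI' : ∀ t ∈ J, s ≤ t → X t ∈ I' := by
    intro t ht hst
    have h2 : s + (t - s) = t := by ring
    have := hXfut (t - s) (by linarith) (by rwa [h2])
    rwa [h2] at this
  -- value of f₁ along eta
  have hf₁val : ∀ x ∈ I', (1 : ℝ) - UpsLoc f X c J I L (timeChange f X s) (eta f c x)
      = (f x - L s x) / f x := by
    intro x hx
    have hxI := hI'I hx
    unfold UpsLoc
    rw [← hτdef, ← hiηdef, hτT s hs, hiη x hxI, sub_div, div_self (hfne x hxI)]
  have hf₁pos : ∀ x ∈ I',
      (0:ℝ) < 1 - UpsLoc f X c J I L (timeChange f X s) (eta f c x) := by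
    intro x hx
    rw [hf₁val x hx]
    exact div_pos (hgpos x hx) (hfpos x (hI'I hx))
  -- continuity of f₁ on images of compact subintervals of I'
  have hf₁contOn : ∀ a b : ℝ, a ∈ I' → b ∈ I' →
      ContinuousOn (fun y => 1 - UpsLoc f X c J I L (timeChange f X s) y)
        (eta f c '' Set.uIcc a b) := by
    intro a b ha hb
    have hsubI' : Set.uIcc a b ⊆ I' := hI'.uIcc_subset ha hb
    have hsubI : Set.uIcc a b ⊆ I := hsubI'.trans hI'I
    have hηc : ContinuousOn (eta f c) (Set.uIcc a b) :=
      continuousOn_primitive_uIcc hI hc (hI'I ha) (hI'I hb) hinvf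
    have hinj2 : Set.InjOn (eta f c) (Set.uIcc a b) := hηinj.mono hsubI
    have hinv2 := continuousOn_invFunOn_of_isCompact isCompact_uIcc hηc hinj2
    set inv' := Function.invFunOn (eta f c) (Set.uIcc a b) with hinv'def
    have hinv'maps : ∀ u ∈ eta f c '' Set.uIcc a b, inv' u ∈ Set.uIcc a b := by
      rintro u ⟨x, hx, rfl⟩; exact Function.invFunOn_apply_mem hx
    have hagree : ∀ u ∈ eta f c '' Set.uIcc a b, inv' u = iη u := by
      rintro u ⟨x, hx, rfl⟩
      rw [hiη x (hsubI hx)]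
      exact hinj2.leftInvOn_invFunOn hx
    have hmodel : ContinuousOn (fun u => 1 - L s (inv' u) / f (inv' u))
        (eta f c '' Set.uIcc a b) := by
      have h1 : ContinuousOn (fun u => L s (inv' u)) (eta f c '' Set.uIcc a b) :=
        hLscont.comp_continuousOn hinv2
      have h2 : ContinuousOn (fun u => f (inv' u)) (eta f c '' Set.uIcc a b) :=
        hfc.comp hinv2 (fun u hu => hsubI (hinv'maps u hu))
      exact continuousOn_const.sub
        (h1.div h2 (fun u hu => hfne _ (hsubI (hinv'maps u hu))))
    refine hmodel.congr ?_
    intro u hu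
    show 1 - UpsLoc f X c J I L (timeChange f X s) u = _
    unfold UpsLoc
    rw [← hτdef, ← hiηdef, hτT s hs]
    show 1 - L s (iη u) / f (iη u) = 1 - L s (inv' u) / f (inv' u)
    rw [hagree u hu]
  -- the key change-of-variables identity
  have key : ∀ y ∈ I',
      eta (fun y => 1 - UpsLoc f X c J I L (timeChange f X s) y) (eta f c c') (eta f c y)
        = eta (fun y => f y - L s y) c' y := by
    intro y hy
    have hyI := hI'I hy
    have hsubI' : Set.uIcc c' y ⊆ I' := hI'.uIcc_subset hc'I' hy
    have hG : ContinuousOn (fun u => ((1 : ℝ) - UpsLoc f X c J I L (timeChange f X s) u)⁻¹)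
        (eta f c '' Set.uIcc c' y) := by
      refine (hf₁contOn c' y hc'I' hy).inv₀ ?_
      rintro u ⟨x, hx, rfl⟩
      exact (hf₁pos x (hsubI' hx)).ne'
    have hsubst := integral_comp_primitive (K := I) (h := fun r => (f r)⁻¹)
      (G := fun u => ((1 : ℝ) - UpsLoc f X c J I L (timeChange f X s) u)⁻¹)
      (a := c') (b := y) hI hc hc' hyI hinvf hG
    have hEq : Set.EqOn
        (fun x => (f x)⁻¹ * ((1:ℝ) - UpsLoc f X c J I L (timeChange f X s) (eta f c x))⁻¹)
        (fun x => (f x - L s x)⁻¹) (Set.uIcc c' y) := by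
      intro x hx
      have hx' := hsubI' hx
      simp only
      rw [hf₁val x hx', inv_div, div_eq_mul_inv, ← mul_assoc,
        inv_mul_cancel₀ (hfne x (hI'I hx')), one_mul]
    calc eta (fun y => 1 - UpsLoc f X c J I L (timeChange f X s) y) (eta f c c') (eta f c y)
        = ∫ x in c'..y, (f x)⁻¹ *
            ((1:ℝ) - UpsLoc f X c J I L (timeChange f X s) (eta f c x))⁻¹ := hsubst.symm
      _ = ∫ x in c'..y, (f x - L s x)⁻¹ := intervalIntegral.integral_congr hEq
      _ = eta (fun y => f y - L s y) c' y := rfl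
  -- the shifted time domain
  set S' : Set ℝ := {u : ℝ | 0 ≤ u ∧ s + u ∈ J} with hS'def
  have hS'conn : S'.OrdConnected := by
    constructor
    intro w1 h1 w2 h2 z hz
    exact ⟨le_trans h1.1 hz.1, hJ.out h1.2 h2.2 ⟨by linarith [hz.1], by linarith [hz.2]⟩⟩
  have h0S' : (0:ℝ) ∈ S' := ⟨le_refl 0, by simpa using hs⟩
  have hXsw : ∀ w ∈ S', X (s + w) ∈ I' := fun w hw => hXfut w hw.1 hw.2
  have haddcont : ContinuousOn (fun w : ℝ => s + w) S' :=
    (continuous_const.add continuous_id).continuousOn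
  have hh'c : ContinuousOn (fun w => ((f (X (s + w))) ^ 2)⁻¹) S' :=
    hkc.comp haddcont (fun w hw => hw.2)
  have hXc' : ContinuousOn (fun w => X (s + w)) S' := hXc.comp haddcont (fun w hw => hw.2)
  have hgXc : ContinuousOn (fun w => f (X (s + w)) - L s (X (s + w))) S' :=
    hgc.comp hXc' (fun w hw => hXmaps hw.2)
  have hψint_pos : ∀ w ∈ S', 0 < ((f (X (s + w)) - L s (X (s + w))) ^ 2)⁻¹ := fun w hw =>
    inv_pos.mpr (pow_pos (hgpos _ (hXsw w hw)) 2)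
  have hψint_c : ContinuousOn (fun w => ((f (X (s + w)) - L s (X (s + w))) ^ 2)⁻¹) S' :=
    (hgXc.pow 2).inv₀ (fun w hw => pow_ne_zero 2 (hgne _ (hXsw w hw)))
  have hψmono : StrictMonoOn (timeChange (fun y => f y - L s y) (fun u => X (s + u))) S' :=
    strictMonoOn_primitive hS'conn h0S' hψint_c hψint_pos
  have hψinj : Set.InjOn (timeChange (fun y => f y - L s y) (fun u => X (s + u))) S' :=
    hψmono.injOn
  -- the elapsed time-change identity
  have hφF : ∀ w ∈ S', timeChange f X (s + w) - timeChange f X s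
      = ∫ x in (0:ℝ)..w, ((f (X (s + x))) ^ 2)⁻¹ := by
    intro w hw
    have h2 : (∫ x in (0:ℝ)..w, ((f (X (s + x))) ^ 2)⁻¹)
        = ∫ x in s..(s + w), ((f (X x)) ^ 2)⁻¹ := by
      have := intervalIntegral.integral_comp_add_left (a := (0:ℝ)) (b := w)
        (fun x => ((f (X x)) ^ 2)⁻¹) s
      simpa using this
    have h1 := primitive_add_of_ordConnected hJ h0J hs hw.2 hkc
    have h3 : timeChange f X (s + w)
        = timeChange f X s + ∫ x in s..(s + w), ((f (X x)) ^ 2)⁻¹ := h1.symm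
    rw [h3, add_sub_cancel_left]
    exact h2.symm
  -- the core identity: the composed time change computed along φ
  have hcore : ∀ w ∈ S',
      timeChange (fun y => 1 - UpsLoc f X c J I L (timeChange f X s) y)
          (fun u => Ups f X c J (timeChange f X s + u))
          (timeChange f X (s + w) - timeChange f X s)
        = timeChange (fun y => f y - L s y) (fun u => X (s + u)) w := by
    intro w hw
    have hw0 : 0 ≤ w := hw.1
    have hswJ : s + w ∈ J := hw.2
    have huIccS' : Set.uIcc 0 w ⊆ S' := hS'conn.uIcc_subset h0S' hw
    have hK₀J : Set.uIcc s (s + w) ⊆ J := hJ.uIcc_subset hs hswJ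
    have hK₀mem : ∀ t ∈ Set.uIcc s (s + w), s ≤ t := by
      intro t ht
      rw [Set.uIcc_of_le (by linarith : s ≤ s + w)] at ht
      exact ht.1
    have hXK₀I' : ∀ t ∈ Set.uIcc s (s + w), X t ∈ I' := fun t ht =>
      hXI' t (hK₀J ht) (hK₀mem t ht)
    have hTc : ContinuousOn (timeChange f X) (Set.uIcc s (s + w)) :=
      continuousOn_primitive_uIcc hJ h0J hs hswJ hkc
    have hTinj : Set.InjOn (timeChange f X) (Set.uIcc s (s + w)) := hTmono.injOn.mono hK₀J
    have hτc0 := continuousOn_invFunOn_of_isCompact isCompact_uIcc hTc hTinj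
    have hτagree : ∀ u ∈ timeChange f X '' Set.uIcc s (s + w),
        Function.invFunOn (timeChange f X) (Set.uIcc s (s + w)) u = τ u := by
      rintro u ⟨t, ht, rfl⟩
      rw [hτT t (hK₀J ht)]
      exact hTinj.leftInvOn_invFunOn ht
    have hτc : ContinuousOn τ (timeChange f X '' Set.uIcc s (s + w)) :=
      hτc0.congr (fun u hu => (hτagree u hu).symm)
    have hτmaps : ∀ u ∈ timeChange f X '' Set.uIcc s (s + w), τ u ∈ Set.uIcc s (s + w) := by
      rintro u ⟨t, ht, rfl⟩
      rw [hτT t (hK₀J ht)]; exact ht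
    -- compact hull of the X-image
    have hK₁comp : IsCompact (X '' Set.uIcc s (s + w)) :=
      isCompact_uIcc.image_of_continuousOn (hXc.mono hK₀J)
    have hK₁ne : (X '' Set.uIcc s (s + w)).Nonempty :=
      ⟨X s, Set.mem_image_of_mem X Set.left_mem_uIcc⟩
    have hmK : sInf (X '' Set.uIcc s (s + w)) ∈ X '' Set.uIcc s (s + w) :=
      hK₁comp.sInf_mem hK₁ne
    have hMK : sSup (X '' Set.uIcc s (s + w)) ∈ X '' Set.uIcc s (s + w) :=
      hK₁comp.sSup_mem hK₁ne
    have hmI' : sInf (X '' Set.uIcc s (s + w)) ∈ I' := by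
      obtain ⟨t, ht, heq⟩ := hmK; rw [← heq]; exact hXK₀I' t ht
    have hMI' : sSup (X '' Set.uIcc s (s + w)) ∈ I' := by
      obtain ⟨t, ht, heq⟩ := hMK; rw [← heq]; exact hXK₀I' t ht
    have hK₁sub : X '' Set.uIcc s (s + w)
        ⊆ Set.uIcc (sInf (X '' Set.uIcc s (s + w))) (sSup (X '' Set.uIcc s (s + w))) :=
      fun y hy => Set.Icc_subset_uIcc ⟨csInf_le hK₁comp.bddBelow hy, le_csSup hK₁comp.bddAbove hy⟩
    have huIccI' : Set.uIcc (sInf (X '' Set.uIcc s (s + w))) (sSup (X '' Set.uIcc s (s + w))) ⊆ I' :=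
      hI'.uIcc_subset hmI' hMI'
    have hηcmM : ContinuousOn (eta f c)
        (Set.uIcc (sInf (X '' Set.uIcc s (s + w))) (sSup (X '' Set.uIcc s (s + w)))) :=
      continuousOn_primitive_uIcc hI hc (hI'I hmI') (hI'I hMI') hinvf
    -- the image set A and continuity of the composed integrand G on it
    have hAmem : ∀ u ∈ (fun t => ∫ x in (0:ℝ)..t, ((f (X (s + x))) ^ 2)⁻¹) '' Set.uIcc 0 w,
        timeChange f X s + u ∈ timeChange f X '' Set.uIcc s (s + w) := by
      rintro u ⟨x, hx, rfl⟩
      have hxS' := huIccS' hx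
      refine ⟨s + x, ?_, ?_⟩
      · rw [Set.uIcc_of_le (by linarith : s ≤ s + w)]
        rw [Set.uIcc_of_le hw0] at hx
        exact ⟨by linarith [hx.1], by linarith [hx.2]⟩
      · show timeChange f X (s + x) = timeChange f X s + ∫ r in (0:ℝ)..x, ((f (X (s + r))) ^ 2)⁻¹
        rw [← hφF x hxS']; ring
    have haddc : ContinuousOn (fun u => timeChange f X s + u)
        ((fun t => ∫ x in (0:ℝ)..t, ((f (X (s + x))) ^ 2)⁻¹) '' Set.uIcc 0 w) :=
      (continuous_const.add continuous_id).continuousOn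
    have hXτc : ContinuousOn (fun u => X (τ (timeChange f X s + u)))
        ((fun t => ∫ x in (0:ℝ)..t, ((f (X (s + x))) ^ 2)⁻¹) '' Set.uIcc 0 w) :=
      (hXc.mono hK₀J).comp (hτc.comp haddc hAmem) (fun u hu => hτmaps _ (hAmem u hu))
    have hXτmaps : ∀ u ∈ (fun t => ∫ x in (0:ℝ)..t, ((f (X (s + x))) ^ 2)⁻¹) '' Set.uIcc 0 w,
        X (τ (timeChange f X s + u))
          ∈ Set.uIcc (sInf (X '' Set.uIcc s (s + w))) (sSup (X '' Set.uIcc s (s + w))) :=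
      fun u hu => hK₁sub ⟨_, hτmaps _ (hAmem u hu), rfl⟩
    have hX₁c : ContinuousOn (fun u => eta f c (X (τ (timeChange f X s + u))))
        ((fun t => ∫ x in (0:ℝ)..t, ((f (X (s + x))) ^ 2)⁻¹) '' Set.uIcc 0 w) :=
      hηcmM.comp hXτc hXτmaps
    have hf₁X₁c : ContinuousOn (fun u =>
        1 - UpsLoc f X c J I L (timeChange f X s) (eta f c (X (τ (timeChange f X s + u)))))
        ((fun t => ∫ x in (0:ℝ)..t, ((f (X (s + x))) ^ 2)⁻¹) '' Set.uIcc 0 w) :=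
      (hf₁contOn _ _ hmI' hMI').comp hX₁c (fun u hu => ⟨_, hXτmaps u hu, rfl⟩)
    have hGc : ContinuousOn (fun u =>
        ((1 - UpsLoc f X c J I L (timeChange f X s) (eta f c (X (τ (timeChange f X s + u))))) ^ 2)⁻¹)
        ((fun t => ∫ x in (0:ℝ)..t, ((f (X (s + x))) ^ 2)⁻¹) '' Set.uIcc 0 w) := by
      refine (hf₁X₁c.pow 2).inv₀ ?_
      intro u hu
      exact pow_ne_zero 2 (hf₁pos _ (huIccI' (hXτmaps u hu))).ne'
    -- the substitution
    have hsubst := integral_comp_primitive (K := S') (c := (0:ℝ)) (a := (0:ℝ)) (b := w)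
      (h := fun x => ((f (X (s + x))) ^ 2)⁻¹)
      (G := fun u =>
        ((1 - UpsLoc f X c J I L (timeChange f X s) (eta f c (X (τ (timeChange f X s + u))))) ^ 2)⁻¹)
      hS'conn h0S' h0S' hw hh'c hGc
    rw [intervalIntegral.integral_same] at hsubst
    have hEqOn : Set.EqOn
        (fun x => ((f (X (s + x))) ^ 2)⁻¹ *
          ((1 - UpsLoc f X c J I L (timeChange f X s)
            (eta f c (X (τ (timeChange f X s + ∫ r in (0:ℝ)..x, ((f (X (s + r))) ^ 2)⁻¹))))) ^ 2)⁻¹)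
        (fun x => ((f (X (s + x)) - L s (X (s + x))) ^ 2)⁻¹) (Set.uIcc 0 w) := by
      intro x hx
      have hxS' := huIccS' hx
      simp only
      rw [← hφF x hxS',
        show timeChange f X s + (timeChange f X (s + x) - timeChange f X s)
          = timeChange f X (s + x) by ring,
        hτT (s + x) hxS'.2, hf₁val _ (hXsw x hxS'),
        div_pow, inv_div, div_eq_mul_inv, ← mul_assoc,
        inv_mul_cancel₀ (pow_ne_zero 2 (hfne _ (hXmaps hxS'.2))), one_mul]
    rw [hφF w hw]
    exact hsubst.symm.trans (intervalIntegral.integral_congr hEqOn)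
  -- φ is nonnegative and S₁ is the image of S' under φ
  have hφpos : ∀ w ∈ S', 0 ≤ timeChange f X (s + w) - timeChange f X s := by
    intro w hw
    rcases eq_or_lt_of_le hw.1 with h | h
    · rw [← h]; simp
    · have := hTmono hs hw.2 (by linarith)
      linarith
  have hS₁eq : {u : ℝ | 0 ≤ u ∧ timeChange f X s + u ∈ timeChange f X '' J}
      = (fun w => timeChange f X (s + w) - timeChange f X s) '' S' := by
    ext u
    constructor
    · rintro ⟨hu0, t, htJ, hTt⟩
      have hst : s ≤ t := by
        by_contra hlt
        push_neg at hlt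
        have := hTmono htJ hs hlt
        linarith
      refine ⟨t - s, ⟨by linarith, by rwa [show s + (t - s) = t by ring]⟩, ?_⟩
      show timeChange f X (s + (t - s)) - timeChange f X s = u
      rw [show s + (t - s) = t by ring, hTt]
      ring
    · rintro ⟨w, hw, rfl⟩
      exact ⟨hφpos w hw, ⟨s + w, hw.2, by ring⟩⟩
  have hT₁inj : Set.InjOn
      (timeChange (fun y => 1 - UpsLoc f X c J I L (timeChange f X s) y)
        (fun u => Ups f X c J (timeChange f X s + u)))
      {u : ℝ | 0 ≤ u ∧ timeChange f X s + u ∈ timeChange f X '' J} := by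
    intro u1 hu1 u2 hu2 he
    rw [hS₁eq] at hu1 hu2
    obtain ⟨w1, hw1, rfl⟩ := hu1
    obtain ⟨w2, hw2, rfl⟩ := hu2
    simp only at he ⊢
    rw [hcore w1 hw1, hcore w2 hw2] at he
    rw [hψinj hw1 hw2 he]
  refine ⟨?_, ?_, ?_, ?_⟩
  · rintro y ⟨x, hx, rfl⟩
    have hxI := hI'I hx
    have h1 : UpsLoc f X c J I L (timeChange f X s) (eta f c x) = L s x / f x := by
      unfold UpsLoc
      rw [← hτdef, ← hiηdef, hτT s hs, hiη x hxI]
    rw [h1, div_lt_one (hfpos x hxI)]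
    exact hpos x hx
  · rw [hS₁eq, Set.image_image]
    exact Set.image_congr hcore
  · rintro t ⟨w, hw, rfl⟩
    have hφwS₁ : (timeChange f X (s + w) - timeChange f X s)
        ∈ {u : ℝ | 0 ≤ u ∧ timeChange f X s + u ∈ timeChange f X '' J} := by
      rw [hS₁eq]; exact ⟨w, hw, rfl⟩
    have hL1 : Function.invFunOn
        (timeChange (fun y => 1 - UpsLoc f X c J I L (timeChange f X s) y)
          (fun u => Ups f X c J (timeChange f X s + u)))
        {u : ℝ | 0 ≤ u ∧ timeChange f X s + u ∈ timeChange f X '' J}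
        (timeChange (fun y => f y - L s y) (fun u => X (s + u)) w)
        = timeChange f X (s + w) - timeChange f X s := by
      rw [← hcore w hw]
      exact hT₁inj.leftInvOn_invFunOn hφwS₁
    have hR : Function.invFunOn (timeChange (fun y => f y - L s y) (fun u => X (s + u))) S'
        (timeChange (fun y => f y - L s y) (fun u => X (s + u)) w) = w :=
      hψinj.leftInvOn_invFunOn hw
    have hX₁φ : Ups f X c J (timeChange f X s + (timeChange f X (s + w) - timeChange f X s))
        = eta f c (X (s + w)) := by
      rw [show timeChange f X s + (timeChange f X (s + w) - timeChange f X s)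
        = timeChange f X (s + w) by ring]
      unfold Ups
      rw [← hτdef, hτT (s + w) hw.2]
    show eta (fun y => 1 - UpsLoc f X c J I L (timeChange f X s) y) (eta f c c')
        (Ups f X c J (timeChange f X s +
          Function.invFunOn
            (timeChange (fun y => 1 - UpsLoc f X c J I L (timeChange f X s) y)
              (fun u => Ups f X c J (timeChange f X s + u)))
            {u : ℝ | 0 ≤ u ∧ timeChange f X s + u ∈ timeChange f X '' J}
            (timeChange (fun y => f y - L s y) (fun u => X (s + u)) w)))
      = eta (fun y => f y - L s y) c'
          (X (s + Function.invFunOn (timeChange (fun y => f y - L s y) (fun u => X (s + u))) S'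
            (timeChange (fun y => f y - L s y) (fun u => X (s + u)) w)))
    rw [hL1, hR, hX₁φ]
    exact key (X (s + w)) (hXsw w hw)
  · have h0 : X (s + 0) ∈ I' := hXfut 0 le_rfl (by simpa using hs)
    rw [add_zero] at h0
    exact key (X s) h0
end
end

section
/- (Lemma 3.7 of the paper: continuity of the transformation Υ.) Fix a pair (X, f) with X : [0,∞) → ℝ continuous, f : I → (0,∞) continuous on an interval I, and X_t ∈ I for all t ≥ 0. Let (X^n, f^n)_{n≥1} be such that X^n : [0, j_n) → ℝ with j_n ∈ (0,∞], f^n : I_n → (0,∞) on an interval I_n, and X^n_t ∈ I_n for all t ∈ [0, j_n). Assume: (i) X^n_0 = X_0 = 0 for all n, and ∫_0^{j_n} ds/f^n(X^n_s)^2 = ∫_0^∞ ds/f(X_s)^2 = ∞; (ii) j_n → ∞; (iii) X^n → X uniformly on every compact subset of [0,∞); (iv) for every compact K ⊆ [0,∞) there exists a compact L ⊆ ℝ such that, for n large enough, X(K) and X^n(K) are contained in L, L ⊆ I and L ⊆ I_n, and f^n → f uniformly on L. Then Υ(X^n, f^n, 0) converges to Υ(X, f, 0) uniformly on every compact subset of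 [0,∞). -/
open MeasureTheory Set Filter
open scoped ENNReal Topology

noncomputable section

/-- The time domain `[0, j)` of `Xⁿ`, where `j ∈ (0,∞]`. -/
def timeDom (j : ℝ≥0∞) : Set ℝ := {t : ℝ | 0 ≤ t ∧ ENNReal.ofReal t < j}

/- ### Auxiliary lemmas -/

lemma timeDom_top : timeDom ⊤ = Ici (0:ℝ) := by
  ext t; simp [timeDom, ENNReal.ofReal_lt_top]

lemma mem_timeDom_of_le {j : ℝ≥0∞} {b t : ℝ} (hb : b ∈ timeDom j) (h0 : 0 ≤ t) (h : t ≤ b) :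
    t ∈ timeDom j :=
  ⟨h0, lt_of_le_of_lt (ENNReal.ofReal_le_ofReal h) hb.2⟩

lemma zero_mem_timeDom {j : ℝ≥0∞} (hj : 0 < j) : (0:ℝ) ∈ timeDom j :=
  ⟨le_refl 0, by simpa using hj⟩

lemma timeDom_eq_iUnion {j : ℝ≥0∞} (hj : 0 < j) :
    ∃ b : ℕ → ℝ, Monotone b ∧ (∀ k, b k ∈ timeDom j) ∧ timeDom j = ⋃ k, Icc 0 (b k) := by
  rcases eq_or_ne j ⊤ with rfl | hfin
  · refine ⟨fun k => k, fun a b h => by simp only []; exact_mod_cast h,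
      fun k => ⟨Nat.cast_nonneg k, by simp⟩, ?_⟩
    ext t
    simp only [timeDom, mem_setOf_eq, ENNReal.ofReal_lt_top, and_true, mem_iUnion, mem_Icc]
    constructor
    · intro ht; obtain ⟨k, hk⟩ := exists_nat_gt t; exact ⟨k, ht, hk.le⟩
    · rintro ⟨k, h0, _⟩; exact h0
  · set r := j.toReal with hr
    have hr0 : 0 < r := ENNReal.toReal_pos hj.ne' hfin
    have hmem : ∀ t : ℝ, t ∈ timeDom j ↔ 0 ≤ t ∧ t < r := by
      intro t
      constructor
      · rintro ⟨h0, h1⟩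
        exact ⟨h0, by rwa [ENNReal.ofReal_lt_iff_lt_toReal h0 hfin] at h1⟩
      · rintro ⟨h0, h1⟩
        exact ⟨h0, by rwa [ENNReal.ofReal_lt_iff_lt_toReal h0 hfin]⟩
    refine ⟨fun k => r - r / (k + 2), ?_, ?_, ?_⟩
    · intro a b hab
      have : r / (b + 2) ≤ r / (a + 2) := by
        apply div_le_div_of_nonneg_left hr0.le (by positivity)
        have : (a:ℝ) ≤ b := Nat.cast_le.mpr hab
        linarith
      simp only []
      linarith
    · intro k
      rw [hmem]
      constructor
      · have h2 : r / (k + 2) ≤ r / 2 := by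
          apply div_le_div_of_nonneg_left hr0.le (by norm_num)
          have : (0:ℝ) ≤ k := Nat.cast_nonneg k
          linarith
        have : r / 2 ≤ r := by linarith
        linarith
      · have : 0 < r / (k + 2) := by positivity
        linarith
    · ext t
      rw [hmem]
      simp only [mem_iUnion, mem_Icc]
      constructor
      · rintro ⟨h0, h1⟩
        obtain ⟨k, hk⟩ := exists_nat_gt (r / (r - t))
        refine ⟨k, h0, ?_⟩
        have hrt : 0 < r - t := by linarith
        have hk2 : r / (r - t) < k + 2 := by
          have : (0:ℝ) ≤ k := Nat.cast_nonneg k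
          linarith
        have : r / (k + 2) < r - t := by
          rw [div_lt_iff₀ (by positivity)]
          rw [div_lt_iff₀ hrt] at hk2
          linarith [mul_comm (r - t) ((k:ℝ) + 2)]
        linarith
      · rintro ⟨k, h0, h1⟩
        have : 0 < r / (k + 2) := by positivity
        exact ⟨h0, by linarith⟩

section helper
variable {j : ℝ≥0∞} {g : ℝ → ℝ}

lemma tc_integrable (hgc : ContinuousOn g (timeDom j)) {a b : ℝ}
    (ha : a ∈ timeDom j) (hb : b ∈ timeDom j) (h0a : 0 ≤ a) :
    IntervalIntegrable g volume a b := by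
  apply ContinuousOn.intervalIntegrable
  apply hgc.mono
  intro x hx
  rcases le_total a b with hab | hab
  · rw [uIcc_of_le hab] at hx
    exact mem_timeDom_of_le hb (le_trans h0a hx.1) hx.2
  · rw [uIcc_of_ge hab] at hx
    exact mem_timeDom_of_le ha (le_trans hb.1 hx.1) hx.2

lemma tc_strictMonoOn (hj : 0 < j) (hgc : ContinuousOn g (timeDom j))
    (hgpos : ∀ s ∈ timeDom j, 0 < g s) :
    StrictMonoOn (fun t => ∫ s in (0:ℝ)..t, g s) (timeDom j) := by
  intro a ha b hb hab
  have h0 : (0:ℝ) ∈ timeDom j := zero_mem_timeDom hj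
  have hia : IntervalIntegrable g volume 0 a := tc_integrable hgc h0 ha le_rfl
  have hiab : IntervalIntegrable g volume a b := by
    apply ContinuousOn.intervalIntegrable
    apply hgc.mono
    intro x hx
    rw [uIcc_of_le hab.le] at hx
    exact mem_timeDom_of_le hb (le_trans ha.1 hx.1) hx.2
  have key : (∫ s in (0:ℝ)..b, g s) = (∫ s in (0:ℝ)..a, g s) + ∫ s in a..b, g s :=
    (intervalIntegral.integral_add_adjacent_intervals hia hiab).symm
  have hpos : 0 < ∫ s in a..b, g s := by
    apply intervalIntegral.intervalIntegral_pos_of_pos_on hiab _ hab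
    intro x hx
    exact hgpos x (mem_timeDom_of_le hb (le_trans ha.1 hx.1.le) hx.2.le)
  simp only []
  rw [key]; linarith

lemma tc_continuousOn (hgc : ContinuousOn g (timeDom j)) {b : ℝ}
    (hb : b ∈ timeDom j) :
    ContinuousOn (fun t => ∫ s in (0:ℝ)..t, g s) (Icc 0 b) := by
  have : IntegrableOn g (Icc 0 b) volume := by
    apply ContinuousOn.integrableOn_compact isCompact_Icc
    exact hgc.mono (fun x hx => mem_timeDom_of_le hb hx.1 hx.2)
  have h := intervalIntegral.continuousOn_primitive_Icc this
  apply h.congr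
  intro x hx
  simp only []
  rw [intervalIntegral.integral_of_le hx.1, integral_Icc_eq_integral_Ioc]

/-- surjectivity onto `[0,∞)` -/
lemma tc_surj (hj : 0 < j) (hgc : ContinuousOn g (timeDom j))
    (hgpos : ∀ s ∈ timeDom j, 0 < g s)
    (hdiv : ∫⁻ s in timeDom j, ENNReal.ofReal (g s) = ⊤)
    {t : ℝ} (ht : 0 ≤ t) :
    ∃ a ∈ timeDom j, (∫ s in (0:ℝ)..a, g s) = t := by
  obtain ⟨bs, hbmono, hbmem, hbeq⟩ := timeDom_eq_iUnion hj
  have hub : ∃ b ∈ timeDom j, t < ∫ s in (0:ℝ)..b, g s := by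
    by_contra hcon
    push_neg at hcon
    have hdir : Directed (· ⊆ ·) (fun k => Icc (0:ℝ) (bs k)) := by
      intro a b
      exact ⟨max a b, Icc_subset_Icc le_rfl (hbmono (le_max_left a b)),
        Icc_subset_Icc le_rfl (hbmono (le_max_right a b))⟩
    have hsup := hdiv
    rw [hbeq, setLIntegral_iUnion_of_directed _ hdir] at hsup
    have hbound : ∀ k, (∫⁻ s in Icc (0:ℝ) (bs k), ENNReal.ofReal (g s)) ≤ ENNReal.ofReal t := by
      intro k
      have hsub : Icc (0:ℝ) (bs k) ⊆ timeDom j :=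
        fun x hx => mem_timeDom_of_le (hbmem k) hx.1 hx.2
      have hint : IntegrableOn g (Icc (0:ℝ) (bs k)) volume :=
        ContinuousOn.integrableOn_compact isCompact_Icc (hgc.mono hsub)
      have hnn : 0 ≤ᵐ[volume.restrict (Icc (0:ℝ) (bs k))] g := by
        filter_upwards [ae_restrict_mem measurableSet_Icc] with x hx
        exact (hgpos x (hsub hx)).le
      rw [← ofReal_integral_eq_lintegral_ofReal hint hnn]
      apply ENNReal.ofReal_le_ofReal
      have hbk0 : 0 ≤ bs k := (hbmem k).1
      calc ∫ s in Icc (0:ℝ) (bs k), g s = ∫ s in (0:ℝ)..(bs k), g s := by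
            rw [intervalIntegral.integral_of_le hbk0, integral_Icc_eq_integral_Ioc]
        _ ≤ t := hcon (bs k) (hbmem k)
    have htop : (⊤:ℝ≥0∞) ≤ ENNReal.ofReal t := hsup ▸ iSup_le hbound
    exact absurd (top_le_iff.mp htop) ENNReal.ofReal_lt_top.ne
  obtain ⟨b, hbmem', hbt⟩ := hub
  have hcont : ContinuousOn (fun u => ∫ s in (0:ℝ)..u, g s) (Icc 0 b) :=
    tc_continuousOn hgc hbmem'
  have h0b : (0:ℝ) ≤ b := hbmem'.1
  have hivt := intermediate_value_Icc h0b hcont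
  have hmem : t ∈ Icc ((fun u => ∫ s in (0:ℝ)..u, g s) 0) ((fun u => ∫ s in (0:ℝ)..u, g s) b) := by
    simp only [intervalIntegral.integral_same]
    exact ⟨ht, hbt.le⟩
  obtain ⟨a, ha, hae⟩ := hivt hmem
  exact ⟨a, mem_timeDom_of_le hbmem' ha.1 ha.2, hae⟩

end helper

lemma inv_diff_bound {a b ℓ : ℝ} (hℓ : 0 < ℓ) (ha : ℓ ≤ a) (hb : ℓ ≤ b) :
    |a⁻¹ - b⁻¹| ≤ |a - b| / ℓ^2 := by
  have ha0 : 0 < a := lt_of_lt_of_le hℓ ha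
  have hb0 : 0 < b := lt_of_lt_of_le hℓ hb
  have h1 : a⁻¹ - b⁻¹ = (b - a) / (a * b) := by field_simp
  rw [h1, abs_div, abs_of_pos (mul_pos ha0 hb0), abs_sub_comm]
  exact div_le_div₀ (abs_nonneg _) le_rfl (by positivity) (by nlinarith)

lemma inv_sq_diff_bound {a b ℓ B : ℝ} (hℓ : 0 < ℓ) (ha : ℓ ≤ a) (hb : ℓ ≤ b)
    (haB : a ≤ B) (hbB : b ≤ B) :
    |(a^2)⁻¹ - (b^2)⁻¹| ≤ |a - b| * (2*B) / ℓ^4 := by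
  have ha0 : 0 < a := lt_of_lt_of_le hℓ ha
  have hb0 : 0 < b := lt_of_lt_of_le hℓ hb
  have h1 : (a^2)⁻¹ - (b^2)⁻¹ = ((b - a) * (b + a)) / (a^2 * b^2) := by
    field_simp; ring
  rw [h1, abs_div, abs_of_pos (by positivity : (0:ℝ) < a^2 * b^2), abs_mul]
  rw [abs_of_pos (by linarith : (0:ℝ) < b + a), abs_sub_comm]
  have hab : ℓ^2 ≤ a * b := by nlinarith
  have h4 : ℓ^4 ≤ a^2 * b^2 := by nlinarith
  apply div_le_div₀ (mul_nonneg (abs_nonneg _) (by linarith)) _ (by positivity) h4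
  have : 0 ≤ |a - b| := abs_nonneg _
  nlinarith

set_option maxHeartbeats 2000000

/-- Lemma 3.7: continuity of the transformation `Υ`.
Under assumptions (i)–(iv), `Υ(Xⁿ, fⁿ, 0)` converges to `Υ(X, f, 0)` uniformly on every
compact subset of `[0,∞)`. -/
theorem ups_continuity
    (I : Set ℝ) (hI : I.OrdConnected)
    (f X : ℝ → ℝ)
    (hfc : ContinuousOn f I) (hfpos : ∀ x ∈ I, 0 < f x)
    (hXc : ContinuousOn X (Ici 0)) (hXI : MapsTo X (Ici 0) I)
    (jn : ℕ → ℝ≥0∞) (hjpos : ∀ n, 0 < jn n)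
    (In : ℕ → Set ℝ) (hIn : ∀ n, (In n).OrdConnected)
    (fn Xn : ℕ → ℝ → ℝ)
    (hfnc : ∀ n, ContinuousOn (fn n) (In n)) (hfnpos : ∀ n, ∀ x ∈ In n, 0 < fn n x)
    (hXnc : ∀ n, ContinuousOn (Xn n) (timeDom (jn n)))
    (hXnI : ∀ n, MapsTo (Xn n) (timeDom (jn n)) (In n))
    -- (i) the processes start at 0 and the time changes have infinite total mass
    (hX0 : X 0 = 0) (hXn0 : ∀ n, Xn n 0 = 0)
    (hdivn : ∀ n, ∫⁻ s in timeDom (jn n), ENNReal.ofReal (((fn n (Xn n s)) ^ 2)⁻¹) = ⊤)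
    (hdiv : ∫⁻ s in Ici (0:ℝ), ENNReal.ofReal (((f (X s)) ^ 2)⁻¹) = ⊤)
    -- (ii) `jₙ → ∞`
    (hjtop : Tendsto jn atTop (𝓝 (⊤ : ℝ≥0∞)))
    -- (iii) `Xⁿ → X` uniformly on compact subsets of `[0,∞)`
    (hXunif : ∀ K : Set ℝ, IsCompact K → K ⊆ Ici 0 →
      TendstoUniformlyOn (fun n => Xn n) X atTop K)
    -- (iv) locally uniform convergence of `fⁿ` to `f` around the ranges
    (hfunif : ∀ K : Set ℝ, IsCompact K → K ⊆ Ici 0 →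
      ∃ Lc : Set ℝ, IsCompact Lc ∧ Lc ⊆ I ∧ X '' K ⊆ Lc ∧
        (∀ᶠ n in atTop, Lc ⊆ In n ∧ Xn n '' (K ∩ timeDom (jn n)) ⊆ Lc) ∧
        TendstoUniformlyOn fn f atTop Lc) :
    ∀ K : Set ℝ, IsCompact K → K ⊆ Ici 0 →
      TendstoUniformlyOn (fun n => Ups (fn n) (Xn n) 0 (timeDom (jn n)))
        (Ups f X 0 (Ici 0)) atTop K := by
  intro K hK hK0
  rcases K.eq_empty_or_nonempty with rfl | hne
  · exact tendstoUniformlyOn_empty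
  obtain ⟨T, hTK, hTub'⟩ := hK.exists_isMaxOn hne continuousOn_id
  have hTub : ∀ y ∈ K, y ≤ T := fun y hy => hTub' hy
  have hT0 : 0 ≤ T := hK0 hTK
  set g : ℝ → ℝ := fun s => ((f (X s)) ^ 2)⁻¹ with hgdef
  have hIci : Ici (0:ℝ) = timeDom ⊤ := timeDom_top.symm
  have hfX : ContinuousOn (fun s => f (X s)) (timeDom ⊤) := by
    rw [← hIci]; exact hfc.comp hXc hXI
  have hfXpos : ∀ s ∈ timeDom ⊤, 0 < f (X s) := by
    rw [← hIci]; exact fun s hs => hfpos _ (hXI hs)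
  have hgc : ContinuousOn g (timeDom ⊤) :=
    (hfX.pow 2).inv₀ (fun s hs => pow_ne_zero 2 (hfXpos s hs).ne')
  have hgpos : ∀ s ∈ timeDom ⊤, 0 < g s := fun s hs => by
    have := hfXpos s hs; positivity
  have hCdef : timeChange f X = fun t => ∫ s in (0:ℝ)..t, g s := rfl
  have hmemT : ∀ u : ℝ, 0 ≤ u → u ∈ timeDom ⊤ := fun u hu => ⟨hu, by simp⟩
  have hCmono : StrictMonoOn (timeChange f X) (timeDom ⊤) := by
    rw [hCdef]; exact tc_strictMonoOn (by simp) hgc hgpos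
  have hdiv' : ∫⁻ s in timeDom ⊤, ENNReal.ofReal (g s) = ⊤ := by rw [← hIci]; exact hdiv
  have hCsurj : ∀ t : ℝ, 0 ≤ t → ∃ a ∈ timeDom ⊤, timeChange f X a = t := by
    intro t ht
    rw [hCdef]
    exact tc_surj (by simp) hgc hgpos hdiv' ht
  -- inverse of the limit time change
  set A : ℝ → ℝ := fun t => Function.invFunOn (timeChange f X) (Ici 0) t with hAdef
  have hAfacts : ∀ t : ℝ, 0 ≤ t → A t ∈ Ici (0:ℝ) ∧ timeChange f X (A t) = t := by
    intro t ht
    obtain ⟨a, ha, hae⟩ := hCsurj t ht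
    rw [← hIci] at ha
    exact ⟨Function.invFunOn_mem ⟨a, ha, hae⟩, Function.invFunOn_eq ⟨a, ha, hae⟩⟩
  -- the uniform horizon S
  obtain ⟨S, hSmem, hCS⟩ := hCsurj (T + 1) (by linarith)
  have hS0 : 0 ≤ S := hSmem.1
  have hAle : ∀ t ∈ K, A t ≤ S := by
    intro t ht
    by_contra hc
    push_neg at hc
    have h1 := hCmono hSmem (hmemT _ (hAfacts t (hK0 ht)).1) hc
    rw [hCS, (hAfacts t (hK0 ht)).2] at h1
    have := hTub t ht
    linarith
  -- the compact range set
  have hK'c : IsCompact (Icc (0:ℝ) (S+1)) := isCompact_Icc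
  have hK'sub : Icc (0:ℝ) (S+1) ⊆ Ici 0 := fun x hx => hx.1
  obtain ⟨Lc, hLcComp, hLcI, hXLc, hEvLc, hfLc⟩ := hfunif (Icc 0 (S+1)) hK'c hK'sub
  have h0Lc : (0:ℝ) ∈ Lc := by
    have : X 0 ∈ Lc := hXLc ⟨0, ⟨le_rfl, by linarith⟩, rfl⟩
    rwa [hX0] at this
  have hLcNe : Lc.Nonempty := ⟨0, h0Lc⟩
  set m : ℝ := sInf Lc with hmdef
  set M : ℝ := sSup Lc with hMdef
  have hmLc : m ∈ Lc := hLcComp.sInf_mem hLcNe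
  have hMLc : M ∈ Lc := hLcComp.sSup_mem hLcNe
  have hLcmM : Lc ⊆ Icc m M := fun x hx =>
    ⟨csInf_le hLcComp.bddBelow hx, le_csSup hLcComp.bddAbove hx⟩
  have hmM : Icc m M ⊆ I := hI.out (hLcI hmLc) (hLcI hMLc)
  have hm0 : m ≤ 0 := csInf_le hLcComp.bddBelow h0Lc
  have hM0 : 0 ≤ M := le_csSup hLcComp.bddAbove h0Lc
  have hmMne : (Icc m M).Nonempty := ⟨0, hm0, hM0⟩
  -- bounds for f on Icc m M
  obtain ⟨z, hz, hzmin'⟩ := isCompact_Icc.exists_isMinOn hmMne (hfc.mono hmM)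
  have hzmin : ∀ y ∈ Icc m M, f z ≤ f y := fun y hy => hzmin' hy
  set c₁ : ℝ := f z with hc₁def
  have hc₁ : 0 < c₁ := hfpos z (hmM hz)
  have hflb : ∀ x ∈ Icc m M, c₁ ≤ f x := hzmin
  obtain ⟨w, hw, hwmax'⟩ := isCompact_Icc.exists_isMaxOn hmMne (hfc.mono hmM)
  have hwmax : ∀ y ∈ Icc m M, f y ≤ f w := fun y hy => hwmax' hy
  set B : ℝ := f w + 1 with hBdef
  have hfub : ∀ x ∈ Icc m M, f x ≤ B - 1 := by
    intro x hx; have := hwmax x hx; simp only [hBdef]; linarith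
  have hc₁B : c₁ ≤ B - 1 := hfub z hz
  set ℓ : ℝ := c₁ / 2 with hℓdef
  have hℓ : 0 < ℓ := by positivity
  set D : ℝ := max (-m) M with hDdef
  have hD0 : 0 ≤ D := le_trans hM0 (le_max_right _ _)
  have habs : ∀ x ∈ Icc m M, |x| ≤ D := by
    intro x hx
    rw [abs_le]
    constructor
    · have : -m ≤ D := le_max_left _ _; linarith [hx.1]
    · exact le_trans hx.2 (le_max_right _ _)
  set Cq : ℝ := 2 * B / ℓ^4 with hCqdef
  have hCq : 0 < Cq := by
    have : 0 < B := by linarith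
    positivity
  -- uniform continuity of X and f
  have hXuc := (hK'c.uniformContinuousOn_of_continuous (hXc.mono hK'sub))
  have hfuc := ((isCompact_Icc : IsCompact (Icc m M)).uniformContinuousOn_of_continuous
    (hfc.mono hmM))
  have hCcont : ContinuousOn (timeChange f X) (Icc 0 (S+1)) := by
    rw [hCdef]
    exact tc_continuousOn hgc ⟨by linarith, by simp⟩
  -- main estimate
  rw [Metric.tendstoUniformlyOn_iff]
  intro ε hε
  -- choose εA from uniform continuity of X
  obtain ⟨δX', hδX'pos, hδX'⟩ := Metric.uniformContinuousOn_iff.mp hXuc (ε * c₁ / 4)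
    (by positivity)
  set εA : ℝ := min (min δX' 1) (1/2 * δX') with hεAdef
  have hεA0 : 0 < εA := by positivity
  have hεA1 : εA ≤ 1 := le_trans (min_le_left _ _) (min_le_right _ _)
  have hεAδ : εA ≤ δX' := le_trans (min_le_left _ _) (min_le_left _ _)
  -- the moduli δ₂ δ₃ for the inverse estimate
  have hδ₂ : ∃ d : ℝ, 0 < d ∧ ∀ u ∈ Icc εA S,
      d ≤ timeChange f X u - timeChange f X (u - εA) := by
    rcases le_or_gt εA S with hAS | hAS
    · have hcont2 : ContinuousOn (fun u => timeChange f X u - timeChange f X (u - εA))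
          (Icc εA S) := by
        apply ContinuousOn.sub
        · exact hCcont.mono (Icc_subset_Icc (by linarith) (by linarith))
        · apply hCcont.comp (by fun_prop)
          intro u hu
          exact ⟨by simp only []; linarith [hu.1], by simp only []; linarith [hu.2]⟩
      obtain ⟨u₀, hu₀, hu₀min'⟩ := isCompact_Icc.exists_isMinOn ⟨εA, le_rfl, hAS⟩ hcont2
      have hu₀min : ∀ u ∈ Icc εA S, _ ≤ timeChange f X u - timeChange f X (u - εA) :=
        fun u hu => hu₀min' hu
      refine ⟨_, ?_, hu₀min⟩
      show 0 < timeChange f X u₀ - timeChange f X (u₀ - εA)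
      have : timeChange f X (u₀ - εA) < timeChange f X u₀ :=
        hCmono (hmemT _ (by linarith [hu₀.1, hεA0.le])) (hmemT _ (by linarith [hu₀.1, hεA0.le]))
          (by linarith)
      linarith
    · exact ⟨1, one_pos, fun u hu => absurd (le_trans hu.1 hu.2) (not_le.mpr hAS)⟩
  have hδ₃ : ∃ d : ℝ, 0 < d ∧ ∀ u ∈ Icc (0:ℝ) S,
      d ≤ timeChange f X (u + εA) - timeChange f X u := by
    have hcont3 : ContinuousOn (fun u => timeChange f X (u + εA) - timeChange f X u)
        (Icc 0 S) := by
      apply ContinuousOn.sub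
      · apply hCcont.comp (by fun_prop)
        intro u hu
        exact ⟨by simp only []; linarith [hu.1], by simp only []; linarith [hu.2]⟩
      · exact hCcont.mono (Icc_subset_Icc le_rfl (by linarith))
    obtain ⟨u₀, hu₀, hu₀min'⟩ := isCompact_Icc.exists_isMinOn ⟨0, le_rfl, hS0⟩ hcont3
    have hu₀min : ∀ u ∈ Icc (0:ℝ) S, _ ≤ timeChange f X (u + εA) - timeChange f X u :=
      fun u hu => hu₀min' hu
    refine ⟨_, ?_, hu₀min⟩
    show 0 < timeChange f X (u₀ + εA) - timeChange f X u₀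
    have : timeChange f X u₀ < timeChange f X (u₀ + εA) :=
      hCmono (hmemT _ (by linarith [hu₀.1, hεA0.le])) (hmemT _ (by linarith [hu₀.1, hεA0.le]))
        (by linarith)
    linarith
  obtain ⟨δ₂, hδ₂pos, hδ₂min⟩ := hδ₂
  obtain ⟨δ₃, hδ₃pos, hδ₃min⟩ := hδ₃
  set δh : ℝ := min δ₂ δ₃ with hδhdef
  have hδh : 0 < δh := lt_min hδ₂pos hδ₃pos
  set ρ : ℝ := δh / ((S + 2) * Cq) with hρdef
  have hρ : 0 < ρ := by
    apply div_pos hδh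
    apply mul_pos (by linarith) hCq
  -- modulus for f at ρ/2
  obtain ⟨γ₁, hγ₁pos, hγ₁⟩ := Metric.uniformContinuousOn_iff.mp hfuc (ρ/2) (by positivity)
  set γX : ℝ := min γ₁ (ε * c₁ / 4) with hγXdef
  have hγX0 : 0 < γX := lt_min hγ₁pos (by positivity)
  set βf : ℝ := min (min (c₁/2) 1) (min (ε * ℓ^2 / (2 * (D + 1))) (ρ/2)) with hβfdef
  have hβf0 : 0 < βf := by
    apply lt_min (lt_min (by positivity) one_pos)
    exact lt_min (by positivity) (by positivity)
  -- the eventual hypotheses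
  have hE2' : ∀ᶠ n in atTop, ENNReal.ofReal (S + 1) < jn n :=
    hjtop.eventually (eventually_gt_nhds (by simp [ENNReal.ofReal_lt_top]))
  have hE3' := Metric.tendstoUniformlyOn_iff.mp hfLc βf hβf0
  have hE4' := Metric.tendstoUniformlyOn_iff.mp (hXunif (Icc 0 (S+1)) hK'c hK'sub) γX hγX0
  filter_upwards [hEvLc, hE2', hE3', hE4'] with n hE1 hE2 hE3 hE4
  intro t htK
  have ht0 : 0 ≤ t := hK0 htK
  have htT : t ≤ T := by have := hTub t htK; simpa using this
  -- basic facts for index n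
  have hsub' : Icc (0:ℝ) (S+1) ⊆ timeDom (jn n) := by
    intro u hu
    exact ⟨hu.1, lt_of_le_of_lt (ENNReal.ofReal_le_ofReal hu.2) hE2⟩
  set gn : ℝ → ℝ := fun s => ((fn n (Xn n s)) ^ 2)⁻¹ with hgndef
  have hfXn : ContinuousOn (fun s => fn n (Xn n s)) (timeDom (jn n)) :=
    (hfnc n).comp (hXnc n) (hXnI n)
  have hfXnpos : ∀ s ∈ timeDom (jn n), 0 < fn n (Xn n s) :=
    fun s hs => hfnpos n _ (hXnI n hs)
  have hgnc : ContinuousOn gn (timeDom (jn n)) :=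
    (hfXn.pow 2).inv₀ (fun s hs => pow_ne_zero 2 (hfXnpos s hs).ne')
  have hgnpos : ∀ s ∈ timeDom (jn n), 0 < gn s := fun s hs => by
    have := hfXnpos s hs; positivity
  have hCndef : timeChange (fn n) (Xn n) = fun u => ∫ s in (0:ℝ)..u, gn s := rfl
  have hCnmono : StrictMonoOn (timeChange (fn n) (Xn n)) (timeDom (jn n)) := by
    rw [hCndef]; exact tc_strictMonoOn (hjpos n) hgnc hgnpos
  have hCnsurj : ∃ a ∈ timeDom (jn n), timeChange (fn n) (Xn n) a = t := by
    rw [hCndef]; exact tc_surj (hjpos n) hgnc hgnpos (hdivn n) ht0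
  set an : ℝ := Function.invFunOn (timeChange (fn n) (Xn n)) (timeDom (jn n)) t with handef
  have han_mem : an ∈ timeDom (jn n) := Function.invFunOn_mem hCnsurj
  have hCnan : timeChange (fn n) (Xn n) an = t := Function.invFunOn_eq hCnsurj
  -- membership facts
  have hAt := hAfacts t ht0
  have hAt0 : 0 ≤ A t := hAt.1
  have hCAt : timeChange f X (A t) = t := hAt.2
  have hAtS : A t ≤ S := hAle t htK
  -- range facts
  have hXnLc : ∀ s ∈ Icc (0:ℝ) (S+1), Xn n s ∈ Lc := by
    intro s hs
    exact hE1.2 ⟨s, ⟨hs, hsub' hs⟩, rfl⟩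
  have hXLc' : ∀ s ∈ Icc (0:ℝ) (S+1), X s ∈ Lc := fun s hs => hXLc ⟨s, hs, rfl⟩
  -- bounds for fn on Lc
  have hfnlb : ∀ x ∈ Lc, ℓ ≤ fn n x := by
    intro x hx
    have h1 := hE3 x hx
    rw [Real.dist_eq] at h1
    have h2 : c₁ ≤ f x := hflb x (hLcmM hx)
    have h3 : βf ≤ c₁/2 := le_trans (min_le_left _ _) (min_le_left _ _)
    have := abs_lt.mp h1
    simp only [hℓdef]
    linarith [this.1]
  have hfnub : ∀ x ∈ Lc, fn n x ≤ B := by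
    intro x hx
    have h1 := hE3 x hx
    rw [Real.dist_eq] at h1
    have h2 : f x ≤ B - 1 := hfub x (hLcmM hx)
    have h3 : βf ≤ 1 := le_trans (min_le_left _ _) (min_le_right _ _)
    have := abs_lt.mp h1
    linarith [this.1]
  have hflb' : ∀ x ∈ Lc, ℓ ≤ f x := by
    intro x hx
    have := hflb x (hLcmM hx)
    simp only [hℓdef]; linarith
  have hfub' : ∀ x ∈ Lc, f x ≤ B := by
    intro x hx
    have := hfub x (hLcmM hx); linarith
  -- the Cn - C uniform estimate
  set δq : ℝ := ρ * Cq * (S + 1) with hδqdef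
  have hδqδh : δq < δh := by
    have hCq0 : Cq ≠ 0 := ne_of_gt hCq
    have hS2 : S + 2 ≠ 0 := ne_of_gt (by linarith)
    have h1 : ρ * Cq = δh / (S + 2) := by
      rw [hρdef]
      field_simp
    have h2 : δq = δh * ((S+1)/(S+2)) := by rw [hδqdef, h1]; ring
    have h3 : (S+1)/(S+2) < 1 := by
      rw [div_lt_one (by linarith : (0:ℝ) < S + 2)]; linarith
    rw [h2]
    calc δh * ((S+1)/(S+2)) < δh * 1 := mul_lt_mul_of_pos_left h3 hδh
      _ = δh := mul_one δh
  have hCnC : ∀ u ∈ Icc (0:ℝ) (S+1),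
      |timeChange (fn n) (Xn n) u - timeChange f X u| ≤ δq := by
    intro u hu
    have hgi : IntervalIntegrable g volume 0 u := by
      apply ContinuousOn.intervalIntegrable
      apply hgc.mono
      rw [← hIci]
      rw [uIcc_of_le hu.1]
      exact fun x hx => hx.1
    have hgni : IntervalIntegrable gn volume 0 u := by
      apply ContinuousOn.intervalIntegrable
      apply hgnc.mono
      rw [uIcc_of_le hu.1]
      exact fun x hx => hsub' ⟨hx.1, le_trans hx.2 hu.2⟩
    have heq : timeChange (fn n) (Xn n) u - timeChange f X u
        = ∫ s in (0:ℝ)..u, (gn s - g s) := by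
      rw [hCndef, hCdef]
      simp only []
      rw [intervalIntegral.integral_sub hgni hgi]
    rw [heq]
    have hbd : ∀ s ∈ Set.uIoc (0:ℝ) u, ‖gn s - g s‖ ≤ ρ * Cq := by
      intro s hs
      rw [Set.uIoc_of_le hu.1] at hs
      have hs' : s ∈ Icc (0:ℝ) (S+1) := ⟨hs.1.le, le_trans hs.2 hu.2⟩
      have hXnsLc : Xn n s ∈ Lc := hXnLc s hs'
      have hXsLc : X s ∈ Lc := hXLc' s hs'
      have hdiff : |fn n (Xn n s) - f (X s)| ≤ ρ := by
        have h1 := hE3 (Xn n s) hXnsLc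
        rw [Real.dist_eq] at h1
        have h2 : dist (X s) (Xn n s) < γX := hE4 s hs'
        have h3 : dist (f (Xn n s)) (f (X s)) < ρ/2 := by
          apply hγ₁ _ (hLcmM hXnsLc) _ (hLcmM hXsLc)
          rw [dist_comm] at h2
          exact lt_of_lt_of_le h2 (min_le_left _ _)
        rw [Real.dist_eq] at h3
        have hβρ : βf ≤ ρ/2 := le_trans (min_le_right _ _) (min_le_right _ _)
        calc |fn n (Xn n s) - f (X s)|
            ≤ |fn n (Xn n s) - f (Xn n s)| + |f (Xn n s) - f (X s)| := abs_sub_le _ _ _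
          _ ≤ βf + ρ/2 := by
              rw [abs_sub_comm] at h1
              exact add_le_add h1.le h3.le
          _ ≤ ρ := by linarith
      have hkey := inv_sq_diff_bound hℓ (hfnlb _ hXnsLc) (hflb' _ hXsLc)
        (hfnub _ hXnsLc) (hfub' _ hXsLc)
      rw [Real.norm_eq_abs]
      calc |gn s - g s| ≤ |fn n (Xn n s) - f (X s)| * (2 * B) / ℓ^4 := hkey
        _ ≤ ρ * (2 * B) / ℓ^4 := by
            apply div_le_div_of_nonneg_right _ (by positivity)
            apply mul_le_mul_of_nonneg_right hdiff (by linarith)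
        _ = ρ * Cq := by rw [hCqdef]; ring
    have hnorm := intervalIntegral.norm_integral_le_of_norm_le_const hbd
    rw [Real.norm_eq_abs] at hnorm
    calc |∫ s in (0:ℝ)..u, (gn s - g s)| ≤ ρ * Cq * |u - 0| := hnorm
      _ ≤ ρ * Cq * (S+1) := by
          apply mul_le_mul_of_nonneg_left _ (by positivity)
          rw [sub_zero, abs_of_nonneg hu.1]
          exact hu.2
  -- the inverse estimate : |an - A t| < εA
  have hanAt : |an - A t| < εA := by
    have hAt1 : A t + εA ∈ Icc (0:ℝ) (S+1) := ⟨by linarith, by linarith⟩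
    have hupper : an < A t + εA := by
      by_contra hc
      push_neg at hc
      have hmem1 : A t + εA ∈ timeDom (jn n) := hsub' hAt1
      have h1 : timeChange (fn n) (Xn n) (A t + εA) ≤ timeChange (fn n) (Xn n) an := by
        rcases eq_or_lt_of_le hc with heq | hlt
        · rw [heq]
        · exact (hCnmono hmem1 han_mem hlt).le
      rw [hCnan] at h1
      have h2 := hCnC _ hAt1
      have h3 := hδ₃min (A t) ⟨hAt0, hAtS⟩
      rw [hCAt] at h3
      have h4 : δ₃ ≥ δh := le_min_iff.mp (le_refl δh) |>.2
      have := abs_le.mp h2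
      linarith [this.1, this.2]
    have hlower : A t - εA < an := by
      rcases lt_or_ge (A t) εA with hsmall | hbig
      · have : 0 ≤ an := han_mem.1
        linarith
      · have hx₀ : A t - εA ∈ Icc (0:ℝ) (S+1) := ⟨by linarith, by linarith⟩
        by_contra hc
        push_neg at hc
        have hmem1 : A t - εA ∈ timeDom (jn n) := hsub' hx₀
        have h1 : timeChange (fn n) (Xn n) an ≤ timeChange (fn n) (Xn n) (A t - εA) := by
          rcases eq_or_lt_of_le hc with heq | hlt
          · rw [heq]
          · exact (hCnmono han_mem hmem1 hlt).le
        rw [hCnan] at h1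
        have h2 := hCnC _ hx₀
        have h3 := hδ₂min (A t) ⟨hbig, hAtS⟩
        rw [hCAt] at h3
        have h4 : δ₂ ≥ δh := le_min_iff.mp (le_refl δh) |>.1
        have := abs_le.mp h2
        linarith [this.1, this.2]
    rw [abs_sub_lt_iff]
    constructor <;> linarith
  have han01 : an ∈ Icc (0:ℝ) (S+1) := by
    constructor
    · exact han_mem.1
    · have := abs_sub_lt_iff.mp hanAt
      linarith [this.1]
  -- the values
  set x : ℝ := X (A t) with hxdef
  set xn : ℝ := Xn n an with hxndef
  have hxLc : x ∈ Lc := hXLc' (A t) ⟨hAt0, by linarith⟩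
  have hxnLc : xn ∈ Lc := hXnLc an han01
  -- the interval between 0 and xn lies in Lc
  have huIccLc : Set.uIcc 0 xn ⊆ Lc := by
    have hIcc_an : Set.uIcc 0 an = Icc 0 an := uIcc_of_le han_mem.1
    have hcont : ContinuousOn (Xn n) (Set.uIcc 0 an) := by
      apply (hXnc n).mono
      rw [hIcc_an]
      intro u hu
      exact mem_timeDom_of_le han_mem hu.1 hu.2
    have hivt := intermediate_value_uIcc hcont
    have h0 : Xn n 0 = 0 := hXn0 n
    intro y hy
    rw [← h0] at hy
    obtain ⟨u, hu, huy⟩ := hivt hy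
    rw [hIcc_an] at hu
    have : u ∈ Icc (0:ℝ) (S+1) ∩ timeDom (jn n) :=
      ⟨⟨hu.1, le_trans hu.2 han01.2⟩, mem_timeDom_of_le han_mem hu.1 hu.2⟩
    exact huy ▸ hE1.2 ⟨u, ⟨this.1, this.2⟩, rfl⟩
  -- similarly the interval between 0 and x lies in Icc m M (we only need that)
  have hxmM : x ∈ Icc m M := hLcmM hxLc
  have hxnmM : xn ∈ Icc m M := hLcmM hxnLc
  have h0mM : (0:ℝ) ∈ Icc m M := ⟨hm0, hM0⟩
  have huIccmM : Set.uIcc xn x ⊆ Icc m M := by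
    rw [← uIcc_of_le (α := ℝ) (show m ≤ M by linarith [hxmM.1, hxmM.2])] at *
    exact uIcc_subset_uIcc hxnmM hxmM
  have huIcc0x : Set.uIcc 0 x ⊆ Icc m M := by
    rw [← uIcc_of_le (α := ℝ) (show m ≤ M by linarith [hxmM.1, hxmM.2])] at *
    exact uIcc_subset_uIcc h0mM hxmM
  have huIcc0xn : Set.uIcc 0 xn ⊆ Icc m M := subset_trans huIccLc hLcmM
  -- integrability of f⁻¹ and fn⁻¹
  have hfinv_c : ContinuousOn (fun r => (f r)⁻¹) (Icc m M) :=
    (hfc.mono hmM).inv₀ (fun r hr => (hfpos r (hmM hr)).ne')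
  have hfninv_c : ContinuousOn (fun r => (fn n r)⁻¹) Lc := by
    apply ContinuousOn.inv₀ ((hfnc n).mono hE1.1)
    exact fun r hr => (hfnpos n r (hE1.1 hr)).ne'
  have hfi0x : IntervalIntegrable (fun r => (f r)⁻¹) volume 0 x :=
    (hfinv_c.mono huIcc0x).intervalIntegrable
  have hfi0xn : IntervalIntegrable (fun r => (f r)⁻¹) volume 0 xn :=
    (hfinv_c.mono huIcc0xn).intervalIntegrable
  have hfni0xn : IntervalIntegrable (fun r => (fn n r)⁻¹) volume 0 xn :=
    (hfninv_c.mono huIccLc).intervalIntegrable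
  -- term 2 : |eta f 0 xn - eta (fn n) 0 xn|
  have hterm2 : |eta f 0 xn - eta (fn n) 0 xn| < ε / 2 := by
    have heq : eta f 0 xn - eta (fn n) 0 xn = ∫ r in (0:ℝ)..xn, ((f r)⁻¹ - (fn n r)⁻¹) := by
      rw [eta, eta, intervalIntegral.integral_sub hfi0xn hfni0xn]
    rw [heq]
    have hbd : ∀ r ∈ Set.uIoc (0:ℝ) xn, ‖(f r)⁻¹ - (fn n r)⁻¹‖ ≤ βf / ℓ^2 := by
      intro r hr
      have hrLc : r ∈ Lc := huIccLc (uIoc_subset_uIcc hr)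
      have h1 := hE3 r hrLc
      rw [Real.dist_eq] at h1
      rw [Real.norm_eq_abs]
      calc |(f r)⁻¹ - (fn n r)⁻¹| ≤ |f r - fn n r| / ℓ^2 :=
            inv_diff_bound hℓ (hflb' r hrLc) (hfnlb r hrLc)
        _ ≤ βf / ℓ^2 := by
            apply div_le_div_of_nonneg_right h1.le (by positivity)
    have hnorm := intervalIntegral.norm_integral_le_of_norm_le_const hbd
    rw [Real.norm_eq_abs] at hnorm
    have hxnD : |xn - 0| ≤ D := by rw [sub_zero]; exact habs xn hxnmM
    have hβD : βf ≤ ε * ℓ^2 / (2 * (D + 1)) :=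
      le_trans (min_le_right _ _) (min_le_left _ _)
    calc |∫ r in (0:ℝ)..xn, ((f r)⁻¹ - (fn n r)⁻¹)| ≤ βf / ℓ^2 * |xn - 0| := hnorm
      _ ≤ βf / ℓ^2 * D := by
          apply mul_le_mul_of_nonneg_left hxnD (by positivity)
      _ ≤ (ε * ℓ^2 / (2 * (D + 1))) / ℓ^2 * D := by
          apply mul_le_mul_of_nonneg_right _ hD0
          apply div_le_div_of_nonneg_right hβD (by positivity)
      _ = ε * D / (2 * (D + 1)) := by
          have hℓ2 : (ℓ^2 : ℝ) ≠ 0 := by positivity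
          rw [div_right_comm, mul_div_assoc, div_self hℓ2, mul_one, div_mul_eq_mul_div]
      _ < ε / 2 := by
          have hD1 : D + 1 ≠ 0 := by positivity
          have h1 : ε * D / (2 * (D + 1)) = (ε/2) * (D/(D+1)) := by
            rw [div_mul_div_comm]
          have h2 : D / (D+1) < 1 := (div_lt_one (by linarith)).mpr (by linarith)
          rw [h1]
          calc (ε/2) * (D/(D+1)) < (ε/2) * 1 := mul_lt_mul_of_pos_left h2 (by linarith)
            _ = ε/2 := mul_one _
  -- term 1 : |eta f 0 x - eta f 0 xn|
  have hterm1 : |eta f 0 x - eta f 0 xn| < ε / 2 := by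
    have heq : eta f 0 x - eta f 0 xn = ∫ r in xn..x, (f r)⁻¹ := by
      rw [eta, eta]
      exact intervalIntegral.integral_interval_sub_left hfi0x hfi0xn
    rw [heq]
    have hbd : ∀ r ∈ Set.uIoc xn x, ‖(f r)⁻¹‖ ≤ 1 / c₁ := by
      intro r hr
      have hrmM : r ∈ Icc m M := huIccmM (uIoc_subset_uIcc hr)
      have h1 : c₁ ≤ f r := hflb r hrmM
      rw [Real.norm_eq_abs, abs_of_pos (inv_pos.mpr (lt_of_lt_of_le hc₁ h1))]
      rw [one_div]
      exact inv_anti₀ hc₁ h1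
    have hnorm := intervalIntegral.norm_integral_le_of_norm_le_const hbd
    rw [Real.norm_eq_abs] at hnorm
    have hxxn : |x - xn| < ε * c₁ / 2 := by
      have h1 : dist (X (A t)) (X an) < ε * c₁ / 4 := by
        apply hδX' (A t) ⟨hAt0, by linarith⟩ an han01
        rw [Real.dist_eq, abs_sub_comm]
        exact lt_of_lt_of_le hanAt hεAδ
      have h2 : dist (X an) (Xn n an) < ε * c₁ / 4 := by
        have := hE4 an han01
        rw [dist_comm] at this ⊢
        exact lt_of_lt_of_le this (min_le_right _ _)
      rw [Real.dist_eq] at h1 h2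
      calc |x - xn| = |(X (A t) - X an) + (X an - xn)| := by
            rw [hxdef]; ring_nf
        _ ≤ |X (A t) - X an| + |X an - xn| := abs_add_le _ _
        _ < ε * c₁ / 4 + ε * c₁ / 4 := add_lt_add h1 h2
        _ = ε * c₁ / 2 := by ring
    calc |∫ r in xn..x, (f r)⁻¹| ≤ 1 / c₁ * |x - xn| := hnorm
      _ < 1 / c₁ * (ε * c₁ / 2) := by
          apply mul_lt_mul_of_pos_left hxxn (by positivity)
      _ = ε / 2 := by
          have hc : c₁ ≠ 0 := ne_of_gt hc₁
          field_simp
  -- conclusion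
  have hUps : Ups f X 0 (Ici 0) t = eta f 0 x := rfl
  have hUpsn : Ups (fn n) (Xn n) 0 (timeDom (jn n)) t = eta (fn n) 0 xn := rfl
  rw [hUps, hUpsn, Real.dist_eq]
  calc |eta f 0 x - eta (fn n) 0 xn|
      ≤ |eta f 0 x - eta f 0 xn| + |eta f 0 xn - eta (fn n) 0 xn| := abs_sub_le _ _ _
    _ < ε / 2 + ε / 2 := add_lt_add hterm1 hterm2
    _ = ε := by ring
end
end

section
/- (Scaling covariance of Υ, used in the proof of Theorem 5.7.) Let I ⊆ ℝ be an interval with 0 ∈ I, f : I → (0,∞) continuous, and X : J → I continuous on an interval J containing 0 with X_0 = 0. Fix a > 0, and set I_a := { x ∈ ℝ : x√a ∈ I }, f_a(r) := f(r√a) for r ∈ I_a, J_a := { t : at ∈ J }, and X^a_t := a^{−1/2} X_{at} for t ∈ J_a. Then for every t such that at ∈ C_f(J), Υ(X^a, f_a, 0)_t = a^{−1/2} · Υ(X, f, 0)_{at}. -/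
open MeasureTheory Set
open scoped ENNReal

noncomputable section

/-- scaling covariance of `Υ`, used in the proof of Theorem 5.7.
With `I_a = {x : x√a ∈ I}`, `f_a(r) = f(r√a)`, `J_a = {t : at ∈ J}` and
`X^a_t = a^{-1/2} X_{at}`, one has `Υ(X^a, f_a, 0)_t = a^{-1/2} Υ(X,f,0)_{at}` whenever
`at ∈ C_f(J)`. -/
theorem ups_scaling
    (I : Set ℝ) (hI : I.OrdConnected) (h0I : (0:ℝ) ∈ I)
    (f : ℝ → ℝ) (hfc : ContinuousOn f I) (hfpos : ∀ x ∈ I, 0 < f x)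
    (J : Set ℝ) (hJ : J.OrdConnected) (h0J : (0:ℝ) ∈ J)
    (X : ℝ → ℝ) (hXc : ContinuousOn X J) (hXmaps : MapsTo X J I) (hX0 : X 0 = 0)
    (a : ℝ) (ha : 0 < a) :
    ∀ t : ℝ, a * t ∈ timeChange f X '' J →
      Ups (fun r => f (r * Real.sqrt a)) (fun u => (Real.sqrt a)⁻¹ * X (a * u)) 0
          {u : ℝ | a * u ∈ J} t
        = (Real.sqrt a)⁻¹ * Ups f X 0 J (a * t) := by
  intro t hat
  have hsa : (0:ℝ) < Real.sqrt a := Real.sqrt_pos.mpr ha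
  have hsa' : Real.sqrt a ≠ 0 := ne_of_gt hsa
  have ha' : a ≠ 0 := ne_of_gt ha
  set g : ℝ → ℝ := fun s => ((f (X s)) ^ 2)⁻¹ with hg
  -- scaling of the time change
  have hTC : ∀ u : ℝ,
      timeChange (fun r => f (r * Real.sqrt a)) (fun u => (Real.sqrt a)⁻¹ * X (a * u)) u
        = a⁻¹ * timeChange f X (a * u) := by
    intro u
    unfold timeChange
    have h1 : ∀ s : ℝ, ((f ((Real.sqrt a)⁻¹ * X (a * s) * Real.sqrt a)) ^ 2)⁻¹
        = g (a * s) := by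
      intro s
      have : (Real.sqrt a)⁻¹ * X (a * s) * Real.sqrt a = X (a * s) := by
        field_simp
      rw [this]
    simp only [h1]
    rw [intervalIntegral.integral_comp_mul_left g ha']
    simp [hg, smul_eq_mul]
  -- scaling of eta
  have hEta : ∀ y : ℝ,
      eta (fun r => f (r * Real.sqrt a)) 0 ((Real.sqrt a)⁻¹ * y)
        = (Real.sqrt a)⁻¹ * eta f 0 y := by
    intro y
    unfold eta
    rw [intervalIntegral.integral_comp_mul_right (fun r => (f r)⁻¹) hsa']
    have h2 : (Real.sqrt a)⁻¹ * y * Real.sqrt a = y := by field_simp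
    rw [zero_mul, h2, smul_eq_mul]
  -- continuity / integrability of the integrand
  have hgcont : ContinuousOn g J := by
    apply ContinuousOn.inv₀
    · exact ((hfc.comp hXc hXmaps).pow 2)
    · intro s hs
      exact pow_ne_zero 2 (ne_of_gt (hfpos _ (hXmaps hs)))
  have hgint : ∀ r1 ∈ J, ∀ r2 ∈ J, IntervalIntegrable g volume r1 r2 := by
    intro r1 h1 r2 h2
    exact (hgcont.mono (hJ.uIcc_subset h1 h2)).intervalIntegrable
  -- strict monotonicity / injectivity of the time change on J
  have hmono : ∀ r1 ∈ J, ∀ r2 ∈ J, r1 < r2 → timeChange f X r1 < timeChange f X r2 := by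
    intro r1 h1 r2 h2 h12
    have hsub : ∫ s in r1..r2, g s > 0 := by
      apply intervalIntegral.intervalIntegral_pos_of_pos_on (hgint r1 h1 r2 h2)
      · intro x hx
        have hxJ : x ∈ J := hJ.uIcc_subset h1 h2 (by
          rw [uIcc_of_le (le_of_lt h12)]
          exact Ioo_subset_Icc_self hx)
        exact inv_pos.mpr (pow_pos (hfpos _ (hXmaps hxJ)) 2)
      · exact h12
    have : timeChange f X r2 - timeChange f X r1 = ∫ s in r1..r2, g s := by
      unfold timeChange
      exact intervalIntegral.integral_interval_sub_left (hgint 0 h0J r2 h2) (hgint 0 h0J r1 h1)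
    linarith
  have hinj : InjOn (timeChange f X) J := by
    intro r1 h1 r2 h2 heq
    rcases lt_trichotomy r1 r2 with h | h | h
    · exact absurd heq (ne_of_lt (hmono _ h1 _ h2 h))
    · exact h
    · exact absurd heq.symm (ne_of_lt (hmono _ h2 _ h1 h))
  -- the two inverse points
  obtain ⟨s, hsJ, hsC⟩ := hat
  set Ja : Set ℝ := {u : ℝ | a * u ∈ J} with hJa
  set fa : ℝ → ℝ := fun r => f (r * Real.sqrt a) with hfa
  set Xa : ℝ → ℝ := fun u => (Real.sqrt a)⁻¹ * X (a * u) with hXa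
  have hsaJ : s / a ∈ Ja := by
    simp only [hJa, mem_setOf_eq, mul_div_cancel₀ _ ha']
    exact hsJ
  have hexa : ∃ u ∈ Ja, timeChange fa Xa u = t := by
    refine ⟨s / a, hsaJ, ?_⟩
    rw [hTC, mul_div_cancel₀ _ ha', hsC]
    field_simp
  have hex : ∃ r ∈ J, timeChange f X r = a * t := ⟨s, hsJ, hsC⟩
  set u' := Function.invFunOn (timeChange fa Xa) Ja t with hu'
  set s' := Function.invFunOn (timeChange f X) J (a * t) with hs'
  have hu'J : u' ∈ Ja := Function.invFunOn_mem hexa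
  have hu'eq : timeChange fa Xa u' = t := Function.invFunOn_eq hexa
  have hs'J : s' ∈ J := Function.invFunOn_mem hex
  have hs'eq : timeChange f X s' = a * t := Function.invFunOn_eq hex
  have hau' : a * u' ∈ J := hu'J
  have hCau' : timeChange f X (a * u') = a * t := by
    have := hTC u'
    rw [hu'eq] at this
    field_simp at this
    linarith [this]
  have hmain : a * u' = s' := hinj hau' hs'J (by rw [hCau', hs'eq])
  -- conclusion
  unfold Ups
  rw [← hu', ← hs', hXa]
  simp only
  rw [hEta (X (a * u')), hmain]
end
end

section
/- (Deterministic content of the unnumbered proposition in Section 2: reconstruction of a flow from countably many flow lines.) Let 𝒮 = (S_{r,x}(a))_{r∈ℝ, x≥r, a≥0} be a collection of nonnegative real numbers such that: (i) S_{r,r}(a) = a for all r, a; (ii) for all r ≤ x, the map a ↦ S_{r,x}(a) is right-continuous; (iii) for all r' ≤ r ≤ x and a', a ≥ 0, S_{r',r}(a') > a implies S_{r',x}(a') ≥ S_{r,x}(a), and S_{r',r}(a') < a implies S_{r',x}(a') ≤ S_{r,x}(a). Let (r_n, a_n)_{n≥1} be a sequence in ℝ × [0,∞) with the density property: for every r ∈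 ℝ and every 0 ≤ a < a' there exists n with r_n ≤ r and S_{r_n,r}(a_n) ∈ (a, a'). Then for all x ≥ r and a ≥ 0, S_{r,x}(a) = inf{ S_{r_n,x}(a_n) : n such that r_n ≤ r and S_{r_n,r}(a_n) > a } (the set over which the infimum is taken being nonempty). -/
open Set

noncomputable section

/-- reconstruction of a flow from countably many flow lines;
deterministic content of the unnumbered proposition in Section 2.
Given a collection `S = (S_{r,x}(a))` satisfying the regularity conditions (i)–(iii)
and a sequence `(rₙ, aₙ)` with the density property, every value `S_{r,x}(a)` is the
infimum of the values `S_{rₙ,x}(aₙ)` over those `n` with `rₙ ≤ r` and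
`S_{rₙ,r}(aₙ) > a`. -/
theorem flow_from_countably_many_flow_lines
    (S : ℝ → ℝ → ℝ → ℝ)  -- S r x a
    (hnonneg : ∀ r x a, r ≤ x → 0 ≤ a → 0 ≤ S r x a)
    -- (i) identity at the starting level
    (hid : ∀ r a, 0 ≤ a → S r r a = a)
    -- (ii) right-continuity in the local time variable
    (hrc : ∀ r x, r ≤ x → ∀ a, 0 ≤ a →
      ContinuousWithinAt (fun b => S r x b) (Ici a) a)
    -- (iii) order preservation
    (horder : ∀ r' r x, r' ≤ r → r ≤ x → ∀ a' a, 0 ≤ a' → 0 ≤ a →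
      (a < S r' r a' → S r x a ≤ S r' x a') ∧ (S r' r a' < a → S r' x a' ≤ S r x a))
    -- the countable family of flow lines and its density property
    (rn an : ℕ → ℝ) (han : ∀ n, 0 ≤ an n)
    (hdense : ∀ r a a', 0 ≤ a → a < a' →
      ∃ n, rn n ≤ r ∧ S (rn n) r (an n) ∈ Ioo a a') :
    ∀ r x a, r ≤ x → 0 ≤ a →
      {n : ℕ | rn n ≤ r ∧ a < S (rn n) r (an n)}.Nonempty ∧
      S r x a = sInf ((fun n => S (rn n) x (an n)) ''
        {n : ℕ | rn n ≤ r ∧ a < S (rn n) r (an n)}) := by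
  intro r x a hrx ha
  -- nonemptiness
  obtain ⟨n₀, hn₀r, hn₀⟩ := hdense r a (a + 1) ha (by linarith)
  have hne : {n : ℕ | rn n ≤ r ∧ a < S (rn n) r (an n)}.Nonempty :=
    ⟨n₀, hn₀r, hn₀.1⟩
  refine ⟨hne, ?_⟩
  -- lower bound
  have hlb : ∀ y ∈ (fun n => S (rn n) x (an n)) ''
      {n : ℕ | rn n ≤ r ∧ a < S (rn n) r (an n)}, S r x a ≤ y := by
    rintro y ⟨n, ⟨hnr, hna⟩, rfl⟩
    exact (horder (rn n) r x hnr hrx (an n) a (han n) ha).1 hna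
  refine le_antisymm (le_csInf (hne.image _) hlb) ?_
  -- upper bound: for every ε > 0, sInf ≤ S r x a + ε
  refine le_of_forall_pos_le_add ?_
  intro ε hε
  have hrc' := hrc r x hrx a ha
  have hev : ∀ᶠ b in nhdsWithin a (Ici a), S r x b < S r x a + ε := by
    have := hrc'.eventually (eventually_lt_nhds (show S r x a < S r x a + ε by linarith))
    exact this
  have hev' : ∀ᶠ b in nhdsWithin a (Ioi a), S r x b < S r x a + ε :=
    hev.filter_mono (nhdsWithin_mono a Ioi_subset_Ici_self)
  have hmem : ∀ᶠ b in nhdsWithin a (Ioi a), a < b :=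
    eventually_mem_nhdsWithin
  obtain ⟨b, hb, hab⟩ := (hev'.and hmem).exists
  -- density gives n with S (rn n) r (an n) ∈ (a, b)
  obtain ⟨n, hnr, hn⟩ := hdense r a b ha hab
  have hle : S (rn n) x (an n) ≤ S r x b :=
    (horder (rn n) r x hnr hrx (an n) b (han n) (le_of_lt (ha.trans_lt hab))).2 hn.2
  have hmem' : S (rn n) x (an n) ∈ (fun n => S (rn n) x (an n)) ''
      {n : ℕ | rn n ≤ r ∧ a < S (rn n) r (an n)} := ⟨n, ⟨hnr, hn.1⟩, rfl⟩
  have hbdd : BddBelow ((fun n => S (rn n) x (an n)) ''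
      {n : ℕ | rn n ≤ r ∧ a < S (rn n) r (an n)}) := ⟨S r x a, hlb⟩
  calc sInf _ ≤ S (rn n) x (an n) := csInf_le hbdd hmem'
    _ ≤ S r x b := hle
    _ ≤ S r x a + ε := le_of_lt hb
end
end

section
/- (Lemma 4.12, deterministic form: duality is preserved by the space–time transformation Ψ.) Let I ⊆ ℝ be an interval with 0 ∈ I, and let 𝒮 = (S_{r,x}(a))_{r,x∈I, a≥0} be a family of nonnegative numbers satisfying the duality property: for all r, x ∈ I and a ≥ 0 with a < f(r), S_{r,x}(a) = inf{ b ≥ 0 : S_{x,r}(b) > a }, where f(x) := S_{0,x}(b_0) for some fixed b_0 > 0, f is assumed positive on I, and moreover S_{r,x}(a) ≤ f(x) for all a ∈ [0, f(r)] and S_{r,x}(f(r)) = f(x) for all r, x ∈ I. Set η(x) := ∫_0^x dr/f(r) and, for s, t ∈ η(I) and v ∈ [0,1], define Y_{s,t}(v) := S_{η^{−1}(s), η^{−1}(t)}(v · f(η^{−1}(s))) / f(η^{−1}(t)). Then for all s, t ∈ η(I) and v ∈ [0,1], Y_{s,t}(v) = inf{ u ∈ [0,1] : Y_{t,s}(u)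 > v } ∧ 1. -/
open MeasureTheory Set
open scoped ENNReal

noncomputable section

/-- `η(x) = ∫_0^x dr / f(r)`. -/
def eta0 (f : ℝ → ℝ) (x : ℝ) : ℝ := ∫ r in (0:ℝ)..x, (f r)⁻¹

/-- The flow `Y = Ψ(S,f)`:
`Y_{s,t}(v) = S_{η⁻¹(s), η⁻¹(t)}(v f(η⁻¹(s))) / f(η⁻¹(t))`. -/
def PsiFlow (S : ℝ → ℝ → ℝ → ℝ) (f : ℝ → ℝ) (I : Set ℝ) (s t v : ℝ) : ℝ :=
  S (Function.invFunOn (eta0 f) I s) (Function.invFunOn (eta0 f) I t)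
      (v * f (Function.invFunOn (eta0 f) I s))
    / f (Function.invFunOn (eta0 f) I t)

/-- Lemma 4.12, deterministic form: duality is preserved by the
space–time transformation `Ψ`. If `S` satisfies the duality property with respect to
`f = S_{0,·}(b₀)`, together with the normalizations `S_{r,x}(a) ≤ f(x)` for
`a ∈ [0,f(r)]` and `S_{r,x}(f(r)) = f(x)`, then the flow `Y = Ψ(S,f)` satisfies
`Y_{s,t}(v) = inf{ u ∈ [0,1] : Y_{t,s}(u) > v } ∧ 1` for all `s, t ∈ η(I)`,
`v ∈ [0,1]` (the empty infimum being `+∞`). -/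
theorem psi_preserves_duality
    (I : Set ℝ) (hI : I.OrdConnected) (h0I : (0:ℝ) ∈ I)
    (S : ℝ → ℝ → ℝ → ℝ) (b₀ : ℝ) (hb₀ : 0 < b₀)
    (f : ℝ → ℝ) (hf : ∀ x, f x = S 0 x b₀)
    (hfc : ContinuousOn f I) (hfpos : ∀ x ∈ I, 0 < f x)
    -- duality property (equation (2.6) of the paper)
    (hdual : ∀ r ∈ I, ∀ x ∈ I, ∀ a : ℝ, 0 ≤ a → a < f r →
      S r x a = sInf {b : ℝ | 0 ≤ b ∧ a < S x r b})
    -- normalizations: the flow is dominated by `f` and frozen at `f`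
    (hle : ∀ r ∈ I, ∀ x ∈ I, ∀ a : ℝ, 0 ≤ a → a ≤ f r → S r x a ≤ f x)
    (htop : ∀ r ∈ I, ∀ x ∈ I, S r x (f r) = f x) :
    ∀ s ∈ eta0 f '' I, ∀ t ∈ eta0 f '' I, ∀ v ∈ Icc (0:ℝ) 1,
      ENNReal.ofReal (PsiFlow S f I s t v)
        = min (sInf {u : ℝ≥0∞ | ∃ w : ℝ, w ∈ Icc (0:ℝ) 1 ∧ v < PsiFlow S f I t s w ∧
            u = ENNReal.ofReal w}) 1 := by
  intro s hs t ht v hv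
  set r := Function.invFunOn (eta0 f) I s with hr_def
  set x := Function.invFunOn (eta0 f) I t with hx_def
  have hrI : r ∈ I := Function.invFunOn_mem hs
  have hxI : x ∈ I := Function.invFunOn_mem ht
  have hfr : 0 < f r := hfpos r hrI
  have hfx : 0 < f x := hfpos x hxI
  obtain ⟨hv0, hv1⟩ := hv
  have hset : {u : ℝ≥0∞ | ∃ w : ℝ, w ∈ Icc (0:ℝ) 1 ∧ v < PsiFlow S f I t s w ∧
      u = ENNReal.ofReal w}
      = ENNReal.ofReal '' {w : ℝ | w ∈ Icc (0:ℝ) 1 ∧ v < S x r (w * f x) / f r} := by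
    ext u
    simp only [Set.mem_setOf_eq, Set.mem_image, PsiFlow, ← hr_def, ← hx_def]
    constructor
    · rintro ⟨w, h1, h2, rfl⟩; exact ⟨w, ⟨h1, h2⟩, rfl⟩
    · rintro ⟨w, ⟨h1, h2⟩, rfl⟩; exact ⟨w, h1, h2, rfl⟩
  rw [hset]
  set B := {w : ℝ | w ∈ Icc (0:ℝ) 1 ∧ v < S x r (w * f x) / f r} with hBdef
  have hPsi : PsiFlow S f I s t v = S r x (v * f r) / f x := rfl
  rcases eq_or_lt_of_le hv1 with hv1' | hv1'
  · -- v = 1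
    subst hv1'
    have hBempty : B = (∅ : Set ℝ) := by
      ext w
      simp only [hBdef, Set.mem_setOf_eq, Set.mem_empty_iff_false, iff_false, not_and,
        Set.mem_Icc]
      rintro ⟨hw0, hw1⟩ hlt
      have h1 : S x r (w * f x) ≤ f r :=
        hle x hxI r hrI _ (by positivity) (by nlinarith)
      have h2 : S x r (w * f x) / f r ≤ 1 := by
        rw [div_le_one hfr]; exact h1
      exact absurd hlt (not_lt.mpr h2)
    have hLHS : PsiFlow S f I s t 1 = 1 := by
      rw [hPsi, one_mul, htop r hrI x hxI, div_self hfx.ne']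
    rw [hLHS, hBempty]
    simp
  · -- v < 1
    have hAdef := hdual r hrI x hxI (v * f r) (by positivity) (by nlinarith)
    set A := {b : ℝ | 0 ≤ b ∧ v * f r < S x r b} with hA
    have hfxA : f x ∈ A := ⟨hfx.le, by rw [htop x hxI r hrI]; nlinarith⟩
    have hAne : A.Nonempty := ⟨f x, hfxA⟩
    have hAbdd : BddBelow A := ⟨0, fun b hb => hb.1⟩
    have h1B : (1:ℝ) ∈ B := by
      refine ⟨⟨zero_le_one, le_refl 1⟩, ?_⟩
      rw [one_mul, htop x hxI r hrI, div_self hfr.ne']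
      exact hv1'
    have hBne : B.Nonempty := ⟨1, h1B⟩
    have hBbdd : BddBelow B := ⟨0, fun w hw => hw.1.1⟩
    have hmemB : ∀ w : ℝ, w ∈ B ↔ w ∈ Icc (0:ℝ) 1 ∧ (w * f x) ∈ A := by
      intro w
      simp only [hBdef, hA, Set.mem_setOf_eq, Set.mem_Icc]
      constructor
      · rintro ⟨h1, h2⟩
        exact ⟨h1, mul_nonneg h1.1 hfx.le, (lt_div_iff₀ hfr).mp h2⟩
      · rintro ⟨h1, _, h3⟩
        exact ⟨h1, (lt_div_iff₀ hfr).mpr h3⟩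
    have key : sInf B = S r x (v * f r) / f x := by
      rw [hAdef]
      apply le_antisymm
      · rw [le_div_iff₀ hfx]
        apply le_csInf hAne
        intro b hb
        rw [← le_div_iff₀ hfx]
        rcases le_or_gt b (f x) with hbfx | hbfx
        · apply csInf_le hBbdd
          rw [hmemB]
          refine ⟨⟨div_nonneg hb.1 hfx.le, by rw [div_le_one hfx]; exact hbfx⟩, ?_⟩
          rwa [div_mul_cancel₀ _ hfx.ne']
        · have h1 : sInf B ≤ 1 := csInf_le hBbdd h1B
          have h2 : (1:ℝ) ≤ b / f x := (one_le_div hfx).mpr hbfx.le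
          linarith
      · apply le_csInf hBne
        intro w hw
        rw [div_le_iff₀ hfx]
        exact csInf_le hAbdd ((hmemB w).mp hw).2
    have hB0 : 0 ≤ sInf B := le_csInf hBne fun w hw => hw.1.1
    have hB1 : sInf B ≤ 1 := csInf_le hBbdd h1B
    have himg : sInf (ENNReal.ofReal '' B) = ENNReal.ofReal (sInf B) :=
      (Monotone.map_csInf_of_continuousAt ENNReal.continuous_ofReal.continuousAt
        (fun a b hab => ENNReal.ofReal_le_ofReal hab) hBne hBbdd).symm
    rw [himg, hPsi, ← key, min_eq_left]
    rw [← ENNReal.ofReal_one]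
    exact ENNReal.ofReal_le_ofReal hB1
end
end

section
/- (Well-definedness of H_t in the proof of Theorem 5.10: the quantity R_t(x) − x − ∫_0^t 1_{{R_s(x) > 0}} ds does not depend on x.) Let Ẑ : [0,∞) → ℝ be continuous with Ẑ_0 = 0, admitting an occupation density L̂. For t ≥ 0 and x ∈ ℝ define R_t(x) := ∫_{Ẑ_t}^x (1 + L̂(t,y)) dy. Then for every t ≥ 0 and s ≥ 0, R_s(x) > 0 if and only if Ẑ_s < x; moreover ∫_0^t 1_{{Ẑ_s < x}} ds = ∫_{−∞}^x L̂(t,y) dy, and for every x ∈ ℝ, R_t(x) − x − ∫_0^t 1_{{R_s(x) > 0}} ds = −Ẑ_t − ∫_{−∞}^{Ẑ_t} L̂(t,y) dy (all integrals being finite). In particular the left-hand side does not depend on x. -/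
open MeasureTheory Set
open scoped ENNReal

noncomputable section

/-- The Bass–Burdzy-type flow `R_t(x) = ∫_{Ẑ_t}^x (1 + L̂(t,y)) dy`. -/
def BBflow (Zh : ℝ → ℝ) (Lh : ℝ → ℝ → ℝ) (t x : ℝ) : ℝ :=
  ∫ y in (Zh t)..x, (1 + Lh t y)

lemma cont_slice (Lh : ℝ → ℝ → ℝ)
    (hLc : ContinuousOn (fun p : ℝ × ℝ => Lh p.1 p.2) (Ici 0 ×ˢ (univ : Set ℝ)))
    {t : ℝ} (ht : 0 ≤ t) : Continuous (fun y => Lh t y) := by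
  rw [← continuousOn_univ]
  exact hLc.comp ((continuous_const.prodMk continuous_id).continuousOn)
    (fun y _ => ⟨ht, trivial⟩)

/-- well-definedness of `H_t` in the proof of Theorem 5.10.
For all `s ≥ 0` and `x`, `R_s(x) > 0 ↔ Ẑ_s < x`; moreover
`∫_0^t 1_{Ẑ_s < x} ds = ∫_{−∞}^x L̂(t,y) dy`, and
`R_t(x) − x − ∫_0^t 1_{R_s(x) > 0} ds = −Ẑ_t − ∫_{−∞}^{Ẑ_t} L̂(t,y) dy`
for every `x`, all integrals being finite.  In particular the left-hand side does not
depend on `x`. -/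
theorem BBflow_well_defined
    (Zh : ℝ → ℝ) (Lh : ℝ → ℝ → ℝ)
    (hZc : ContinuousOn Zh (Ici 0)) (hZ0 : Zh 0 = 0)
    (hZL : HasOccDensity (Ici 0) Zh Lh) :
    (∀ s : ℝ, 0 ≤ s → ∀ x : ℝ, (0 < BBflow Zh Lh s x ↔ Zh s < x)) ∧
    (∀ t : ℝ, 0 ≤ t → ∀ x : ℝ,
      IntegrableOn (fun y => Lh t y) (Iic x) volume ∧
      volume {s | s ∈ Ioc 0 t ∧ Zh s < x} = ENNReal.ofReal (∫ y in Iic x, Lh t y)) ∧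
    (∀ t : ℝ, 0 ≤ t → ∀ x : ℝ,
      volume {s | s ∈ Ioc 0 t ∧ 0 < BBflow Zh Lh s x} < ⊤ ∧
      BBflow Zh Lh t x - x - (volume {s | s ∈ Ioc 0 t ∧ 0 < BBflow Zh Lh s x}).toReal
        = - Zh t - ∫ y in Iic (Zh t), Lh t y) := by
  obtain ⟨hZc', hLc, hLmono, hLnn, hocc⟩ := hZL
  -- continuity of slices
  have hcont : ∀ {t : ℝ}, 0 ≤ t → Continuous (fun y => Lh t y) :=
    fun ht => cont_slice Lh hLc ht
  -- Part 1
  have part1 : ∀ s : ℝ, 0 ≤ s → ∀ x : ℝ, (0 < BBflow Zh Lh s x ↔ Zh s < x) := by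
    intro s hs x
    have hci : Continuous (fun y => 1 + Lh s y) := continuous_const.add (hcont hs)
    constructor
    · intro hpos
      by_contra hle
      push_neg at hle
      have h0 : (0:ℝ) ≤ ∫ y in x..(Zh s), (1 + Lh s y) :=
        intervalIntegral.integral_nonneg hle
          (fun y _ => by have := hLnn s hs y; linarith)
      have : BBflow Zh Lh s x = - ∫ y in x..(Zh s), (1 + Lh s y) := by
        rw [BBflow, intervalIntegral.integral_symm]
      rw [this] at hpos; linarith
    · intro hlt
      exact intervalIntegral.intervalIntegral_pos_of_pos_on
        (hci.intervalIntegrable _ _)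
        (fun y _ => by have := hLnn s hs y; linarith) hlt
  -- key: volume identity as lintegral
  have key : ∀ t : ℝ, 0 ≤ t → ∀ x : ℝ,
      volume {s | s ∈ Ioc 0 t ∧ Zh s < x} = ∫⁻ y in Iio x, ENNReal.ofReal (Lh t y) := by
    intro t ht x
    have hocct := hocc t ht ((Iio x).indicator (1 : ℝ → ℝ≥0∞))
      (measurable_one.indicator measurableSet_Iio)
    -- RHS of hocct
    have hR : ∫⁻ y, (Iio x).indicator (1 : ℝ → ℝ≥0∞) y * ENNReal.ofReal (Lh t y)
        = ∫⁻ y in Iio x, ENNReal.ofReal (Lh t y) := by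
      rw [← lintegral_indicator measurableSet_Iio]
      congr 1; funext y
      by_cases hy : y ∈ Iio x <;>
        simp [Set.indicator_apply, hy]
    -- LHS of hocct
    have hI : Ici (0:ℝ) ∩ Iic t = Icc 0 t := by
      ext s; simp [mem_Icc]
    have hZae : AEMeasurable Zh (volume.restrict (Icc 0 t)) :=
      (hZc.mono (Icc_subset_Ici_self)).aemeasurable measurableSet_Icc
    have hB : NullMeasurableSet (Zh ⁻¹' Iio x) (volume.restrict (Icc 0 t)) :=
      hZae.nullMeasurable measurableSet_Iio
    have hL : ∫⁻ s in Ici (0:ℝ) ∩ Iic t, (Iio x).indicator (1 : ℝ → ℝ≥0∞) (Zh s)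
        = volume {s | s ∈ Ioc 0 t ∧ Zh s < x} := by
      rw [hI]
      have heq : (fun s => (Iio x).indicator (1 : ℝ → ℝ≥0∞) (Zh s))
          = (Zh ⁻¹' Iio x).indicator (1 : ℝ → ℝ≥0∞) := by
        funext s
        by_cases hy : Zh s ∈ Iio x <;> simp [Set.indicator_apply, hy]
      rw [heq, lintegral_indicator_one₀ hB,
        Measure.restrict_apply₀' measurableSet_Icc.nullMeasurableSet]
      apply measure_congr
      rw [MeasureTheory.ae_eq_set]
      constructor
      · refine measure_mono_null ?_ (measure_singleton (0:ℝ))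
        intro s hsmem
        obtain ⟨⟨h1, h2a, h2b⟩, h3⟩ := hsmem
        simp only [mem_setOf_eq, not_and, mem_Ioc] at h3
        by_contra hs0
        exact (h3 ⟨lt_of_le_of_ne h2a (Ne.symm hs0), h2b⟩) h1
      · refine measure_mono_null ?_ (measure_empty (μ := volume) (α := ℝ))
        intro s hsmem
        obtain ⟨⟨h1, h2⟩, h3⟩ := hsmem
        exact absurd ⟨h2, ⟨le_of_lt h1.1, h1.2⟩⟩ h3
    rw [← hL, hocct, hR]
  -- Part 2
  have part2 : ∀ t : ℝ, 0 ≤ t → ∀ x : ℝ,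
      IntegrableOn (fun y => Lh t y) (Iic x) volume ∧
      volume {s | s ∈ Ioc 0 t ∧ Zh s < x} = ENNReal.ofReal (∫ y in Iic x, Lh t y) := by
    intro t ht x
    have hfin : ∫⁻ y in Iio x, ENNReal.ofReal (Lh t y) < ⊤ := by
      rw [← key t ht x]
      exact lt_of_le_of_lt (measure_mono (fun s hs => hs.1)) measure_Ioc_lt_top
    have hint : IntegrableOn (fun y => Lh t y) (Iio x) volume := by
      refine ⟨(hcont ht).aestronglyMeasurable.restrict, ?_⟩
      rw [hasFiniteIntegral_iff_norm]
      convert hfin using 2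
      funext y
      rw [Real.norm_eq_abs, abs_of_nonneg (hLnn t ht y)]
    have hint' : IntegrableOn (fun y => Lh t y) (Iic x) volume :=
      (integrableOn_Iic_iff_integrableOn_Iio).mpr hint
    refine ⟨hint', ?_⟩
    rw [key t ht x,
      ← ofReal_integral_eq_lintegral_ofReal hint
        (Filter.Eventually.of_forall (fun y => hLnn t ht y))]
    congr 1
    exact setIntegral_congr_set Iio_ae_eq_Iic
  refine ⟨part1, part2, ?_⟩
  -- Part 3
  intro t ht x
  have hsets : {s | s ∈ Ioc 0 t ∧ 0 < BBflow Zh Lh s x} = {s | s ∈ Ioc 0 t ∧ Zh s < x} := by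
    ext s
    simp only [mem_setOf_eq, and_congr_right_iff]
    intro hs
    exact part1 s (le_of_lt hs.1) x
  have hfin : volume {s | s ∈ Ioc 0 t ∧ 0 < BBflow Zh Lh s x} < ⊤ := by
    exact lt_of_le_of_lt (measure_mono (fun s hs => hs.1)) measure_Ioc_lt_top
  refine ⟨hfin, ?_⟩
  obtain ⟨hintx, hvolx⟩ := part2 t ht x
  obtain ⟨hintz, _⟩ := part2 t ht (Zh t)
  have hvol : (volume {s | s ∈ Ioc 0 t ∧ 0 < BBflow Zh Lh s x}).toReal
      = ∫ y in Iic x, Lh t y := by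
    rw [hsets, hvolx, ENNReal.toReal_ofReal
      (setIntegral_nonneg measurableSet_Iic (fun y _ => hLnn t ht y))]
  have hBB : BBflow Zh Lh t x
      = (x - Zh t) + ((∫ y in Iic x, Lh t y) - ∫ y in Iic (Zh t), Lh t y) := by
    rw [BBflow, intervalIntegral.integral_add (intervalIntegrable_const)
      ((hcont ht).intervalIntegrable _ _), intervalIntegral.integral_const,
      intervalIntegral.integral_Iic_sub_Iic hintz hintx]
    simp [smul_eq_mul]
  rw [hvol, hBB]; ring
end
end

section
/- (Occupation bound from the proof of Lemma 5.5.) Let Z : [0,∞) → ℝ be continuous and admit an occupation density L satisfying L(t,x) ≤ 1 for all t ≥ 0 and x ∈ ℝ. Then for all 0 ≤ s < t, all ε ∈ (0,1) and all M > 0, the Lebesgue measure of the set { u ∈ [s,t] : L(u, Z_u) ≥ 1 − ε and |Z_u| ≤ M } is at most 2Mε. -/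
open MeasureTheory Set
open scoped ENNReal

noncomputable section

/-- Telescoping bound: a sum of increments of a monotone sequence, restricted to
indices where the sequence is already at least `c`, is at most `1 - c`. -/
private lemma telescope_aux {n : ℕ} {a : ℕ → ℝ} (hmono : ∀ i < n, a i ≤ a (i + 1))
    (c : ℝ) (han : a n ≤ 1) (hc : c ≤ 1) :
    (∑ i ∈ Finset.range n, if c ≤ a i then a (i + 1) - a i else 0) ≤ 1 - c := by
  have key : ∀ i < n, (if c ≤ a i then a (i + 1) - a i else 0)
      ≤ max (a (i + 1) - c) 0 - max (a i - c) 0 := by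
    intro i hi
    have hmi := hmono i hi
    by_cases h : c ≤ a i
    · rw [if_pos h, max_eq_left (by linarith), max_eq_left (by linarith)]
      ring_nf
      linarith
    · rw [if_neg h]
      have h1 : max (a i - c) 0 ≤ max (a (i + 1) - c) 0 :=
        max_le_max (by linarith) le_rfl
      linarith
  calc (∑ i ∈ Finset.range n, if c ≤ a i then a (i + 1) - a i else 0)
      ≤ ∑ i ∈ Finset.range n, (max (a (i + 1) - c) 0 - max (a i - c) 0) :=
        Finset.sum_le_sum fun i hi => key i (Finset.mem_range.mp hi)
    _ = max (a n - c) 0 - max (a 0 - c) 0 :=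
        Finset.sum_range_sub (fun i => max (a i - c) 0) n
    _ ≤ 1 - c := by
        have h1 : max (a n - c) 0 ≤ 1 - c := max_le (by linarith) (by linarith)
        have h2 : (0:ℝ) ≤ max (a 0 - c) 0 := le_max_right _ _
        linarith

/-- occupation bound from the proof of Lemma 5.5.
If the occupation density of `Z` is bounded by `1`, then for all `0 ≤ s < t`,
`ε ∈ (0,1)` and `M > 0`, the Lebesgue measure of
`{u ∈ [s,t] : L(u, Z_u) ≥ 1 − ε and |Z_u| ≤ M}` is at most `2Mε`. -/
theorem occupation_bound
    (Z : ℝ → ℝ) (L : ℝ → ℝ → ℝ)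
    (hZL : HasOccDensity (Ici 0) Z L)
    (hL1 : ∀ t : ℝ, 0 ≤ t → ∀ x : ℝ, L t x ≤ 1) :
    ∀ s t ε M : ℝ, 0 ≤ s → s < t → ε ∈ Ioo (0:ℝ) 1 → 0 < M →
      volume {u | u ∈ Icc s t ∧ 1 - ε ≤ L u (Z u) ∧ |Z u| ≤ M}
        ≤ ENNReal.ofReal (2 * M * ε) := by
  obtain ⟨hZ, hLc, hLmono, hLnn, hOcc⟩ := hZL
  intro s t ε M hs hst hε hM
  obtain ⟨hε0, hε1⟩ := hε
  set A := {u | u ∈ Icc s t ∧ 1 - ε ≤ L u (Z u) ∧ |Z u| ≤ M} with hAdef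
  have ht0 : (0:ℝ) ≤ t := le_trans hs hst.le
  -- It suffices to prove the bound with an extra `δ` slack.
  suffices H : ∀ δ : ℝ, 0 < δ → volume A ≤ ENNReal.ofReal (2 * M * ε + 2 * M * δ) by
    refine ENNReal.le_of_forall_pos_le_add fun η hη _ => ?_
    have hδpos : (0:ℝ) < (η : ℝ) / (2 * M) := by positivity
    refine (H _ hδpos).trans ?_
    have h2M : (2 * M) * ((η:ℝ) / (2 * M)) = (η:ℝ) := by
      field_simp
    rw [show (2 * M * ε + 2 * M * ((η:ℝ) / (2 * M))) = 2 * M * ε + (η:ℝ) from by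
      rw [h2M]]
    rw [ENNReal.ofReal_add (by positivity) (by positivity)]
    gcongr
    simp [ENNReal.ofReal_coe_nnreal]
  intro δ hδ
  -- Uniform continuity of `L` on the compact set `K`.
  set K : Set (ℝ × ℝ) := Icc s t ×ˢ Icc (-M) M with hKdef
  have hKsub : K ⊆ Ici (0:ℝ) ×ˢ (univ : Set ℝ) := by
    rintro ⟨p, q⟩ ⟨hp, hq⟩
    exact ⟨le_trans hs hp.1, mem_univ _⟩
  have hKcomp : IsCompact K := isCompact_Icc.prod isCompact_Icc
  have hUC := hKcomp.uniformContinuousOn_of_continuous (hLc.mono hKsub)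
  rw [Metric.uniformContinuousOn_iff] at hUC
  obtain ⟨η, hη0, hUC⟩ := hUC δ hδ
  -- partition of `[s,t]` with mesh `< η`
  set n : ℕ := ⌈(t - s) / η⌉₊ + 1 with hndef
  have hn0 : 0 < n := Nat.succ_pos _
  set h : ℝ := (t - s) / n with hhdef
  have hts : (0:ℝ) < t - s := by linarith
  have hh0 : 0 < h := by positivity
  have hhη : h < η := by
    rw [hhdef, div_lt_iff₀ (by positivity)]
    have h1 : (t - s) / η ≤ (⌈(t - s) / η⌉₊ : ℝ) := Nat.le_ceil _
    have h2 : (⌈(t - s) / η⌉₊ : ℝ) < n := by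
      rw [hndef]; push_cast; linarith
    calc t - s = ((t - s) / η) * η := by field_simp
      _ < (n : ℝ) * η := by
          apply mul_lt_mul_of_pos_right _ hη0
          linarith
      _ = η * n := by ring
  set u : ℕ → ℝ := fun i => s + i * h with hudef
  have hu0 : u 0 = s := by simp [hudef]
  have hun : u n = t := by
    rw [hudef]; simp only
    rw [hhdef]
    field_simp
    ring
  have humono : ∀ i j : ℕ, i ≤ j → u i ≤ u j := by
    intro i j hij
    simp only [hudef]
    have : (i:ℝ) ≤ j := Nat.cast_le.mpr hij
    nlinarith
  have hus : ∀ i, s ≤ u i := fun i => by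
    have := humono 0 i (Nat.zero_le _); rwa [hu0] at this
  have hu_nonneg : ∀ i, (0:ℝ) ≤ u i := fun i => le_trans hs (hus i)
  have hut : ∀ i, i ≤ n → u i ≤ t := fun i hi => by
    have := humono i n hi; rwa [hun] at this
  have hstep : ∀ i, u (i + 1) - u i = h := by
    intro i; simp only [hudef]; push_cast; ring
  set c : ℝ := 1 - ε - δ with hcdef
  -- the space sets
  set B : ℕ → Set ℝ := fun i => {x | x ∈ Icc (-M) M ∧ c ≤ L (u i) x} with hBdef
  have hLicont : ∀ i, Continuous fun x => L (u i) x := by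
    intro i
    rw [← continuousOn_univ]
    have hmap : Continuous fun x : ℝ => ((u i, x) : ℝ × ℝ) :=
      (continuous_const.prodMk continuous_id)
    refine (hLc.comp hmap.continuousOn ?_)
    intro x _
    exact ⟨hu_nonneg i, mem_univ _⟩
  have hBclosed : ∀ i, IsClosed (B i) := by
    intro i
    have : B i = Icc (-M) M ∩ {x | c ≤ L (u i) x} := by
      ext x; simp [hBdef]
    rw [this]
    exact isClosed_Icc.inter (isClosed_le continuous_const (hLicont i))
  have hBmeas : ∀ i, MeasurableSet (B i) := fun i => (hBclosed i).measurableSet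
  have hBsub : ∀ i, B i ⊆ Icc (-M) M := fun i x hx => hx.1
  set g : ℕ → ℝ → ℝ≥0∞ := fun i x => (B i).indicator (fun _ => (1:ℝ≥0∞)) x with hgdef
  have hgmeas : ∀ i, Measurable (g i) :=
    fun i => measurable_const.indicator (hBmeas i)
  -- the time sets
  set C : ℕ → Set ℝ := fun i => Icc (u i) (u (i + 1)) ∩ Z ⁻¹' (B i) with hCdef
  have hCmeas : ∀ i, MeasurableSet (C i) := by
    intro i
    have hZi : ContinuousOn Z (Icc (u i) (u (i + 1))) :=
      hZ.mono (fun v hv => le_trans (hu_nonneg i) hv.1)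
    exact (hZi.preimage_isClosed_of_isClosed isClosed_Icc (hBclosed i)).measurableSet
  -- cover of A by the C i
  have hcover : A ⊆ ⋃ i ∈ Finset.range n, C i := by
    intro w hw
    obtain ⟨⟨hws, hwt⟩, hwL, hwM⟩ := hw
    have hw0 : (0:ℝ) ≤ w := le_trans hs hws
    set i : ℕ := min (n - 1) ⌊(w - s) / h⌋₊ with hidef
    have hin : i < n := lt_of_le_of_lt (min_le_left _ _) (Nat.sub_lt hn0 one_pos)
    have hfl0 : (0:ℝ) ≤ (w - s) / h := div_nonneg (by linarith) hh0.le
    have hui_le : u i ≤ w := by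
      rcases le_or_gt (⌊(w - s) / h⌋₊) (n - 1) with hcase | hcase
      · have hie : i = ⌊(w - s) / h⌋₊ := min_eq_right hcase
        have h1 : (i : ℝ) ≤ (w - s) / h := by
          rw [hie]; exact Nat.floor_le hfl0
        have := (le_div_iff₀ hh0).mp h1
        simp only [hudef]; linarith
      · have hie : i = n - 1 := min_eq_left hcase.le
        have h1 : ((n - 1 : ℕ) : ℝ) ≤ (⌊(w - s) / h⌋₊ : ℝ) :=
          Nat.cast_le.mpr hcase.le
        have h2 : (⌊(w - s) / h⌋₊ : ℝ) ≤ (w - s) / h := Nat.floor_le hfl0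
        have h3 : ((i : ℝ)) ≤ (w - s) / h := by rw [hie]; linarith
        have := (le_div_iff₀ hh0).mp h3
        simp only [hudef]; linarith
    have hw_le : w ≤ u (i + 1) := by
      rcases le_or_gt (⌊(w - s) / h⌋₊) (n - 1) with hcase | hcase
      · have hie : i = ⌊(w - s) / h⌋₊ := min_eq_right hcase
        have h1 : (w - s) / h < (⌊(w - s) / h⌋₊ : ℝ) + 1 := Nat.lt_floor_add_one _
        have h2 : (w - s) / h < (i : ℝ) + 1 := by rw [hie]; exact h1
        have := (div_lt_iff₀ hh0).mp h2
        simp only [hudef]; push_cast; nlinarith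
      · have hie : i = n - 1 := min_eq_left hcase.le
        have hi1 : i + 1 = n := by omega
        rw [hi1, hun]; exact hwt
    have hZwB : Z w ∈ B i := by
      refine ⟨abs_le.mp hwM, ?_⟩
      -- L (u i) (Z w) is within δ of L w (Z w)
      have hwK : (w, Z w) ∈ K := ⟨⟨hws, hwt⟩, abs_le.mp hwM⟩
      have huiK : (u i, Z w) ∈ K :=
        ⟨⟨hus i, le_trans hui_le hwt⟩, abs_le.mp hwM⟩
      have hdist : dist ((u i, Z w) : ℝ × ℝ) (w, Z w) < η := by
        rw [Prod.dist_eq]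
        simp only [dist_self]
        rw [max_eq_left dist_nonneg]
        rw [Real.dist_eq, abs_of_nonpos (by linarith)]
        have : w - u i ≤ h := by
          have := hstep i; linarith
        linarith
      have := hUC _ huiK _ hwK hdist
      rw [Real.dist_eq] at this
      have habs := abs_lt.mp this
      simp only [hcdef]
      linarith [habs.1, habs.2]
    exact mem_biUnion (Finset.mem_range.mpr hin) ⟨⟨hui_le, hw_le⟩, hZwB⟩
  -- occupation functionals
  set F : ℕ → ℕ → ℝ≥0∞ := fun i j => ∫⁻ x, g i x * ENNReal.ofReal (L (u j) x)
    with hFdef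
  have hFocc : ∀ i j, ∫⁻ v in Ici 0 ∩ Iic (u j), g i (Z v) = F i j := by
    intro i j
    exact hOcc (u j) (hu_nonneg j) (g i) (hgmeas i)
  have hFle : ∀ i j, F i j ≤ ENNReal.ofReal (2 * M) := by
    intro i j
    have hb : ∀ x, g i x * ENNReal.ofReal (L (u j) x)
        ≤ (Icc (-M) M).indicator (fun _ => (1:ℝ≥0∞)) x := by
      intro x
      by_cases hx : x ∈ B i
      · rw [hgdef]
        simp only [indicator_of_mem hx, one_mul,
          indicator_of_mem (hBsub i hx)]
        exact ENNReal.ofReal_le_one.mpr (hL1 _ (hu_nonneg j) x)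
      · simp [hgdef, indicator_of_notMem hx]
    calc F i j ≤ ∫⁻ x, (Icc (-M) M).indicator (fun _ => (1:ℝ≥0∞)) x :=
          lintegral_mono hb
      _ = volume (Icc (-M) M) := lintegral_indicator_one measurableSet_Icc
      _ = ENNReal.ofReal (M - -M) := Real.volume_Icc
      _ = ENNReal.ofReal (2 * M) := by norm_num [two_mul]
  have hFfin : ∀ i j, F i j ≠ ∞ :=
    fun i j => ne_top_of_le_ne_top ENNReal.ofReal_ne_top (hFle i j)
  -- per-piece occupation bound
  have hCbound : ∀ i, i < n → volume (C i) + F i i ≤ F i (i + 1) := by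
    intro i hi
    have hsplit : Ici (0:ℝ) ∩ Iic (u (i + 1))
        = (Ici 0 ∩ Iic (u i)) ∪ Ioc (u i) (u (i + 1)) := by
      ext v
      simp only [mem_inter_iff, mem_Ici, mem_Iic, mem_union, mem_Ioc]
      constructor
      · rintro ⟨h0, h1⟩
        rcases le_or_gt v (u i) with hv | hv
        · exact Or.inl ⟨h0, hv⟩
        · exact Or.inr ⟨hv, h1⟩
      · rintro (⟨h0, h1⟩ | ⟨h1, h2⟩)
        · exact ⟨h0, le_trans h1 (humono i (i + 1) (Nat.le_succ _))⟩
        · exact ⟨le_trans (hu_nonneg i) h1.le, h2⟩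
    have hdisj : Disjoint (Ici (0:ℝ) ∩ Iic (u i)) (Ioc (u i) (u (i + 1))) := by
      refine Set.disjoint_left.mpr ?_
      rintro v ⟨_, hv1⟩ ⟨hv2, _⟩
      exact absurd hv1 (not_le.mpr hv2)
    have hCvol : volume (C i) ≤ ∫⁻ v in Ioc (u i) (u (i + 1)), g i (Z v) := by
      have h1 : volume (C i) ≤ volume (C i ∩ Ioc (u i) (u (i + 1))) + volume {u i} := by
        refine le_trans (measure_mono ?_) (measure_union_le _ _)
        intro v hv
        rcases eq_or_lt_of_le hv.1.1 with hv1 | hv1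
        · exact Or.inr (by simp [← hv1])
        · exact Or.inl ⟨hv, hv1, hv.1.2⟩
      rw [Real.volume_singleton, add_zero] at h1
      refine h1.trans ?_
      have h2 : volume (C i ∩ Ioc (u i) (u (i + 1)))
          = ∫⁻ v in Ioc (u i) (u (i + 1)), (C i).indicator (1 : ℝ → ℝ≥0∞) v := by
        rw [lintegral_indicator_one (hCmeas i), Measure.restrict_apply (hCmeas i)]
      rw [h2]
      refine lintegral_mono fun v => ?_
      by_cases hv : v ∈ C i
      · have hZv : Z v ∈ B i := hv.2
        simp [indicator_of_mem hv, hgdef, indicator_of_mem hZv]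
      · simp [indicator_of_notMem hv]
    calc volume (C i) + F i i
        ≤ (∫⁻ v in Ioc (u i) (u (i + 1)), g i (Z v))
          + ∫⁻ v in Ici 0 ∩ Iic (u i), g i (Z v) := by
          rw [hFocc i i]; exact add_le_add hCvol le_rfl
      _ = ∫⁻ v in Ici 0 ∩ Iic (u (i + 1)), g i (Z v) := by
          rw [hsplit, lintegral_union measurableSet_Ioc hdisj, add_comm]
      _ = F i (i + 1) := hFocc i (i + 1)
  -- difference of occupation functionals as an integral
  set D : ℕ → ℝ → ℝ≥0∞ := fun i x =>
    g i x * ENNReal.ofReal (L (u (i + 1)) x) - g i x * ENNReal.ofReal (L (u i) x)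
    with hDdef
  have hDmeas : ∀ i, Measurable (D i) := by
    intro i
    exact ((hgmeas i).mul ((ENNReal.measurable_ofReal).comp (hLicont (i+1)).measurable)).sub
      ((hgmeas i).mul ((ENNReal.measurable_ofReal).comp (hLicont i).measurable))
  have hFdiff : ∀ i, F i (i + 1) - F i i = ∫⁻ x, D i x := by
    intro i
    have hmeas : Measurable fun x => g i x * ENNReal.ofReal (L (u i) x) :=
      (hgmeas i).mul ((ENNReal.measurable_ofReal).comp (hLicont i).measurable)
    have hle : (fun x => g i x * ENNReal.ofReal (L (u i) x))
        ≤ᵐ[volume] fun x => g i x * ENNReal.ofReal (L (u (i + 1)) x) := by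
      refine Filter.Eventually.of_forall fun x => ?_
      exact mul_le_mul_right (ENNReal.ofReal_le_ofReal
        (hLmono x (hu_nonneg i) (hu_nonneg (i+1)) (humono i (i+1) (Nat.le_succ _)))) _
    rw [← lintegral_sub hmeas (hFfin i i) hle]
  -- pointwise bound on the sum of the D i
  have hptwise : ∀ x, (∑ i ∈ Finset.range n, D i x)
      ≤ (Icc (-M) M).indicator (fun _ => ENNReal.ofReal (ε + δ)) x := by
    intro x
    by_cases hx : x ∈ Icc (-M) M
    · rw [indicator_of_mem hx]
      set a : ℕ → ℝ := fun j => L (u j) x with hadef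
      have hamono : ∀ i < n, a i ≤ a (i + 1) := fun i _ =>
        hLmono x (hu_nonneg i) (hu_nonneg (i+1)) (humono i (i+1) (Nat.le_succ _))
      have hDeq : ∀ i, D i x = ENNReal.ofReal (if c ≤ a i then a (i + 1) - a i else 0) := by
        intro i
        by_cases hxB : x ∈ B i
        · have hci : c ≤ a i := hxB.2
          rw [hDdef]
          simp only [hgdef, indicator_of_mem hxB, one_mul, if_pos hci]
          rw [ENNReal.ofReal_sub _ (hLnn (u i) (hu_nonneg i) x)]
        · have hci : ¬ c ≤ a i := fun hcon => hxB ⟨hx, hcon⟩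
          rw [hDdef]
          simp [hgdef, indicator_of_notMem hxB, if_neg hci]
      calc (∑ i ∈ Finset.range n, D i x)
          = ∑ i ∈ Finset.range n,
              ENNReal.ofReal (if c ≤ a i then a (i + 1) - a i else 0) := by
            exact Finset.sum_congr rfl fun i _ => hDeq i
        _ = ENNReal.ofReal (∑ i ∈ Finset.range n,
              if c ≤ a i then a (i + 1) - a i else 0) := by
            rw [ENNReal.ofReal_sum_of_nonneg]
            intro i hi
            by_cases hci : c ≤ a i
            · rw [if_pos hci]
              have := hamono i (Finset.mem_range.mp hi); linarith
            · rw [if_neg hci]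
        _ ≤ ENNReal.ofReal (ε + δ) := by
            apply ENNReal.ofReal_le_ofReal
            have han : a n ≤ 1 := by
              rw [hadef]; simp only; rw [hun]; exact hL1 t ht0 x
            have := telescope_aux hamono c han (by rw [hcdef]; linarith)
            rw [hcdef] at this; linarith
    · rw [indicator_of_notMem hx]
      have : ∀ i, D i x = 0 := by
        intro i
        have hxB : x ∉ B i := fun hcon => hx (hBsub i hcon)
        simp [hDdef, hgdef, indicator_of_notMem hxB]
      simp [this]
  -- put everything together
  calc volume A ≤ volume (⋃ i ∈ Finset.range n, C i) := measure_mono hcover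
    _ ≤ ∑ i ∈ Finset.range n, volume (C i) := measure_biUnion_finset_le _ _
    _ ≤ ∑ i ∈ Finset.range n, (F i (i + 1) - F i i) := by
        refine Finset.sum_le_sum fun i hi => ?_
        exact (ENNReal.cancel_of_ne (hFfin i i)).le_tsub_of_add_le_right
          (hCbound i (Finset.mem_range.mp hi))
    _ = ∑ i ∈ Finset.range n, ∫⁻ x, D i x :=
        Finset.sum_congr rfl fun i _ => hFdiff i
    _ = ∫⁻ x, ∑ i ∈ Finset.range n, D i x :=
        (lintegral_finset_sum _ fun i _ => hDmeas i).symm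
    _ ≤ ∫⁻ x, (Icc (-M) M).indicator (fun _ => ENNReal.ofReal (ε + δ)) x :=
        lintegral_mono hptwise
    _ = ENNReal.ofReal (ε + δ) * volume (Icc (-M) M) := by
        rw [lintegral_indicator measurableSet_Icc, setLIntegral_const]
    _ = ENNReal.ofReal (2 * M * ε + 2 * M * δ) := by
        rw [Real.volume_Icc, ← ENNReal.ofReal_mul (by linarith)]
        congr 1
        ring
end
end

section
/- (Regularity of the killed flow, deterministic content of Proposition A.2.) Let 𝒮 = (S_{r,x}(a))_{r∈ℝ, x≥r, a≥0} be a collection of nonnegative numbers such that x ↦ S_{r,x}(a) is continuous on [r,∞) for each r, a, and such that: (i) S_{r,r}(a) = a; (ii) for all r ≤ x, a ↦ S_{r,x}(a) is nondecreasing and locally constant to the right (for every a ≥ 0 there is ε > 0 with S_{r,x}(b) = S_{r,x}(a) for all b ∈ [a, a+ε)); (iii) for all r' ≤ r ≤ x and a', a ≥ 0, S_{r',r}(a') > a implies S_{r',x}(a') ≥ S_{r,x}(a), and S_{r',r}(a') < a implies S_{r',x}(a') ≤ S_{r,x}(a). Define the killed flow Π(𝒮) by Π(𝒮)_{r,x}(a)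 := S_{r,x}(a) if S_{r,s}(a) > 0 for all s ∈ (r,x], and Π(𝒮)_{r,x}(a) := 0 otherwise (flow lines absorbed at their first zero). Then Π(𝒮) again satisfies (i), the maps a ↦ Π(𝒮)_{r,x}(a) are nondecreasing and right-continuous, and Π(𝒮) satisfies the order-preservation property (iii); moreover, for a flow line of Π(𝒮) which hits 0 at some s ∈ (r,x], Π(𝒮)_{r,y}(a) = 0 for all y ≥ s. -/
open Set
open scoped Classical

noncomputable section

/-- The killed version `Π(𝒮)` of a flow `𝒮`: the flow line from `(r,a)` follows
`𝒮_{r,·}(a)` as long as it stays positive on `(r,x]`, and is `0` otherwise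
(i.e. it is absorbed at its first zero). -/
def killedFlow (S : ℝ → ℝ → ℝ → ℝ) (r x a : ℝ) : ℝ :=
  if ∀ s : ℝ, r < s → s ≤ x → 0 < S r s a then S r x a else 0

/-- regularity of the killed flow, deterministic content of
Proposition A.2. If `𝒮` satisfies the regularity conditions (i)–(iii) (together with
local right-constancy in the local-time variable), then its killed version `Π(𝒮)`
again satisfies (i), is nondecreasing and right-continuous in the local-time variable,
satisfies the order-preservation property (iii), and its flow lines are absorbed
at `0`. -/
theorem killed_flow_regularity
    (S : ℝ → ℝ → ℝ → ℝ)  -- S r x a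
    (hnonneg : ∀ r x a, r ≤ x → 0 ≤ a → 0 ≤ S r x a)
    (hcont : ∀ r a, 0 ≤ a → ContinuousOn (fun x => S r x a) (Ici r))
    -- (i)
    (hid : ∀ r a, 0 ≤ a → S r r a = a)
    -- (ii) nondecreasing and locally constant to the right in `a`
    (hmono : ∀ r x, r ≤ x → MonotoneOn (fun a => S r x a) (Ici 0))
    (hlocconst : ∀ r x, r ≤ x → ∀ a, 0 ≤ a →
      ∃ ε > 0, ∀ b, a ≤ b → b < a + ε → S r x b = S r x a)
    -- (iii) order preservation
    (horder : ∀ r' r x, r' ≤ r → r ≤ x → ∀ a' a, 0 ≤ a' → 0 ≤ a →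
      (a < S r' r a' → S r x a ≤ S r' x a') ∧ (S r' r a' < a → S r' x a' ≤ S r x a)) :
    -- (i) for the killed flow
    (∀ r a, 0 ≤ a → killedFlow S r r a = a) ∧
    -- nondecreasing and right-continuous in `a`
    (∀ r x, r ≤ x → MonotoneOn (fun a => killedFlow S r x a) (Ici 0)) ∧
    (∀ r x, r ≤ x → ∀ a, 0 ≤ a →
      ContinuousWithinAt (fun b => killedFlow S r x b) (Ici a) a) ∧
    -- (iii) for the killed flow
    (∀ r' r x, r' ≤ r → r ≤ x → ∀ a' a, 0 ≤ a' → 0 ≤ a →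
      (a < killedFlow S r' r a' → killedFlow S r x a ≤ killedFlow S r' x a') ∧
      (killedFlow S r' r a' < a → killedFlow S r' x a' ≤ killedFlow S r x a)) ∧
    -- absorption at 0
    (∀ r s y a, 0 ≤ a → r < s → s ≤ y → killedFlow S r s a = 0 →
      killedFlow S r y a = 0) := by
  -- nonnegativity of the killed flow
  have hkn : ∀ r x a, r ≤ x → 0 ≤ a → 0 ≤ killedFlow S r x a := by
    intro r x a hrx ha
    unfold killedFlow
    split
    · exact hnonneg r x a hrx ha
    · exact le_refl 0
  refine ⟨?_, ?_, ?_, ?_, ?_⟩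
  · -- (i)
    intro r a ha
    rw [killedFlow, if_pos]
    · exact hid r a ha
    · intro s hs hsr
      exact absurd (hs.trans_le hsr) (lt_irrefl r)
  · -- monotone
    intro r x hrx a ha b hb hab
    simp only [mem_Ici] at ha hb
    by_cases hA : ∀ s : ℝ, r < s → s ≤ x → 0 < S r s a
    · have hB : ∀ s : ℝ, r < s → s ≤ x → 0 < S r s b := fun s hs hsx =>
        (hA s hs hsx).trans_le (hmono r s hs.le (mem_Ici.2 ha) (mem_Ici.2 hb) hab)
      simp only [killedFlow, if_pos hA, if_pos hB]
      exact hmono r x hrx (mem_Ici.2 ha) (mem_Ici.2 hb) hab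
    · calc killedFlow S r x a = 0 := by simp only [killedFlow, if_neg hA]
        _ ≤ killedFlow S r x b := hkn r x b hrx hb
  · -- right continuity
    intro r x hrx a ha
    obtain ⟨ε, hε, key⟩ :
        ∃ ε > 0, ∀ b ∈ Ico a (a + ε), killedFlow S r x b = killedFlow S r x a := by
      by_cases hA : ∀ s : ℝ, r < s → s ≤ x → 0 < S r s a
      · obtain ⟨ε, hε, hconst⟩ := hlocconst r x hrx a ha
        refine ⟨ε, hε, ?_⟩
        rintro b ⟨hab, hbε⟩
        have hb0 : 0 ≤ b := ha.trans hab
        have hB : ∀ s : ℝ, r < s → s ≤ x → 0 < S r s b := fun s hs hsx =>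
          (hA s hs hsx).trans_le (hmono r s hs.le (mem_Ici.2 ha) (mem_Ici.2 hb0) hab)
        simp only [killedFlow, if_pos hA, if_pos hB]
        exact hconst b hab hbε
      · push_neg at hA
        obtain ⟨s, hrs, hsx, hSs⟩ := hA
        obtain ⟨ε, hε, hconst⟩ := hlocconst r s hrs.le a ha
        refine ⟨ε, hε, ?_⟩
        rintro b ⟨hab, hbε⟩
        have hB : ¬ ∀ t : ℝ, r < t → t ≤ x → 0 < S r t b := by
          intro h
          have := h s hrs hsx
          rw [hconst b hab hbε] at this
          exact absurd this (not_lt.2 hSs)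
        have hA' : ¬ ∀ t : ℝ, r < t → t ≤ x → 0 < S r t a := by
          intro h
          exact absurd (h s hrs hsx) (not_lt.2 hSs)
        simp only [killedFlow, if_neg hB, if_neg hA']
    have hmem : Ico a (a + ε) ∈ nhdsWithin a (Ici a) :=
      Ico_mem_nhdsGE (lt_add_of_pos_right a hε)
    have hev : (fun b => killedFlow S r x b) =ᶠ[nhdsWithin a (Ici a)]
        (fun _ => killedFlow S r x a) :=
      Filter.eventuallyEq_of_mem hmem key
    exact (continuousWithinAt_const (b := killedFlow S r x a)).congr_of_eventuallyEq hev rfl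
  · -- (iii)
    intro r' r x hr'r hrx a' a ha' ha
    have hr'x : r' ≤ x := hr'r.trans hrx
    constructor
    · intro h
      -- killed flow at (r', r, a') is positive, so no killing on (r', r]
      have hA' : ∀ s : ℝ, r' < s → s ≤ r → 0 < S r' s a' := by
        by_contra hc
        rw [killedFlow, if_neg hc] at h
        exact absurd h (not_lt.2 ha)
      have hval : killedFlow S r' r a' = S r' r a' := if_pos hA'
      rw [hval] at h
      by_cases hB : ∀ s : ℝ, r < s → s ≤ x → 0 < S r s a
      · -- no killing for (r, x, a); deduce no killing for (r', x, a')
        have hC : ∀ s : ℝ, r' < s → s ≤ x → 0 < S r' s a' := by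
          intro s hs hsx
          by_cases hsr : s ≤ r
          · exact hA' s hs hsr
          · push_neg at hsr
            have h1 : S r s a ≤ S r' s a' :=
              (horder r' r s hr'r hsr.le a' a ha' ha).1 h
            exact (hB s hsr hsx).trans_le h1
        rw [killedFlow, if_pos hB, killedFlow, if_pos hC]
        exact (horder r' r x hr'r hrx a' a ha' ha).1 h
      · rw [killedFlow, if_neg hB]
        exact hkn r' x a' hr'x ha'
    · intro h
      by_cases hC : ∀ s : ℝ, r' < s → s ≤ x → 0 < S r' s a'
      · have hA' : ∀ s : ℝ, r' < s → s ≤ r → 0 < S r' s a' := fun s hs hsr =>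
          hC s hs (hsr.trans hrx)
        rw [killedFlow, if_pos hA'] at h
        have hB : ∀ s : ℝ, r < s → s ≤ x → 0 < S r s a := by
          intro s hs hsx
          have h1 : S r' s a' ≤ S r s a :=
            (horder r' r s hr'r hs.le a' a ha' ha).2 h
          exact (hC s (hr'r.trans_lt hs) hsx).trans_le h1
        rw [killedFlow, if_pos hC, killedFlow, if_pos hB]
        exact (horder r' r x hr'r hrx a' a ha' ha).2 h
      · calc killedFlow S r' x a' = 0 := by rw [killedFlow, if_neg hC]
          _ ≤ killedFlow S r x a := hkn r x a hrx ha
  · -- absorption at 0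
    intro r s y a ha hrs hsy h0
    by_cases hA : ∀ t : ℝ, r < t → t ≤ s → 0 < S r t a
    · rw [killedFlow, if_pos hA] at h0
      rw [killedFlow, if_neg]
      intro h
      have := h s hrs hsy
      rw [h0] at this
      exact lt_irrefl 0 this
    · push_neg at hA
      obtain ⟨t, hrt, hts, hSt⟩ := hA
      rw [killedFlow, if_neg]
      intro h
      exact absurd (h t hrt (hts.trans hsy)) (not_lt.2 hSt)
end
end
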